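/- arXiv:1309.1790 — 5 statements merged into one kernel-verified Lean document; each statement's English description precedes it below -/
import Mathlib

section
/- Suppose that the m×m matrix C with entries c_ii = 1 − A_i²τ_i/α_i and c_ij = −(A_i L_ij τ_i + L_ij)/α_i for i ≠ j is a nonsingular M-matrix. Then the delay system with off-diagonal nonlinearities ẋ_i(t) = −a_i(t)x_i(h_i(t)) + Σ_{j≠i} F_{ij}(t, x_j(g_{ij}(t))) is globally exponentially stable. -/
open MeasureTheory

lemma fubini_aux {u v : ℝ} (huv : u ≤ v) {f g : ℝ → ℝ}
    (hf : IntervalIntegrable f volume u v) (hg : Continuous g) :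
    ∫ s in u..v, g s * (∫ ξ in u..s, f ξ) = ∫ ξ in u..v, f ξ * (∫ s in ξ..v, g s) := by
  set μ := volume.restrict (Set.Ioc u v) with hμ
  have hfI : Integrable f μ := hf.1
  have hgI : Integrable g μ := hg.integrableOn_Ioc
  set Φ : ℝ → ℝ → ℝ := fun s ξ => if ξ ≤ s then g s * f ξ else 0 with hΦ
  have hΦint : Integrable (Function.uncurry Φ) (μ.prod μ) := by
    have he : Function.uncurry Φ =
        Set.indicator {z : ℝ × ℝ | z.2 ≤ z.1} (fun z => g z.1 * f z.2) := by
      funext z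
      rcases z with ⟨s, ξ⟩
      by_cases hc : ξ ≤ s <;> simp [Function.uncurry, hΦ, Set.indicator_apply, hc]
    rw [he]
    exact (hgI.mul_prod hfI).indicator (measurableSet_le measurable_snd measurable_fst)
  have swap := MeasureTheory.integral_integral_swap hΦint
  have hL : ∫ s, (∫ ξ, Φ s ξ ∂μ) ∂μ = ∫ s in u..v, g s * (∫ ξ in u..s, f ξ) := by
    rw [intervalIntegral.integral_of_le huv]
    refine setIntegral_congr_fun measurableSet_Ioc (fun s hs => ?_)
    have h1 : (fun ξ => Φ s ξ) = Set.indicator (Set.Iic s) (fun ξ => g s * f ξ) := by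
      funext ξ
      by_cases hc : ξ ≤ s <;> simp [hΦ, Set.indicator_apply, hc]
    rw [h1, integral_indicator measurableSet_Iic, hμ,
      Measure.restrict_restrict measurableSet_Iic]
    have h2 : Set.Iic s ∩ Set.Ioc u v = Set.Ioc u s := by
      rw [Set.inter_comm, Set.Ioc_inter_Iic, min_eq_right hs.2]
    rw [h2, integral_const_mul, intervalIntegral.integral_of_le hs.1.le]
  have hR : ∫ ξ, (∫ s, Φ s ξ ∂μ) ∂μ = ∫ ξ in u..v, f ξ * (∫ s in ξ..v, g s) := by
    rw [intervalIntegral.integral_of_le huv]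
    refine setIntegral_congr_fun measurableSet_Ioc (fun ξ hξ => ?_)
    have h1 : (fun s => Φ s ξ) = Set.indicator (Set.Ici ξ) (fun s => g s * f ξ) := by
      funext s
      by_cases hc : ξ ≤ s <;> simp [hΦ, Set.indicator_apply, hc]
    rw [h1, integral_indicator measurableSet_Ici, hμ,
      Measure.restrict_restrict measurableSet_Ici]
    have h2 : Set.Ici ξ ∩ Set.Ioc u v = Set.Icc ξ v := by
      ext s
      simp only [Set.mem_inter_iff, Set.mem_Ici, Set.mem_Ioc, Set.mem_Icc]
      constructor
      · rintro ⟨h1', h2', h3'⟩; exact ⟨h1', h3'⟩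
      · rintro ⟨h1', h2'⟩; exact ⟨h1', lt_of_lt_of_le hξ.1 h1', h2'⟩
    rw [h2, integral_mul_const, MeasureTheory.integral_Icc_eq_integral_Ioc,
      intervalIntegral.integral_of_le hξ.2, mul_comm]
  rw [← hL, ← hR] at *
  exact swap

lemma prodrule_aux {u v l t₀ : ℝ} (huv : u ≤ v) {x f : ℝ → ℝ}
    (hxc : Continuous x)
    (hf : IntervalIntegrable f volume u v)
    (hx : ∀ w ∈ Set.Icc u v, x w = x u + ∫ ξ in u..w, f ξ) :
    Real.exp (l * (v - t₀)) * x v = Real.exp (l * (u - t₀)) * x u +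
      ∫ s in u..v, (l * Real.exp (l * (s - t₀)) * x s + Real.exp (l * (s - t₀)) * f s) := by
  set E : ℝ → ℝ := fun s => Real.exp (l * (s - t₀)) with hEdef
  have hE : ∀ s : ℝ, HasDerivAt E (l * E s) s := by
    intro s
    have h1 : HasDerivAt (fun s : ℝ => l * (s - t₀)) l s := by
      simpa using ((hasDerivAt_id s).sub_const t₀).const_mul l
    simpa [mul_comm] using h1.exp
  have hEcont : Continuous E :=
    (Real.continuous_exp.comp (continuous_const.mul (continuous_id.sub continuous_const)))
  have hFTC : ∀ w₁ w₂ : ℝ, ∫ s in w₁..w₂, l * E s = E w₂ - E w₁ := by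
    intro w₁ w₂
    exact intervalIntegral.integral_eq_sub_of_hasDerivAt (fun s _ => hE s)
      ((continuous_const.mul hEcont).intervalIntegrable _ _)
  have hEf : IntervalIntegrable (fun s => E s * f s) volume u v :=
    hf.continuousOn_mul hEcont.continuousOn
  have hlEx : IntervalIntegrable (fun s => l * E s * x s) volume u v :=
    ((continuous_const.mul hEcont).mul hxc).intervalIntegrable _ _
  have hsplit : (∫ s in u..v, (l * E s * x s + E s * f s)) =
      (∫ s in u..v, l * E s * x s) + ∫ s in u..v, E s * f s :=
    intervalIntegral.integral_add hlEx hEf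
  -- decompose ∫ l E x
  have halg : (fun s => l * E s * x s) =
      fun s => x u * (l * E s) + (l * E s) * (x s - x u) := by
    funext s; ring
  have hint2 : IntervalIntegrable (fun s => (l * E s) * (x s - x u)) volume u v :=
    ((continuous_const.mul hEcont).mul (hxc.sub continuous_const)).intervalIntegrable _ _
  have hint1 : IntervalIntegrable (fun s => x u * (l * E s)) volume u v :=
    (continuous_const.mul (continuous_const.mul hEcont)).intervalIntegrable _ _
  have hdec : (∫ s in u..v, l * E s * x s) =
      (∫ s in u..v, x u * (l * E s)) + ∫ s in u..v, (l * E s) * (x s - x u) := by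
    rw [halg]; exact intervalIntegral.integral_add hint1 hint2
  have hconst : (∫ s in u..v, x u * (l * E s)) = x u * (E v - E u) := by
    rw [intervalIntegral.integral_const_mul, hFTC]
  have hcongr : (∫ s in u..v, (l * E s) * (x s - x u)) =
      ∫ s in u..v, (l * E s) * (∫ ξ in u..s, f ξ) := by
    apply intervalIntegral.integral_congr
    intro s hs
    rw [Set.uIcc_of_le huv] at hs
    show l * E s * (x s - x u) = l * E s * ∫ ξ in u..s, f ξ
    rw [hx s hs]; ring
  have hfub : (∫ s in u..v, (l * E s) * (∫ ξ in u..s, f ξ)) =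
      ∫ ξ in u..v, f ξ * (∫ s in ξ..v, l * E s) :=
    fubini_aux huv hf (continuous_const.mul hEcont)
  have hinner : (∫ ξ in u..v, f ξ * (∫ s in ξ..v, l * E s)) =
      ∫ ξ in u..v, (f ξ * E v - E ξ * f ξ) := by
    apply intervalIntegral.integral_congr
    intro ξ _
    show f ξ * (∫ s in ξ..v, l * E s) = f ξ * E v - E ξ * f ξ
    rw [hFTC]; ring
  have hsub : (∫ ξ in u..v, (f ξ * E v - E ξ * f ξ)) =
      (∫ ξ in u..v, f ξ) * E v - ∫ ξ in u..v, E ξ * f ξ := by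
    rw [intervalIntegral.integral_sub (hf.mul_const _) hEf,
      intervalIntegral.integral_mul_const]
  have hxv := hx v ⟨huv, le_refl v⟩
  rw [hsplit, hdec, hconst, hcongr, hfub, hinner, hsub, hxv]
  ring

lemma thresh_aux {u₁ t c₁ : ℝ} {z G : ℝ → ℝ}
    (hzc : Continuous z) (hu : u₁ ≤ t)
    (hint : ∀ a b, u₁ ≤ a → a ≤ b → b ≤ t → IntervalIntegrable G volume a b)
    (heq : ∀ v ∈ Set.Icc u₁ t, z v = z u₁ + ∫ s in u₁..v, G s)
    (hkey : ∀ a b, u₁ ≤ a → a ≤ b → b ≤ t →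
      (∀ s ∈ Set.Ioc a b, c₁ ≤ z s) → (∫ s in a..b, G s) ≤ 0) :
    z t ≤ max (z u₁) c₁ := by
  by_cases hzt : z t ≤ c₁
  · exact le_max_of_le_right hzt
  push_neg at hzt
  set S : Set ℝ := Set.Icc u₁ t ∩ {s | z s ≤ c₁} with hSdef
  have hSc : IsClosed S := isClosed_Icc.inter (isClosed_le hzc continuous_const)
  by_cases hS : S.Nonempty
  · have hSbdd : BddAbove S := ⟨t, fun s hs => hs.1.2⟩
    set w := sSup S with hw
    have hwS : w ∈ S := hSc.csSup_mem hS hSbdd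
    have hwt : w < t := by
      rcases lt_or_eq_of_le hwS.1.2 with h' | h'
      · exact h'
      · exact absurd (h' ▸ hwS.2) (not_le.2 hzt)
    have habove : ∀ s ∈ Set.Ioc w t, c₁ ≤ z s := by
      intro s hs
      by_contra hcon
      push_neg at hcon
      have hsS : s ∈ S := ⟨⟨le_trans hwS.1.1 hs.1.le, hs.2⟩, hcon.le⟩
      exact absurd (le_csSup hSbdd hsS) (not_le.2 hs.1)
    have hadd : (∫ s in u₁..w, G s) + ∫ s in w..t, G s = ∫ s in u₁..t, G s :=
      intervalIntegral.integral_add_adjacent_intervals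
        (hint u₁ w le_rfl hwS.1.1 hwS.1.2) (hint w t hwS.1.1 hwt.le le_rfl)
    have h1 : z t = z w + ∫ s in w..t, G s := by
      rw [heq t ⟨hu, le_rfl⟩, heq w hwS.1, ← hadd]; ring
    have h2 : (∫ s in w..t, G s) ≤ 0 := hkey w t hwS.1.1 hwt.le le_rfl habove
    have : z t ≤ c₁ := by
      rw [h1]
      calc z w + ∫ s in w..t, G s ≤ z w + 0 := by linarith
      _ ≤ c₁ := by simpa using hwS.2
    exact absurd this (not_le.2 hzt)
  · have habove : ∀ s ∈ Set.Ioc u₁ t, c₁ ≤ z s := by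
      intro s hs
      by_contra hcon
      push_neg at hcon
      exact hS ⟨s, ⟨⟨hs.1.le, hs.2⟩, hcon.le⟩⟩
    have h2 : (∫ s in u₁..t, G s) ≤ 0 := hkey u₁ t le_rfl hu le_rfl habove
    have h1 := heq t ⟨hu, le_rfl⟩
    have : z t ≤ z u₁ := by rw [h1]; linarith
    exact le_max_of_le_left this
section params
variable {m : ℕ}

lemma dvec_identity (hm : 0 < m) (α A : Fin m → ℝ) (L : Fin m → Fin m → ℝ)
    (τ : Fin m → ℝ) (hα : ∀ i, 0 < α i)
    (C : Matrix (Fin m) (Fin m) ℝ)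
    (hC_def : ∀ i j, C i j =
      if i = j then 1 - A i ^ 2 * τ i / α i
      else -(A i * L i j * τ i + L i j) / α i)
    (hC_unit : IsUnit C.det)
    (hC_invpos : ∀ i j, 0 < C⁻¹ i j) :
    ∃ d : Fin m → ℝ, (∀ i, 0 < d i) ∧
      (∀ i, A i ^ 2 * τ i * d i
        + ∑ j ∈ Finset.univ.erase i, (A i * τ i + 1) * (L i j * d j)
        = α i * (d i - 1)) := by
  obtain ⟨d, hdpos, hCd⟩ : ∃ d : Fin m → ℝ, (∀ i, 0 < d i) ∧
      ∀ i, ∑ j, C i j * d j = 1 := by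
    refine ⟨fun i => ∑ j, C⁻¹ i j, fun i => Finset.sum_pos (fun j _ => hC_invpos i j)
      ⟨⟨0, hm⟩, Finset.mem_univ _⟩, fun i => ?_⟩
    have hmul := Matrix.mul_nonsing_inv C hC_unit
    calc ∑ j, C i j * ∑ k, C⁻¹ j k = ∑ j, ∑ k, C i j * C⁻¹ j k := by
          simp [Finset.mul_sum]
      _ = ∑ k, ∑ j, C i j * C⁻¹ j k := Finset.sum_comm
      _ = ∑ k, (C * C⁻¹) i k := by simp [Matrix.mul_apply]
      _ = ∑ k, (1 : Matrix (Fin m) (Fin m) ℝ) i k := by rw [hmul]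
      _ = 1 := by simp [Matrix.one_apply]
  refine ⟨d, hdpos, fun i => ?_⟩
  have hsplit : C i i * d i + ∑ j ∈ Finset.univ.erase i, C i j * d j = 1 := by
    rw [Finset.add_sum_erase Finset.univ (fun j => C i j * d j) (Finset.mem_univ i)]
    exact hCd i
  have hii : C i i = 1 - A i ^ 2 * τ i / α i := by rw [hC_def]; simp
  have hαne : α i ≠ 0 := ne_of_gt (hα i)
  have hsum : ∑ j ∈ Finset.univ.erase i, C i j * d j =
      -(∑ j ∈ Finset.univ.erase i, (A i * τ i + 1) * (L i j * d j)) / α i := by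
    have hpt : ∀ j ∈ Finset.univ.erase i, C i j * d j
        = -(((A i * τ i + 1) * (L i j * d j)) / α i) := by
      intro j hj
      rw [hC_def, if_neg (fun hij => (Finset.mem_erase.1 hj).1 hij.symm)]
      field_simp
    rw [Finset.sum_congr rfl hpt, Finset.sum_neg_distrib, ← Finset.sum_div, neg_div]
  rw [hii, hsum] at hsplit
  set S := ∑ j ∈ Finset.univ.erase i, (A i * τ i + 1) * (L i j * d j) with hS
  field_simp at hsplit
  linarith
end params

lemma pick_rate {m : ℕ} (α d : Fin m → ℝ) (r : ℝ)
    (hα : ∀ i, 0 < α i) (hd1 : ∀ i, 1 ≤ d i) :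
    ∃ l : ℝ, 0 < l ∧ ∀ i, l < α i ∧
      Real.exp (2 * l * r) * (α i * (d i - 1)) < (α i - l) * d i := by
  have hev : ∀ᶠ l in nhds (0:ℝ), ∀ i, l < α i ∧
      Real.exp (2 * l * r) * (α i * (d i - 1)) < (α i - l) * d i := by
    rw [Filter.eventually_all]
    intro i
    have hc1 : Continuous (fun l : ℝ =>
        (α i - l) * d i - Real.exp (2 * l * r) * (α i * (d i - 1))) := by fun_prop
    have hc2 : Continuous (fun l : ℝ => α i - l) := by fun_prop
    have hopen : IsOpen {l : ℝ | 0 < (α i - l) * d i - Real.exp (2 * l * r) * (α i * (d i - 1))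
        ∧ 0 < α i - l} := by
      have h1 : IsOpen {l : ℝ | 0 < (α i - l) * d i
          - Real.exp (2 * l * r) * (α i * (d i - 1))} :=
        isOpen_lt continuous_const hc1
      have h2 : IsOpen {l : ℝ | 0 < α i - l} := isOpen_lt continuous_const hc2
      exact h1.inter h2
    have hmem : (0:ℝ) ∈ {l : ℝ | 0 < (α i - l) * d i
        - Real.exp (2 * l * r) * (α i * (d i - 1)) ∧ 0 < α i - l} := by
      constructor
      · show 0 < (α i - 0) * d i - Real.exp (2 * 0 * r) * (α i * (d i - 1))
        rw [show (2:ℝ) * 0 * r = 0 by ring, Real.exp_zero]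
        have : (α i - 0) * d i - 1 * (α i * (d i - 1)) = α i := by ring
        rw [this]
        exact hα i
      · simpa using hα i
    have := hopen.mem_nhds hmem
    filter_upwards [this] with l hl
    exact ⟨by linarith [hl.2], by linarith [hl.1]⟩
  have hev' : ∀ᶠ l in nhdsWithin (0:ℝ) (Set.Ioi 0), (0 < l ∧ ∀ i, l < α i ∧
      Real.exp (2 * l * r) * (α i * (d i - 1)) < (α i - l) * d i) := by
    refine Filter.Eventually.and ?_ (hev.filter_mono nhdsWithin_le_nhds)
    exact eventually_mem_nhdsWithin
  obtain ⟨l, hl⟩ := hev'.exists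
  exact ⟨l, hl⟩

set_option maxHeartbeats 4000000

/-- Theorem 2.1: if the matrix `C` built from the parameters of the nonlinear delay system
`ẋ_i(t) = −a_i(t) x_i(h_i(t)) + Σ_j F_{ij}(t, x_j(g_{ij}(t)))` is a nonsingular M-matrix,
then the system is globally exponentially stable. -/
theorem stmt1
    (m : ℕ) (hm : 0 < m)
    (a : Fin m → ℝ → ℝ) (α A : Fin m → ℝ)
    (F : Fin m → Fin m → ℝ → ℝ → ℝ) (L : Fin m → Fin m → ℝ)
    (h : Fin m → ℝ → ℝ) (g : Fin m → Fin m → ℝ → ℝ)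
    (τ : Fin m → ℝ) (σ : ℝ)
    -- (a1)
    (ha_meas : ∀ i, Measurable (a i))
    (hα : ∀ i, 0 < α i)
    (ha_bd : ∀ i t, 0 ≤ t → α i ≤ a i t ∧ a i t ≤ A i)
    -- (a2)
    (hF_cont : ∀ i j t, Continuous (F i j t))
    (hF_meas : ∀ i j u, Measurable fun t => F i j t u)
    (hF_bd : ∀ i j t u, 0 ≤ t → |F i j t u| ≤ L i j * |u|)
    -- (a3)
    (hh_meas : ∀ i, Measurable (h i))
    (hh : ∀ i t, 0 ≤ t → 0 ≤ t - h i t ∧ t - h i t ≤ τ i)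
    (hg_meas : ∀ i j, Measurable (g i j))
    (hg : ∀ i j t, 0 ≤ t → 0 ≤ t - g i j t ∧ t - g i j t ≤ σ)
    -- the matrix C of (3)
    (C : Matrix (Fin m) (Fin m) ℝ)
    (hC_def : ∀ i j, C i j =
      if i = j then 1 - A i ^ 2 * τ i / α i
      else -(A i * L i j * τ i + L i j) / α i)
    -- C is a nonsingular M-matrix
    (hC_offdiag : ∀ i j, i ≠ j → C i j ≤ 0)
    (hC_unit : IsUnit C.det)
    (hC_invpos : ∀ i j, 0 < C⁻¹ i j) :
    -- global exponential stability
    ∃ M Λ : ℝ, 0 < M ∧ 0 < Λ ∧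
      ∀ t₀ : ℝ, 0 ≤ t₀ → ∀ x : Fin m → ℝ → ℝ,
        (∀ i, Continuous (x i)) →
        (∀ i t, t₀ ≤ t → IntervalIntegrable
            (fun s => -(a i s) * x i (h i s) + ∑ j ∈ Finset.univ.erase i, F i j s (x j (g i j s)))
            volume t₀ t) →
        (∀ i t, t₀ ≤ t →
          x i t = x i t₀ + ∫ s in t₀..t,
            (-(a i s) * x i (h i s) + ∑ j ∈ Finset.univ.erase i, F i j s (x j (g i j s)))) →
        ∀ t, t₀ ≤ t →
          ‖(fun i => x i t : Fin m → ℝ)‖ ≤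
            M * Real.exp (-Λ * (t - t₀)) *
              (‖(fun i => x i t₀ : Fin m → ℝ)‖ +
                sSup ((fun s => ‖(fun i => x i s : Fin m → ℝ)‖) ''
                  Set.Icc (t₀ - max σ (⨆ i, τ i)) t₀)) := by
  have i0 : Fin m := ⟨0, hm⟩
  have hA : ∀ i, 0 < A i := fun i =>
    lt_of_lt_of_le (hα i) (le_trans (ha_bd i 0 le_rfl).1 (ha_bd i 0 le_rfl).2)
  have hτ : ∀ i, 0 ≤ τ i := fun i => le_trans (hh i 0 le_rfl).1 (hh i 0 le_rfl).2
  have hσ : 0 ≤ σ := le_trans (hg i0 i0 0 le_rfl).1 (hg i0 i0 0 le_rfl).2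
  have hL0 : ∀ i j, 0 ≤ L i j := by
    intro i j
    have h1 := hF_bd i j 0 1 le_rfl
    have h0 : (0:ℝ) ≤ |F i j 0 1| := abs_nonneg _
    have := le_trans h0 h1
    simpa using this
  set r := max σ (⨆ i, τ i) with hrdef
  have hσr : σ ≤ r := le_max_left _ _
  have hτr : ∀ i, τ i ≤ r := fun i =>
    le_trans (le_ciSup (Finite.bddAbove_range τ) i) (le_max_right _ _)
  have hr0 : 0 ≤ r := le_trans hσ hσr
  obtain ⟨d, hdpos, hdid⟩ := dvec_identity hm α A L τ hα C hC_def hC_unit hC_invpos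
  have hd1 : ∀ i, 1 ≤ d i := by
    intro i
    have h1 : 0 ≤ A i ^ 2 * τ i * d i
        + ∑ j ∈ Finset.univ.erase i, (A i * τ i + 1) * (L i j * d j) := by
      refine add_nonneg ?_ (Finset.sum_nonneg fun j _ => ?_)
      · have := hA i; have := hτ i; have := (hdpos i).le; positivity
      · have h2 : 0 ≤ A i * τ i + 1 := by nlinarith [hA i, hτ i]
        exact mul_nonneg h2 (mul_nonneg (hL0 i j) (hdpos j).le)
    rw [hdid i] at h1
    nlinarith only [h1, hα i]
  obtain ⟨l, hl0, hli⟩ := pick_rate α d r hα hd1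
  set K := 1 + ∑ i, (A i + ∑ j ∈ Finset.univ.erase i, L i j) with hKdef
  have hterm0 : ∀ i, 0 ≤ A i + ∑ j ∈ Finset.univ.erase i, L i j := fun i =>
    add_nonneg (hA i).le (Finset.sum_nonneg fun j _ => hL0 i j)
  have hK1 : 1 ≤ K := le_add_of_nonneg_right (Finset.sum_nonneg fun i _ => hterm0 i)
  have hK0 : 0 < K := lt_of_lt_of_le one_pos hK1
  have hKb : ∀ i, A i + ∑ j ∈ Finset.univ.erase i, L i j ≤ K := by
    intro i
    have := Finset.single_le_sum (fun i _ => hterm0 i) (Finset.mem_univ i)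
    rw [hKdef]; linarith
  set δ := 1/(2*K) with hδdef
  have hδ0 : 0 < δ := by rw [hδdef]; positivity
  have hKδ : K * δ = 1/2 := by rw [hδdef]; field_simp
  set N := Nat.ceil (r/δ) with hNdef
  have hrN : r ≤ N * δ := by
    have h1 := Nat.le_ceil (r/δ)
    rw [← hNdef] at h1
    calc r = (r/δ) * δ := by field_simp
    _ ≤ N * δ := mul_le_mul_of_nonneg_right h1 hδ0.le
  have hne : (Finset.univ : Finset (Fin m)).Nonempty := ⟨i0, Finset.mem_univ _⟩
  set dmax := Finset.univ.sup' hne d with hdmaxdef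
  have hdmax : ∀ i, d i ≤ dmax := fun i => Finset.le_sup' d (Finset.mem_univ i)
  have hdmax1 : 1 ≤ dmax := le_trans (hd1 i0) (hdmax i0)
  have hdmax0 : 0 < dmax := lt_of_lt_of_le one_pos hdmax1
  refine ⟨Real.exp (2*l*r) * 2^N * dmax, l, by positivity, hl0, ?_⟩
  intro t₀ ht₀ x hxc hxint hxeq t ht
  set nrm : ℝ → ℝ := fun s => ‖(fun i => x i s : Fin m → ℝ)‖ with hnrmdef
  have hnrmc : Continuous nrm := (continuous_pi fun i => hxc i).norm
  set S₀ := sSup (nrm '' Set.Icc (t₀ - r) t₀) with hS₀def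
  have hbdd : BddAbove (nrm '' Set.Icc (t₀ - r) t₀) :=
    (isCompact_Icc.image_of_continuousOn hnrmc.continuousOn).bddAbove
  have hS₀mem : ∀ s ∈ Set.Icc (t₀ - r) t₀, nrm s ≤ S₀ := fun s hs => le_csSup hbdd ⟨s, hs, rfl⟩
  have ht₀mem : t₀ ∈ Set.Icc (t₀ - r) t₀ := ⟨by linarith, le_rfl⟩
  have hS₀0 : 0 ≤ S₀ := le_trans (norm_nonneg _) (hS₀mem t₀ ht₀mem)
  have hxle : ∀ i s, s ∈ Set.Icc (t₀ - r) t₀ → |x i s| ≤ S₀ := fun i s hs =>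
    le_trans (by simpa [Real.norm_eq_abs] using norm_le_pi_norm (fun j => x j s) i) (hS₀mem s hs)
  have hFi_int : ∀ i u v, t₀ ≤ u → u ≤ v → IntervalIntegrable
      (fun s => -(a i s) * x i (h i s) + ∑ j ∈ Finset.univ.erase i, F i j s (x j (g i j s)))
      volume u v := by
    intro i u v hu huv
    refine (hxint i v (le_trans hu huv)).mono_set ?_
    rw [Set.uIcc_of_le huv, Set.uIcc_of_le (le_trans hu huv)]
    exact Set.Icc_subset_Icc hu le_rfl
  have hxeq2 : ∀ i u v, t₀ ≤ u → u ≤ v →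
      x i v = x i u + ∫ s in u..v,
        (-(a i s) * x i (h i s) + ∑ j ∈ Finset.univ.erase i, F i j s (x j (g i j s))) := by
    intro i u v hu huv
    have e1 := hxeq i v (le_trans hu huv)
    have e2 := hxeq i u hu
    have hadd := intervalIntegral.integral_add_adjacent_intervals
      (hxint i u hu) (hFi_int i u v hu huv)
    rw [e1, e2, ← hadd]; ring
  have hFabs : ∀ i ξ, (0:ℝ) ≤ ξ →
      |(-(a i ξ) * x i (h i ξ) + ∑ j ∈ Finset.univ.erase i, F i j ξ (x j (g i j ξ)))| ≤
      A i * |x i (h i ξ)| + ∑ j ∈ Finset.univ.erase i, L i j * |x j (g i j ξ)| := by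
    intro i ξ hξ
    refine le_trans (abs_add_le _ _) (add_le_add ?_ ?_)
    · rw [abs_mul, abs_neg]
      have h1 : |a i ξ| ≤ A i := by
        have h2 := ha_bd i ξ hξ
        rw [abs_of_pos (lt_of_lt_of_le (hα i) h2.1)]
        exact h2.2
      exact mul_le_mul_of_nonneg_right h1 (abs_nonneg _)
    · exact le_trans (Finset.abs_sum_le_sum_abs _ _)
        (Finset.sum_le_sum fun j _ => hF_bd i j ξ _ hξ)
  -- crude bound doubling step on an interval of length δ
  have hstep : ∀ u B, t₀ ≤ u → 0 ≤ B → (∀ j s, t₀ - r ≤ s → s ≤ u → |x j s| ≤ B) →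
      ∀ i t', u ≤ t' → t' ≤ u + δ → |x i t'| ≤ 2*B := by
    intro u B hu hB hist
    have hεstep : ∀ ε : ℝ, 0 < ε → ∀ i t', u ≤ t' → t' ≤ u + δ → |x i t'| ≤ 2*B + ε := by
      intro ε hε
      by_contra hcon
      push_neg at hcon
      obtain ⟨i₁, t', ht'1, ht'2, ht'3⟩ := hcon
      set Abad := {s : ℝ | (u ≤ s ∧ s ≤ u + δ) ∧ ∃ i, 2*B + ε < |x i s|} with hAdef
      have hAne : Abad.Nonempty := ⟨t', ⟨ht'1, ht'2⟩, i₁, ht'3⟩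
      have hAbdd : BddBelow Abad := ⟨u, fun s hs => hs.1.1⟩
      set w := sInf Abad with hwdef
      have hwlb : u ≤ w := le_csInf hAne (fun s hs => hs.1.1)
      have hwub : w ≤ u + δ :=
        le_trans (csInf_le hAbdd hAne.choose_spec) hAne.choose_spec.1.2
      have hpre : ∀ s, u ≤ s → s < w → ∀ i, |x i s| ≤ 2*B + ε := by
        intro s hs1 hs2 i
        by_contra hc; push_neg at hc
        have hsA : s ∈ Abad := ⟨⟨hs1, by linarith⟩, i, hc⟩
        exact absurd (csInf_le hAbdd hsA) (not_le.2 hs2)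
      have hw_cl : ∀ i, |x i w| ≤ 2*B + ε := by
        intro i
        rcases eq_or_lt_of_le hwlb with h' | h'
        · rw [← h']
          exact le_trans (hist i u (by linarith) le_rfl) (by linarith)
        · have htd : Filter.Tendsto (fun s => |x i s|) (nhdsWithin w (Set.Iio w))
              (nhds |x i w|) :=
            ((continuous_abs.comp (hxc i)).tendsto w).mono_left nhdsWithin_le_nhds
          refine le_of_tendsto htd ?_
          filter_upwards [Ioo_mem_nhdsLT_of_mem (⟨h', le_rfl⟩ : w ∈ Set.Ioc u w)] with s hs
          exact hpre s hs.1.le hs.2 i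
      have hall : ∀ j s, t₀ - r ≤ s → s ≤ w → |x j s| ≤ 2*B + ε := by
        intro j s hs1 hs2
        rcases le_or_gt s u with hc | hc
        · exact le_trans (hist j s hs1 hc) (by linarith)
        · rcases lt_or_eq_of_le hs2 with hc2 | hc2
          · exact hpre s hc.le hc2 j
          · rw [hc2]; exact hw_cl j
      have himp : ∀ i, |x i w| ≤ 2*B + ε/2 := by
        intro i
        have heqw := hxeq2 i u w hu hwlb
        have hptw : ∀ ξ ∈ Set.uIoc u w,
            ‖(-(a i ξ) * x i (h i ξ) + ∑ j ∈ Finset.univ.erase i, F i j ξ (x j (g i j ξ)))‖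
              ≤ K * (2*B + ε) := by
          intro ξ hξ
          rw [Set.uIoc_of_le hwlb] at hξ
          have hξ0 : (0:ℝ) ≤ ξ := by linarith [hξ.1]
          have hξt₀ : t₀ ≤ ξ := by linarith [hξ.1]
          rw [Real.norm_eq_abs]
          refine le_trans (hFabs i ξ hξ0) ?_
          have hbd1 : |x i (h i ξ)| ≤ 2*B + ε := by
            have hhξ := hh i ξ hξ0
            refine hall i _ ?_ ?_
            · have := hτr i; linarith [hhξ.2]
            · linarith [hhξ.1, hξ.2]
          have hbd2 : ∀ j, j ∈ Finset.univ.erase i → L i j * |x j (g i j ξ)| ≤ L i j * (2*B + ε) := by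
            intro j _
            have hgξ := hg i j ξ hξ0
            refine mul_le_mul_of_nonneg_left (hall j _ ?_ ?_) (hL0 i j)
            · linarith [hgξ.2, hσr]
            · linarith [hgξ.1, hξ.2]
          calc A i * |x i (h i ξ)| + ∑ j ∈ Finset.univ.erase i, L i j * |x j (g i j ξ)|
              ≤ A i * (2*B + ε) + ∑ j ∈ Finset.univ.erase i, L i j * (2*B + ε) := by
                refine add_le_add (mul_le_mul_of_nonneg_left hbd1 (hA i).le)
                  (Finset.sum_le_sum hbd2)
            _ = (A i + ∑ j ∈ Finset.univ.erase i, L i j) * (2*B + ε) := by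
                rw [← Finset.sum_mul]; ring
            _ ≤ K * (2*B + ε) := by
                refine mul_le_mul_of_nonneg_right (hKb i) (by linarith)
        have hn := intervalIntegral.norm_integral_le_of_norm_le_const hptw
        rw [Real.norm_eq_abs] at hn
        have habs : |w - u| ≤ δ := by rw [abs_of_nonneg (by linarith)]; linarith
        have hxiu : |x i u| ≤ B := hist i u (by linarith) le_rfl
        have hKε0 : 0 ≤ K * (2*B + ε) := mul_nonneg hK0.le (by linarith)
        have h5 : K * (2*B+ε) * |w - u| ≤ K * (2*B+ε) * δ :=
          mul_le_mul_of_nonneg_left habs hKε0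
        have h6 : K * (2*B+ε) * δ = (2*B+ε)/2 := by
          rw [show K * (2*B+ε) * δ = (K*δ) * (2*B+ε) by ring, hKδ]; ring
        rw [heqw]
        calc |x i u + ∫ s in u..w, (-(a i s) * x i (h i s)
              + ∑ j ∈ Finset.univ.erase i, F i j s (x j (g i j s)))|
            ≤ |x i u| + |∫ s in u..w, (-(a i s) * x i (h i s)
              + ∑ j ∈ Finset.univ.erase i, F i j s (x j (g i j s)))| := abs_add_le _ _
          _ ≤ B + (2*B+ε)/2 := by
              refine add_le_add hxiu ?_
              rw [← h6]
              exact le_trans hn h5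
          _ = 2*B + ε/2 := by ring
      have hopen : ∀ᶠ s in nhds w, ∀ i, |x i s| < 2*B + ε := by
        rw [Filter.eventually_all]
        intro i
        have htd : Filter.Tendsto (fun s => |x i s|) (nhds w) (nhds |x i w|) :=
          (continuous_abs.comp (hxc i)).tendsto w
        exact htd.eventually_lt_const (by linarith [himp i])
      obtain ⟨η, hη0, hη⟩ := Metric.eventually_nhds_iff.1 hopen
      obtain ⟨s', hs'A, hs'lt⟩ := Real.lt_sInf_add_pos hAne (half_pos hη0)
      have h1 : w ≤ s' := csInf_le hAbdd hs'A
      have h2 : dist s' w < η := by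
        rw [Real.dist_eq, abs_of_nonneg (by linarith)]
        rw [← hwdef] at hs'lt
        linarith
      obtain ⟨i2, hi2⟩ := hs'A.2
      exact absurd (hη h2 i2) (not_lt.2 hi2.le)
    intro i t' h1 h2
    exact le_of_forall_pos_le_add (fun ε hε' => hεstep ε hε' i t' h1 h2)
  have hcrude : ∀ k : ℕ, ∀ i s, t₀ - r ≤ s → s ≤ t₀ + k*δ → |x i s| ≤ 2^k * S₀ := by
    intro k
    induction k with
    | zero =>
      intro i s h1 h2
      simp only [Nat.cast_zero, zero_mul, add_zero] at h2
      simpa using hxle i s ⟨h1, h2⟩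
    | succ n ih =>
      intro i s h1 h2
      rcases le_or_gt s (t₀ + n*δ) with hc | hc
      · have h3 := ih i s h1 hc
        have h4 : (2:ℝ)^n * S₀ ≤ 2^(n+1) * S₀ := by
          have h5 : (2:ℝ)^n ≤ 2^(n+1) := by
            rw [pow_succ]
            nlinarith [pow_pos (show (0:ℝ) < 2 by norm_num) n]
          nlinarith [hS₀0]
        exact le_trans h3 (by exact_mod_cast h4)
      · have hu : t₀ ≤ t₀ + n*δ := by
          have : (0:ℝ) ≤ n*δ := mul_nonneg (Nat.cast_nonneg n) hδ0.le
          linarith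
        have hB : (0:ℝ) ≤ 2^n * S₀ := mul_nonneg (pow_nonneg (by norm_num) n) hS₀0
        have hist : ∀ j s', t₀ - r ≤ s' → s' ≤ t₀ + n*δ → |x j s'| ≤ 2^n * S₀ := ih
        have hub : s ≤ (t₀ + n*δ) + δ := by
          push_cast at h2
          linarith
        have := hstep (t₀ + n*δ) (2^n * S₀) hu hB hist i s hc.le hub
        calc |x i s| ≤ 2*(2^n * S₀) := this
          _ = 2^(n+1) * S₀ := by rw [pow_succ]; ring
  have hW₁ : ∀ i s, t₀ - r ≤ s → s ≤ t₀ + r → |x i s| ≤ 2^N * S₀ := by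
    intro i s h1 h2
    exact hcrude N i s h1 (by linarith)
  set t₁ := t₀ + r with ht₁def
  set W₂ := Real.exp (l*r) * (2^N * S₀) with hW₂def
  have hW₂0 : 0 ≤ W₂ := by positivity
  have hinit : ∀ i s, t₀ - r ≤ s → s ≤ t₁ → Real.exp (l*(s-t₀)) * |x i s| ≤ W₂ := by
    intro i s h1 h2
    have he : Real.exp (l*(s-t₀)) ≤ Real.exp (l*r) := by
      refine Real.exp_le_exp.2 ?_
      have h3 : s - t₀ ≤ r := by rw [ht₁def] at h2; linarith
      exact mul_le_mul_of_nonneg_left h3 hl0.le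
    refine mul_le_mul he (hW₁ i s h1 (by rw [ht₁def] at h2; linarith)) (abs_nonneg _) ?_
    positivity
  have ht₀t₁ : t₀ ≤ t₁ := by rw [ht₁def]; linarith
  have hmain : ∀ ε : ℝ, 0 < ε → ∀ T, t₁ ≤ T → ∀ i,
      Real.exp (l*(T-t₀)) * |x i T| ≤ (W₂ + ε) * d i := by
    intro ε hε
    by_contra hcon
    push_neg at hcon
    obtain ⟨T, hT1, i₁, hT3⟩ := hcon
    set c : Fin m → ℝ := fun i => (W₂ + ε) * d i with hcdef
    have hc0 : ∀ i, 0 < c i := fun i => mul_pos (by linarith) (hdpos i)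
    have hW₂c : ∀ i, W₂ < c i := by
      intro i
      simp only [hcdef]
      nlinarith only [hd1 i, hdpos i, hW₂0, hε]
    have hyabs : ∀ i s, |Real.exp (l*(s-t₀)) * x i s| = Real.exp (l*(s-t₀)) * |x i s| := by
      intro i s; rw [abs_mul, abs_of_pos (Real.exp_pos _)]
    have hyc : ∀ i, Continuous (fun s => Real.exp (l*(s-t₀)) * x i s) := by
      intro i
      exact (Real.continuous_exp.comp (by fun_prop)).mul (hxc i)
    set Abad := {s : ℝ | t₁ ≤ s ∧ ∃ i, c i < Real.exp (l*(s-t₀)) * |x i s|} with hAdef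
    have hAne : Abad.Nonempty := ⟨T, hT1, i₁, hT3⟩
    have hAbdd : BddBelow Abad := ⟨t₁, fun s hs => hs.1⟩
    set w := sInf Abad with hwdef
    have hwlb : t₁ ≤ w := le_csInf hAne fun s hs => hs.1
    have hpre : ∀ s, t₁ ≤ s → s < w → ∀ i, Real.exp (l*(s-t₀)) * |x i s| ≤ c i := by
      intro s hs1 hs2 i
      by_contra hcc; push_neg at hcc
      exact absurd (csInf_le hAbdd ⟨hs1, i, hcc⟩) (not_le.2 hs2)
    have hw_cl : ∀ i, Real.exp (l*(w-t₀)) * |x i w| ≤ c i := by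
      intro i
      rcases eq_or_lt_of_le hwlb with h' | h'
      · rw [← h']
        exact le_trans (hinit i t₁ (by linarith) le_rfl) (hW₂c i).le
      · have htd : Filter.Tendsto (fun s => Real.exp (l*(s-t₀)) * |x i s|)
            (nhdsWithin w (Set.Iio w)) (nhds (Real.exp (l*(w-t₀)) * |x i w|)) := by
          refine Filter.Tendsto.mono_left ?_ nhdsWithin_le_nhds
          exact ((Real.continuous_exp.comp (by fun_prop)).mul
            (continuous_abs.comp (hxc i))).tendsto w
        refine le_of_tendsto htd ?_
        filter_upwards [Ioo_mem_nhdsLT_of_mem (⟨h', le_rfl⟩ : w ∈ Set.Ioc t₁ w)] with s hs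
        exact hpre s hs.1.le hs.2 i
    have hall : ∀ j p, t₀ - r ≤ p → p ≤ w → Real.exp (l*(p-t₀)) * |x j p| ≤ c j := by
      intro j p h1 h2
      rcases le_or_gt p t₁ with hc' | hc'
      · exact le_trans (hinit j p h1 hc') (hW₂c j).le
      · rcases lt_or_eq_of_le h2 with hc2 | hc2
        · exact hpre p hc'.le hc2 j
        · rw [hc2]; exact hw_cl j
    have hxexp : ∀ j p, t₀ - r ≤ p → p ≤ w → |x j p| ≤ c j * Real.exp (-(l*(p-t₀))) := by
      intro j p h1 h2
      have h3 := hall j p h1 h2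
      have h4 := mul_le_mul_of_nonneg_left h3 (Real.exp_pos (-(l*(p-t₀)))).le
      rw [← mul_assoc, ← Real.exp_add, neg_add_cancel, Real.exp_zero, one_mul] at h4
      exact h4.trans_eq (mul_comm _ _)
    have himp : ∀ i, Real.exp (l*(w-t₀)) * |x i w| < c i := by
      intro i
      have hαl : 0 < α i - l := by linarith [(hli i).1]
      have hd1i := hd1 i
      set Q := Real.exp (2*l*r) * ((W₂+ε) * (α i * (d i - 1))) with hQdef
      have hQ0 : 0 ≤ Q := by
        have h1 : 0 ≤ α i * (d i - 1) := mul_nonneg (hα i).le (by linarith)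
        exact mul_nonneg (Real.exp_pos _).le (mul_nonneg (by linarith) h1)
      set c₁ := Q / (α i - l) with hc₁def
      have hc₁0 : 0 ≤ c₁ := div_nonneg hQ0 hαl.le
      have hQeq : (α i - l) * c₁ = Q := by
        rw [hc₁def, mul_comm, div_mul_cancel₀ _ (ne_of_gt hαl)]
      have hc₁c : c₁ < c i := by
        rw [hc₁def, div_lt_iff₀ hαl]
        have h2 := (hli i).2
        simp only [hQdef, hcdef]
        have h3 := mul_lt_mul_of_pos_left h2
          (show (0:ℝ) < W₂ + ε by linarith only [hW₂0, hε])
        linarith only [h3]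
      set G : ℝ → ℝ := fun s => l * Real.exp (l*(s-t₀)) * x i s + Real.exp (l*(s-t₀)) *
        (-(a i s) * x i (h i s) + ∑ j ∈ Finset.univ.erase i, F i j s (x j (g i j s))) with hGdef
      have hGint : ∀ a' b', t₁ ≤ a' → a' ≤ b' → b' ≤ w → IntervalIntegrable G volume a' b' := by
        intro a' b' h1 h2 h3
        have hcont : Continuous (fun s => l * Real.exp (l*(s-t₀)) * x i s) := by
          exact (continuous_const.mul (Real.continuous_exp.comp (by fun_prop))).mul (hxc i)
        refine (hcont.intervalIntegrable _ _).add ?_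
        exact (hFi_int i a' b' (le_trans ht₀t₁ h1) h2).continuousOn_mul
          (Real.continuous_exp.comp (by fun_prop)).continuousOn
      have heqy : ∀ v ∈ Set.Icc t₁ w, Real.exp (l*(v-t₀)) * x i v
          = Real.exp (l*(t₁-t₀)) * x i t₁ + ∫ s in t₁..v, G s := by
        intro v hv
        exact prodrule_aux hv.1 (hxc i) (hFi_int i t₁ v ht₀t₁ hv.1)
          (fun w' hw' => hxeq2 i t₁ w' ht₀t₁ hw'.1)
      -- the q-estimate
      have hqbd : ∀ s, t₁ < s → s ≤ w →
          |G s + (a i s - l) * (Real.exp (l*(s-t₀)) * x i s)| ≤ Q := by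
        intro s hs1 hs2
        have hst₀ : t₀ ≤ s := le_trans ht₀t₁ hs1.le
        have hs0 : (0:ℝ) ≤ s := le_trans ht₀ hst₀
        have hhs := hh i s hs0
        have hhs_le : h i s ≤ s := by linarith [hhs.1]
        have hht₀ : t₀ ≤ h i s := by linarith [hhs.2, hτr i]
        have hqid : G s + (a i s - l) * (Real.exp (l*(s-t₀)) * x i s)
            = a i s * (Real.exp (l*(s-t₀)) * (x i s - x i (h i s)))
              + Real.exp (l*(s-t₀)) *
                (∑ j ∈ Finset.univ.erase i, F i j s (x j (g i j s))) := by
          simp only [hGdef]; ring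
        rw [hqid]
        set P := A i * c i + ∑ j ∈ Finset.univ.erase i, L i j * c j with hPdef
        have hP0 : 0 ≤ P := add_nonneg (mul_nonneg (hA i).le (hc0 i).le)
          (Finset.sum_nonneg fun j _ => mul_nonneg (hL0 i j) (hc0 j).le)
        have hexpb : ∀ p, s - 2*r ≤ p → p ≤ s →
            Real.exp (-(l*(p-t₀))) ≤ Real.exp (2*l*r) * Real.exp (-(l*(s-t₀))) := by
          intro p h1 h2
          rw [← Real.exp_add]
          refine Real.exp_le_exp.2 ?_
          have h3 : s - p ≤ 2*r := by linarith only [h1]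
          have h4 := mul_le_mul_of_nonneg_left h3 hl0.le
          linarith only [h4]
        have hFiξ : ∀ ξ ∈ Set.uIoc (h i s) s,
            ‖(-(a i ξ) * x i (h i ξ) + ∑ j ∈ Finset.univ.erase i, F i j ξ (x j (g i j ξ)))‖
            ≤ P * (Real.exp (2*l*r) * Real.exp (-(l*(s-t₀)))) := by
          intro ξ hξ
          rw [Set.uIoc_of_le hhs_le] at hξ
          have hξ0 : (0:ℝ) ≤ ξ := by linarith [hξ.1]
          have hξlb : s - r ≤ ξ := by linarith [hξ.1, hhs.2, hτr i]
          have hhξ := hh i ξ hξ0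
          have hgood : ∀ j (p : ℝ), ξ - r ≤ p → p ≤ ξ →
              |x j p| ≤ c j * (Real.exp (2*l*r) * Real.exp (-(l*(s-t₀)))) := by
            intro j p hpl hpu
            have hp1 : t₀ - r ≤ p := by linarith
            have hp2 : p ≤ w := by linarith [hξ.2]
            have he1 : Real.exp (-(l*(p-t₀))) ≤ Real.exp (2*l*r) * Real.exp (-(l*(s-t₀))) :=
              hexpb p (by linarith) (by linarith [hξ.2])
            exact le_trans (hxexp j p hp1 hp2)
              (mul_le_mul_of_nonneg_left he1 (hc0 j).le)
          rw [Real.norm_eq_abs]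
          refine le_trans (hFabs i ξ hξ0) ?_
          have hb1 : |x i (h i ξ)| ≤ c i * (Real.exp (2*l*r) * Real.exp (-(l*(s-t₀)))) :=
            hgood i (h i ξ) (by linarith [hhξ.2, hτr i]) (by linarith [hhξ.1])
          have hb2 : ∀ j ∈ Finset.univ.erase i, L i j * |x j (g i j ξ)|
              ≤ L i j * c j * (Real.exp (2*l*r) * Real.exp (-(l*(s-t₀)))) := by
            intro j _
            have hgξ := hg i j ξ hξ0
            have := hgood j (g i j ξ) (by linarith [hgξ.2, hσr]) (by linarith [hgξ.1])
            calc L i j * |x j (g i j ξ)|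
                ≤ L i j * (c j * (Real.exp (2*l*r) * Real.exp (-(l*(s-t₀))))) :=
                  mul_le_mul_of_nonneg_left this (hL0 i j)
              _ = L i j * c j * (Real.exp (2*l*r) * Real.exp (-(l*(s-t₀)))) := by ring
          calc A i * |x i (h i ξ)| + ∑ j ∈ Finset.univ.erase i, L i j * |x j (g i j ξ)|
              ≤ A i * (c i * (Real.exp (2*l*r) * Real.exp (-(l*(s-t₀)))))
                + ∑ j ∈ Finset.univ.erase i,
                    L i j * c j * (Real.exp (2*l*r) * Real.exp (-(l*(s-t₀)))) :=
                add_le_add (mul_le_mul_of_nonneg_left hb1 (hA i).le) (Finset.sum_le_sum hb2)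
            _ = P * (Real.exp (2*l*r) * Real.exp (-(l*(s-t₀)))) := by
                rw [hPdef, add_mul, Finset.sum_mul]; ring
        have hdiff : |x i s - x i (h i s)|
            ≤ (P * (Real.exp (2*l*r) * Real.exp (-(l*(s-t₀))))) * τ i := by
          have heqd : x i s - x i (h i s) = ∫ ξ in (h i s)..s,
              (-(a i ξ) * x i (h i ξ) + ∑ j ∈ Finset.univ.erase i, F i j ξ (x j (g i j ξ))) := by
            have e := hxeq2 i (h i s) s hht₀ hhs_le
            rw [e]; ring
          rw [heqd]
          have hn := intervalIntegral.norm_integral_le_of_norm_le_const hFiξ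
          rw [Real.norm_eq_abs] at hn
          refine le_trans hn ?_
          have h9 : |s - h i s| ≤ τ i := by
            rw [abs_of_nonneg (by linarith [hhs.1])]; exact hhs.2
          exact mul_le_mul_of_nonneg_left h9 (mul_nonneg hP0 (by positivity))
        have hEE : Real.exp (l*(s-t₀)) * Real.exp (-(l*(s-t₀))) = 1 := by
          rw [← Real.exp_add]; simp
        have hterm1 : |a i s * (Real.exp (l*(s-t₀)) * (x i s - x i (h i s)))|
            ≤ A i * τ i * (Real.exp (2*l*r) * P) := by
          rw [abs_mul, abs_mul, abs_of_pos (Real.exp_pos (l*(s-t₀)))]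
          have ha1 : |a i s| ≤ A i := by
            have h2 := ha_bd i s hs0
            rw [abs_of_pos (lt_of_lt_of_le (hα i) h2.1)]; exact h2.2
          have h3 : Real.exp (l*(s-t₀)) * |x i s - x i (h i s)|
              ≤ Real.exp (l*(s-t₀)) * ((P * (Real.exp (2*l*r) * Real.exp (-(l*(s-t₀))))) * τ i) :=
            mul_le_mul_of_nonneg_left hdiff (Real.exp_pos _).le
          calc |a i s| * (Real.exp (l*(s-t₀)) * |x i s - x i (h i s)|)
              ≤ A i * (Real.exp (l*(s-t₀)) *
                  ((P * (Real.exp (2*l*r) * Real.exp (-(l*(s-t₀))))) * τ i)) := by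
                refine mul_le_mul ha1 h3 ?_ (hA i).le
                exact mul_nonneg (Real.exp_pos _).le (abs_nonneg _)
            _ = A i * (τ i * (Real.exp (2*l*r) * P) *
                  (Real.exp (l*(s-t₀)) * Real.exp (-(l*(s-t₀))))) := by ring
            _ = A i * τ i * (Real.exp (2*l*r) * P) := by rw [hEE]; ring
        have hterm2 : |Real.exp (l*(s-t₀)) *
              (∑ j ∈ Finset.univ.erase i, F i j s (x j (g i j s)))|
            ≤ Real.exp (2*l*r) * ∑ j ∈ Finset.univ.erase i, L i j * c j := by
          rw [abs_mul, abs_of_pos (Real.exp_pos _)]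
          have hgb : ∀ j ∈ Finset.univ.erase i,
              |F i j s (x j (g i j s))|
              ≤ L i j * c j * (Real.exp (2*l*r) * Real.exp (-(l*(s-t₀)))) := by
            intro j _
            have hgs := hg i j s hs0
            have hp1 : t₀ - r ≤ g i j s := by linarith [hgs.2, hσr]
            have hp2 : g i j s ≤ w := by linarith [hgs.1]
            have he2 : Real.exp (-(l*(g i j s - t₀)))
                ≤ Real.exp (2*l*r) * Real.exp (-(l*(s-t₀))) :=
              hexpb _ (by linarith [hgs.2, hσr, hr0]) (by linarith [hgs.1])
            calc |F i j s (x j (g i j s))| ≤ L i j * |x j (g i j s)| := hF_bd i j s _ hs0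
              _ ≤ L i j * (c j * Real.exp (-(l*(g i j s - t₀)))) :=
                  mul_le_mul_of_nonneg_left (hxexp j _ hp1 hp2) (hL0 i j)
              _ ≤ L i j * (c j * (Real.exp (2*l*r) * Real.exp (-(l*(s-t₀))))) :=
                  mul_le_mul_of_nonneg_left
                    (mul_le_mul_of_nonneg_left he2 (hc0 j).le) (hL0 i j)
              _ = L i j * c j * (Real.exp (2*l*r) * Real.exp (-(l*(s-t₀)))) := by ring
          have h6 : |∑ j ∈ Finset.univ.erase i, F i j s (x j (g i j s))|
              ≤ (∑ j ∈ Finset.univ.erase i, L i j * c j)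
                * (Real.exp (2*l*r) * Real.exp (-(l*(s-t₀)))) := by
            calc |∑ j ∈ Finset.univ.erase i, F i j s (x j (g i j s))|
                ≤ ∑ j ∈ Finset.univ.erase i, |F i j s (x j (g i j s))| :=
                  Finset.abs_sum_le_sum_abs _ _
              _ ≤ ∑ j ∈ Finset.univ.erase i,
                    L i j * c j * (Real.exp (2*l*r) * Real.exp (-(l*(s-t₀)))) :=
                  Finset.sum_le_sum hgb
              _ = (∑ j ∈ Finset.univ.erase i, L i j * c j)
                  * (Real.exp (2*l*r) * Real.exp (-(l*(s-t₀)))) := (Finset.sum_mul _ _ _).symm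
          have h7 := mul_le_mul_of_nonneg_left h6 (Real.exp_pos (l*(s-t₀))).le
          refine le_trans h7 (le_of_eq ?_)
          calc Real.exp (l*(s-t₀)) * ((∑ j ∈ Finset.univ.erase i, L i j * c j)
                * (Real.exp (2*l*r) * Real.exp (-(l*(s-t₀)))))
              = (Real.exp (l*(s-t₀)) * Real.exp (-(l*(s-t₀))))
                * (Real.exp (2*l*r) * ∑ j ∈ Finset.univ.erase i, L i j * c j) := by ring
            _ = Real.exp (2*l*r) * ∑ j ∈ Finset.univ.erase i, L i j * c j := by
                rw [hEE, one_mul]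
        have halg : A i * τ i * (Real.exp (2*l*r) * P)
            + Real.exp (2*l*r) * (∑ j ∈ Finset.univ.erase i, L i j * c j) = Q := by
          have hs1' : ∑ j ∈ Finset.univ.erase i, L i j * c j
              = (W₂+ε) * ∑ j ∈ Finset.univ.erase i, L i j * d j := by
            rw [Finset.mul_sum]
            refine Finset.sum_congr rfl (fun j _ => ?_)
            simp only [hcdef]; ring
          have hsum2 : ∑ j ∈ Finset.univ.erase i, (A i * τ i + 1) * (L i j * d j)
              = A i * τ i * (∑ j ∈ Finset.univ.erase i, L i j * d j)
                + ∑ j ∈ Finset.univ.erase i, L i j * d j := by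
            rw [Finset.mul_sum, ← Finset.sum_add_distrib]
            exact Finset.sum_congr rfl (fun j _ => by ring)
          have hdid' := hdid i
          rw [hsum2] at hdid'
          simp only [hQdef, hPdef, hcdef]
          rw [hs1', ← hdid']
          ring
        refine le_trans (abs_add_le _ _) ?_
        rw [← halg]
        exact add_le_add hterm1 hterm2
      -- threshold lemma applications
      have hkeypos : ∀ a' b', t₁ ≤ a' → a' ≤ b' → b' ≤ w →
          (∀ s ∈ Set.Ioc a' b', c₁ ≤ Real.exp (l*(s-t₀)) * x i s) →
          (∫ s in a'..b', G s) ≤ 0 := by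
        intro a' b' h1 h2 h3 hyge
        rw [intervalIntegral.integral_of_le h2]
        refine setIntegral_nonpos measurableSet_Ioc (fun s hs => ?_)
        have hs1 : t₁ < s := lt_of_le_of_lt h1 hs.1
        have hs2 : s ≤ w := le_trans hs.2 h3
        have hq := (abs_le.1 (hqbd s hs1 hs2)).2
        have hy := hyge s hs
        have has := ha_bd i s (by linarith [ht₀])
        have h4 : (α i - l) * c₁ ≤ (a i s - l) * (Real.exp (l*(s-t₀)) * x i s) :=
          mul_le_mul (by linarith only [has.1]) hy hc₁0 (by linarith only [has.1, hαl])
        linarith only [hQeq, h4, hq]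
      have hkeyneg : ∀ a' b', t₁ ≤ a' → a' ≤ b' → b' ≤ w →
          (∀ s ∈ Set.Ioc a' b', c₁ ≤ -(Real.exp (l*(s-t₀)) * x i s)) →
          (∫ s in a'..b', -G s) ≤ 0 := by
        intro a' b' h1 h2 h3 hyge
        rw [intervalIntegral.integral_of_le h2]
        refine setIntegral_nonpos measurableSet_Ioc (fun s hs => ?_)
        have hs1 : t₁ < s := lt_of_le_of_lt h1 hs.1
        have hs2 : s ≤ w := le_trans hs.2 h3
        have hq := (abs_le.1 (hqbd s hs1 hs2)).1
        have hy := hyge s hs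
        have has := ha_bd i s (by linarith [ht₀])
        have h4a : (a i s - l) * (Real.exp (l*(s-t₀)) * x i s) ≤ (a i s - l) * (-c₁) := by
          refine mul_le_mul_of_nonneg_left (by linarith only [hy]) (by linarith only [has.1, hαl])
        have h4b : (a i s - l) * (-c₁) ≤ (α i - l) * (-c₁) := by
          refine mul_le_mul_of_nonpos_right (by linarith only [has.1]) (by linarith only [hc₁0])
        linarith only [hQeq, h4a, h4b, hq]
      have heqyneg : ∀ v ∈ Set.Icc t₁ w, -(Real.exp (l*(v-t₀)) * x i v)
          = -(Real.exp (l*(t₁-t₀)) * x i t₁) + ∫ s in t₁..v, -G s := by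
        intro v hv
        rw [intervalIntegral.integral_neg, heqy v hv]; ring
      have hup := thresh_aux (hyc i) hwlb hGint heqy hkeypos
      have hdn := thresh_aux (hyc i).neg hwlb
        (fun a' b' h1 h2 h3 => (hGint a' b' h1 h2 h3).neg) heqyneg hkeyneg
      have hyt₁ : |Real.exp (l*(t₁-t₀)) * x i t₁| ≤ W₂ := by
        rw [hyabs]
        exact hinit i t₁ (by linarith) le_rfl
      rw [← hyabs i w]
      rcases abs_cases (Real.exp (l*(w-t₀)) * x i w) with ⟨he, _⟩ | ⟨he, _⟩
      · rw [he]
        refine lt_of_le_of_lt hup (max_lt ?_ hc₁c)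
        exact lt_of_le_of_lt (le_trans (le_abs_self _) hyt₁) (hW₂c i)
      · rw [he]
        refine lt_of_le_of_lt hdn (max_lt ?_ hc₁c)
        exact lt_of_le_of_lt (le_trans (neg_le_abs _) hyt₁) (hW₂c i)
    have hopen : ∀ᶠ s in nhds w, ∀ i, Real.exp (l*(s-t₀)) * |x i s| < c i := by
      rw [Filter.eventually_all]
      intro i
      have htd : Filter.Tendsto (fun s => Real.exp (l*(s-t₀)) * |x i s|) (nhds w)
          (nhds (Real.exp (l*(w-t₀)) * |x i w|)) :=
        ((Real.continuous_exp.comp (by fun_prop)).mul (continuous_abs.comp (hxc i))).tendsto w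
      exact htd.eventually_lt_const (himp i)
    obtain ⟨η, hη0, hη⟩ := Metric.eventually_nhds_iff.1 hopen
    obtain ⟨s', hs'A, hs'lt⟩ := Real.lt_sInf_add_pos hAne (half_pos hη0)
    have h1 : w ≤ s' := csInf_le hAbdd hs'A
    have h2 : dist s' w < η := by
      rw [Real.dist_eq, abs_of_nonneg (by linarith)]
      rw [← hwdef] at hs'lt
      linarith
    obtain ⟨i2, hi2⟩ := hs'A.2
    exact absurd (hη h2 i2) (not_lt.2 hi2.le)
  -- ===== conclusion =====
  have hMgoal : nrm t ≤ Real.exp (2*l*r) * 2^N * dmax * Real.exp (-l * (t - t₀)) * (nrm t₀ + S₀) := by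
    have hnt₀ : 0 ≤ nrm t₀ := norm_nonneg _
    rcases le_or_gt t t₁ with hc | hc
    · have h1 : ∀ i, |x i t| ≤ 2^N * S₀ := fun i =>
        hW₁ i t (by linarith) (by rw [ht₁def] at hc; linarith)
      have h2 : nrm t ≤ 2^N * S₀ := by
        rw [hnrmdef]
        refine (pi_norm_le_iff_of_nonneg (by positivity)).2 (fun i => ?_)
        rw [Real.norm_eq_abs]; exact h1 i
      have h3 : Real.exp (l*r) ≤ Real.exp (2*l*r) * Real.exp (-l*(t-t₀)) := by
        rw [← Real.exp_add]
        refine Real.exp_le_exp.2 ?_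
        have ht' : t - t₀ ≤ r := by rw [ht₁def] at hc; linarith
        have h4 := mul_le_mul_of_nonneg_left ht' hl0.le
        linarith only [h4]
      have h4 : (1:ℝ) ≤ Real.exp (l*r) := Real.one_le_exp (by positivity)
      calc nrm t ≤ 2^N * S₀ := h2
        _ ≤ (Real.exp (2*l*r) * Real.exp (-l*(t-t₀))) * (2^N * (dmax * (nrm t₀ + S₀))) := by
            have h5 : S₀ ≤ dmax * (nrm t₀ + S₀) := by nlinarith only [hdmax1, hnt₀, hS₀0]
            have h6 : (1:ℝ) ≤ Real.exp (2*l*r) * Real.exp (-l*(t-t₀)) := le_trans h4 h3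
            have h7 : (0:ℝ) < 2^N := pow_pos (by norm_num) N
            have hX : (2:ℝ)^N * S₀ ≤ 2^N * (dmax * (nrm t₀ + S₀)) :=
              mul_le_mul_of_nonneg_left h5 h7.le
            have hX0 : (0:ℝ) ≤ 2^N * (dmax * (nrm t₀ + S₀)) := by positivity
            nlinarith only [hX, h6, hX0]
        _ = Real.exp (2*l*r) * 2^N * dmax * Real.exp (-l * (t - t₀)) * (nrm t₀ + S₀) := by ring
    · have h1 : ∀ i, Real.exp (l*(t-t₀)) * |x i t| ≤ W₂ * d i := by
        intro i
        refine le_of_forall_pos_le_add (fun ε' hε' => ?_)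
        have h2 := hmain (ε'/d i) (div_pos hε' (hdpos i)) t hc.le i
        have h3 : (W₂ + ε'/d i) * d i = W₂ * d i + ε' := by
          rw [add_mul, div_mul_cancel₀ _ (ne_of_gt (hdpos i))]
        linarith [h2, h3.le]
      have h2 : ∀ i, |x i t| ≤ W₂ * dmax * Real.exp (-l*(t-t₀)) := by
        intro i
        have h3 := h1 i
        have h4 : W₂ * d i ≤ W₂ * dmax := mul_le_mul_of_nonneg_left (hdmax i) hW₂0
        have h5 : Real.exp (l*(t-t₀)) * |x i t| ≤ W₂ * dmax := le_trans h3 h4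
        have h6 := mul_le_mul_of_nonneg_left h5 (Real.exp_pos (-l*(t-t₀))).le
        have h7 : Real.exp (-l*(t-t₀)) * (Real.exp (l*(t-t₀)) * |x i t|) = |x i t| := by
          rw [← mul_assoc, ← Real.exp_add,
            show -l*(t-t₀) + l*(t-t₀) = (0:ℝ) by ring, Real.exp_zero, one_mul]
        calc |x i t| = Real.exp (-l*(t-t₀)) * (Real.exp (l*(t-t₀)) * |x i t|) := h7.symm
          _ ≤ Real.exp (-l*(t-t₀)) * (W₂ * dmax) := h6
          _ = W₂ * dmax * Real.exp (-l*(t-t₀)) := by ring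
      have h8 : nrm t ≤ W₂ * dmax * Real.exp (-l*(t-t₀)) := by
        rw [hnrmdef]
        refine (pi_norm_le_iff_of_nonneg (by positivity)).2 (fun i => ?_)
        rw [Real.norm_eq_abs]; exact h2 i
      have h9 : W₂ * dmax ≤ Real.exp (2*l*r) * 2^N * dmax * (nrm t₀ + S₀) := by
        have e1 : Real.exp (l*r) ≤ Real.exp (2*l*r) :=
          Real.exp_le_exp.2 (by linarith only [mul_nonneg hl0.le hr0])
        have e2 : (2:ℝ)^N * S₀ ≤ 2^N * (nrm t₀ + S₀) :=
          mul_le_mul_of_nonneg_left (by linarith) (by positivity)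
        calc W₂ * dmax = Real.exp (l*r) * (2^N * S₀) * dmax := by rw [hW₂def]
          _ ≤ Real.exp (2*l*r) * (2^N * S₀) * dmax := by
              refine mul_le_mul_of_nonneg_right (mul_le_mul_of_nonneg_right e1 (by positivity)) hdmax0.le
          _ ≤ Real.exp (2*l*r) * (2^N * (nrm t₀ + S₀)) * dmax := by
              refine mul_le_mul_of_nonneg_right (mul_le_mul_of_nonneg_left e2 (Real.exp_pos _).le) hdmax0.le
          _ = Real.exp (2*l*r) * 2^N * dmax * (nrm t₀ + S₀) := by ring
      calc nrm t ≤ W₂ * dmax * Real.exp (-l*(t-t₀)) := h8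
        _ ≤ (Real.exp (2*l*r) * 2^N * dmax * (nrm t₀ + S₀)) * Real.exp (-l*(t-t₀)) :=
            mul_le_mul_of_nonneg_right h9 (Real.exp_pos _).le
        _ = Real.exp (2*l*r) * 2^N * dmax * Real.exp (-l * (t - t₀)) * (nrm t₀ + S₀) := by ring
  rw [hnrmdef] at hMgoal
  exact hMgoal
end

section
/- Suppose that the m×m matrix B with entries b_ii = 1 − L_ii/α_i and b_ij = −L_ij/α_i for i ≠ j is a nonsingular M-matrix. Then the delay system with a non-delayed linear term ẋ_i(t) = −a_i(t)x_i(t) + Σ_{j=1}^m F_{ij}(t, x_j(g_{ij}(t))) is globally exponentially stable. -/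
/-!
With the weights `ξ = B⁻¹ 𝟙 ≥ 1`, the identity `B ξ = 𝟙` gives
`∑ⱼ L_ij ξ_j = α_i (ξ_i - 1) < α_i ξ_i`, and by continuity this strict inequality survives a
small decay rate `Λ > 0` together with the delay factor `e^{Λσ}`.
Then `|x_i(t)| < ξ_i K e^{-Λ(t - t₀)}` whenever `K` exceeds the initial data: at a first time
where some `|x_i|` touched its barrier, integrating the equation over a short interval before
that time would show that `|x_i|` grew more slowly than the barrier, which is impossible.
-/

open MeasureTheory Set Filter Topology Matrix

theorem forall_lt_of_forall_le_imp_lt {ι : Type*} [Finite ι] {f φ : ι → ℝ → ℝ} {t₀ : ℝ}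
    (hf : ∀ i, Continuous (f i)) (hφ : ∀ i, Continuous (φ i)) (h₀ : ∀ i, f i t₀ < φ i t₀)
    (hstep : ∀ t, t₀ < t → (∀ s ∈ Icc t₀ t, ∀ i, f i s ≤ φ i s) → ∀ i, f i t < φ i t) :
    ∀ t, t₀ ≤ t → ∀ i, f i t < φ i t := by
  by_contra! hT
  set T := {t | t₀ ≤ t ∧ ∃ i, φ i t ≤ f i t}
  have hT_closed : IsClosed T := by
    have : T = Ici t₀ ∩ ⋃ i, {t | φ i t ≤ f i t} := by ext; simp [T]
    rw [this]
    exact isClosed_Ici.inter (isClosed_iUnion_of_finite fun i => isClosed_le (hφ i) (hf i))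
  have hT_bdd : BddBelow T := ⟨t₀, fun _ ht => ht.1⟩
  obtain ⟨ht₀, i, hi⟩ : sInf T ∈ T := hT_closed.csInf_mem hT hT_bdd
  have hbefore : ∀ s ∈ Ico t₀ (sInf T), ∀ j, f j s ≤ φ j s := fun s hs j => by
    by_contra! h
    exact hs.2.not_ge (csInf_le hT_bdd ⟨hs.1, j, h.le⟩)
  have hpos : t₀ < sInf T := ht₀.lt_of_ne fun h => (h₀ i).not_ge (h ▸ hi)
  have hupto : ∀ s ∈ Icc t₀ (sInf T), ∀ j, f j s ≤ φ j s := fun s hs j =>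
    (isClosed_le (hf j) (hφ j)).closure_subset_iff.mpr (fun s hs => hbefore s hs j)
      (by rwa [closure_Ico hpos.ne])
  exact (hstep _ hpos hupto i).not_ge hi

theorem sub_lt_sub_of_le_of_lt_deriv {y h H φ φ' : ℝ → ℝ} {a b : ℝ} (hab : a < b)
    (hy : y b - y a = ∫ u in a..b, h u) (hh : IntervalIntegrable h volume a b)
    (hH : ContinuousOn H (Icc a b)) (hφ : ∀ u ∈ Icc a b, HasDerivAt φ (φ' u) u)
    (hφ' : ContinuousOn φ' (Icc a b))
    (hle : ∀ u ∈ Ioo a b, h u ≤ H u) (hlt : ∀ u ∈ Ioc a b, H u < φ' u) :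
    y b - y a < φ b - φ a :=
  calc y b - y a = ∫ u in a..b, h u := hy
    _ ≤ ∫ u in a..b, H u :=
      intervalIntegral.integral_mono_on_of_le_Ioo hab.le hh (hH.intervalIntegrable_of_Icc hab.le)
        hle
    _ < ∫ u in a..b, φ' u :=
      intervalIntegral.integral_lt_integral_of_continuousOn_of_le_of_exists_lt hab hH hφ'
        (fun u hu => (hlt u hu).le) ⟨b, right_mem_Icc.2 hab.le, hlt b (right_mem_Ioc.2 hab)⟩
    _ = φ b - φ a :=
      intervalIntegral.integral_eq_sub_of_hasDerivAt (by rwa [uIcc_of_le hab.le])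
        (hφ'.intervalIntegrable_of_Icc hab.le)

theorem sub_eq_integral_of_eq_add_integral {x f : ℝ → ℝ} {t₀ a b : ℝ}
    (hf : ∀ t, t₀ ≤ t → IntervalIntegrable f volume t₀ t)
    (hx : ∀ t, t₀ ≤ t → x t = x t₀ + ∫ s in t₀..t, f s) (ha : t₀ ≤ a) (hb : t₀ ≤ b) :
    x b - x a = ∫ s in a..b, f s := by
  rw [hx b hb, hx a ha, ← intervalIntegral.integral_interval_sub_left (hf b hb) (hf a ha)]
  ring

theorem exists_pos_forall_mul_add_exp_mul_lt {ι : Type*} [Finite ι] {c p q : ι → ℝ} (σ : ℝ)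
    (h : ∀ i, p i < q i) : ∃ Λ > 0, ∀ i, Λ * c i + Real.exp (Λ * σ) * p i < q i := by
  have hnear : ∀ᶠ Λ in 𝓝 0, ∀ i, Λ * c i + Real.exp (Λ * σ) * p i < q i := by
    refine eventually_all.2 fun i => ContinuousAt.eventually_lt (by fun_prop)
      continuousAt_const ?_
    simpa using h i
  obtain ⟨Λ, hΛ, hΛpos⟩ := ((hnear.filter_mono nhdsWithin_le_nhds).and self_mem_nhdsWithin).exists
    (f := 𝓝[>] (0 : ℝ))
  exact ⟨Λ, hΛpos, hΛ⟩

theorem sum_mul_eq_of_mulVec_eq_one {ι : Type*} [Fintype ι] [DecidableEq ι]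
    {B : Matrix ι ι ℝ} {L : ι → ι → ℝ} {α ξ : ι → ℝ}
    (hB : ∀ i j, B i j = if i = j then 1 - L i i / α i else -(L i j) / α i)
    (hBξ : B *ᵥ ξ = 1) (i : ι) (hα : α i ≠ 0) : ∑ j, L i j * ξ j = α i * (ξ i - 1) := by
  have hrow : (B *ᵥ ξ) i = ξ i - (∑ j, L i j * ξ j) / α i := by
    have hB' : ∀ j, B i j = (if i = j then 1 else 0) - L i j / α i := fun j => by
      rw [hB]; split_ifs with h <;> [subst h; skip] <;> ring
    simp only [Matrix.mulVec, dotProduct, hB', sub_mul, ite_mul, one_mul, zero_mul,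
      Finset.sum_sub_distrib, Finset.sum_ite_eq, Finset.mem_univ, if_true, Finset.sum_div,
      div_mul_eq_mul_div]
  rw [hBξ, Pi.one_apply] at hrow
  field_simp at hrow
  linarith

theorem hasDerivAt_mul_exp_neg_mul_sub (c Λ t₀ s : ℝ) :
    HasDerivAt (fun s => c * Real.exp (-Λ * (s - t₀))) (-Λ * (c * Real.exp (-Λ * (s - t₀)))) s :=
  ((((hasDerivAt_id' s).sub_const t₀).const_mul (-Λ)).exp.const_mul c).congr_deriv (by ring)

theorem exists_abs_eq_one_mul_eq_abs (r : ℝ) : ∃ s : ℝ, |s| = 1 ∧ s * r = |r| := by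
  rcases abs_choice r with h | h
  exacts [⟨1, by simp, by rw [h, one_mul]⟩, ⟨-1, by simp, by rw [h]; ring⟩]

section DelaySystem

variable {ι : Type*} [Fintype ι]

def delayRHS (a : ι → ℝ → ℝ) (F : ι → ι → ℝ → ℝ → ℝ) (g : ι → ι → ℝ → ℝ) (x : ι → ℝ → ℝ)
    (i : ι) (s : ℝ) : ℝ :=
  -(a i s) * x i s + ∑ j, F i j s (x j (g i j s))

structure IsDelaySolution (a : ι → ℝ → ℝ) (F : ι → ι → ℝ → ℝ → ℝ) (g : ι → ι → ℝ → ℝ)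
    (t₀ : ℝ) (x : ι → ℝ → ℝ) : Prop where
  continuous : ∀ i, Continuous (x i)
  intervalIntegrable : ∀ i t, t₀ ≤ t → IntervalIntegrable (delayRHS a F g x i) volume t₀ t
  eq_add_integral : ∀ i t, t₀ ≤ t → x i t = x i t₀ + ∫ s in t₀..t, delayRHS a F g x i s

variable {a : ι → ℝ → ℝ} {α : ι → ℝ} {F : ι → ι → ℝ → ℝ → ℝ} {L : ι → ι → ℝ}
  {g : ι → ι → ℝ → ℝ} {x : ι → ℝ → ℝ}

theorem mul_delayRHS_le {s₁ : ℝ} (hs₁ : |s₁| = 1) {i : ι} {u : ℝ} (ha : α i ≤ a i u)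
    (hF : ∀ j v, |F i j u v| ≤ L i j * |v|) (hL : ∀ j, 0 ≤ L i j) (hy : 0 ≤ s₁ * x i u)
    {D : ι → ℝ} (hD : ∀ j, |x j (g i j u)| ≤ D j) :
    s₁ * delayRHS a F g x i u ≤ -α i * (s₁ * x i u) + ∑ j, L i j * D j :=
  calc s₁ * delayRHS a F g x i u
      = -a i u * (s₁ * x i u) + s₁ * ∑ j, F i j u (x j (g i j u)) := by
        unfold delayRHS; ring
    _ ≤ -α i * (s₁ * x i u) + |∑ j, F i j u (x j (g i j u))| := by
        gcongr
        exact (le_abs_self _).trans (by rw [abs_mul, hs₁, one_mul])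
    _ ≤ -α i * (s₁ * x i u) + ∑ j, L i j * D j := by
        gcongr
        refine (Finset.abs_sum_le_sum_abs _ _).trans (Finset.sum_le_sum fun j _ => ?_)
        exact (hF j _).trans (mul_le_mul_of_nonneg_left (hD j) (hL j))

theorem abs_le_exp_mul_of_le_barrier {f : ℝ → ℝ} {c Λ σ t₀ t u v : ℝ} (hc : 0 ≤ c) (hΛ : 0 ≤ Λ)
    (hf : ∀ s ∈ Icc (t₀ - σ) t, |f s| ≤ c * Real.exp (-Λ * (s - t₀))) (hu : u ∈ Icc t₀ t)
    (hv : 0 ≤ u - v ∧ u - v ≤ σ) :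
    |f v| ≤ Real.exp (Λ * σ) * (c * Real.exp (-Λ * (u - t₀))) :=
  calc |f v| ≤ c * Real.exp (-Λ * (v - t₀)) := hf v ⟨by linarith [hu.1], by linarith [hu.2]⟩
    _ ≤ c * Real.exp (Λ * σ + -Λ * (u - t₀)) := by gcongr; nlinarith
    _ = Real.exp (Λ * σ) * (c * Real.exp (-Λ * (u - t₀))) := by rw [Real.exp_add]; ring

theorem abs_lt_barrier_of_le_barrier {ξ : ι → ℝ} {σ Λ K t₀ t : ℝ}
    (ha : ∀ i t, 0 ≤ t → α i ≤ a i t) (hF : ∀ i j t u, 0 ≤ t → |F i j t u| ≤ L i j * |u|)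
    (hg : ∀ i j t, 0 ≤ t → 0 ≤ t - g i j t ∧ t - g i j t ≤ σ) (hL : ∀ i j, 0 ≤ L i j)
    (hξ : ∀ i, 0 < ξ i) (hK : 0 < K) (hΛ : 0 ≤ Λ)
    (hrate : ∀ i, Λ * ξ i + Real.exp (Λ * σ) * ∑ j, L i j * ξ j < α i * ξ i)
    (ht₀ : 0 ≤ t₀) (hx : IsDelaySolution a F g t₀ x)
    (ht : t₀ < t) (hle : ∀ s ∈ Icc (t₀ - σ) t, ∀ j, |x j s| ≤ ξ j * K * Real.exp (-Λ * (s - t₀)))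
    (i : ι) : |x i t| < ξ i * K * Real.exp (-Λ * (t - t₀)) := by
  by_contra! htouch
  have hxc := hx.continuous
  set φ : ι → ℝ → ℝ := fun j s => ξ j * K * Real.exp (-Λ * (s - t₀))
  have hφ_pos : ∀ j s, 0 < φ j s := fun j s => by have := hξ j; positivity
  have hσ : 0 ≤ σ := by linarith [hg i i t₀ ht₀]
  obtain ⟨s₁, hs₁, hs₁x⟩ := exists_abs_eq_one_mul_eq_abs (x i t)
  set y : ℝ → ℝ := fun u => s₁ * x i u with hy_def
  have hy_le : ∀ u, y u ≤ |x i u| := fun u =>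
    (le_abs_self _).trans (by rw [abs_mul, hs₁, one_mul])
  have hyt : y t = φ i t :=
    le_antisymm ((hy_le t).trans (hle t ⟨by linarith, le_rfl⟩ i))
      (show φ i t ≤ s₁ * x i t from hs₁x ▸ htouch)
  set H : ℝ → ℝ := fun u => -α i * y u + ∑ j, L i j * (Real.exp (Λ * σ) * φ j u)
  have hH_lt : H t < -Λ * φ i t := by
    have hsum : ∑ j, L i j * (Real.exp (Λ * σ) * φ j t) =
        Real.exp (Λ * σ) * (∑ j, L i j * ξ j) * (K * Real.exp (-Λ * (t - t₀))) := by
      rw [Finset.mul_sum, Finset.sum_mul]; exact Finset.sum_congr rfl fun j _ => by ring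
    have : H t - -Λ * φ i t = (Λ * ξ i + Real.exp (Λ * σ) * ∑ j, L i j * ξ j - α i * ξ i) *
        (K * Real.exp (-Λ * (t - t₀))) := by
      show -α i * y t + ∑ j, L i j * (Real.exp (Λ * σ) * φ j t) - -Λ * φ i t = _
      rw [hyt, hsum]; ring
    have hc : 0 < K * Real.exp (-Λ * (t - t₀)) := by positivity
    linarith [mul_neg_of_neg_of_pos (sub_neg.2 (hrate i)) hc]
  have hnear : ∀ᶠ u in 𝓝 t, 0 < y u ∧ H u < -Λ * φ i u :=
    (continuousAt_const.eventually_lt (by fun_prop) (hyt ▸ hφ_pos i t)).and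
      (ContinuousAt.eventually_lt (by fun_prop) (by fun_prop) hH_lt)
  obtain ⟨l, ⟨hl₀, hlt⟩, hsub⟩ := exists_Ioc_subset_of_mem_nhds' hnear ht
  have hcmp : y t - y l < φ i t - φ i l := by
    have hint := (hx.intervalIntegrable i l hl₀).symm.trans (hx.intervalIntegrable i t ht.le)
    refine sub_lt_sub_of_le_of_lt_deriv hlt (h := fun u => s₁ * delayRHS a F g x i u) ?_
      (hint.const_mul s₁) (by fun_prop) (fun u _ => ?_) (by fun_prop) (fun u hu => ?_)
      (fun u hu => (hsub hu).2)
    · rw [hy_def, ← mul_sub, intervalIntegral.integral_const_mul,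
        sub_eq_integral_of_eq_add_integral (hx.intervalIntegrable i) (hx.eq_add_integral i) hl₀
          ht.le]
    · exact hasDerivAt_mul_exp_neg_mul_sub _ _ _ _
    · have hu₀ : 0 ≤ u := by linarith [hu.1]
      exact mul_delayRHS_le hs₁ (ha i u hu₀) (fun j v => hF i j u v hu₀) (hL i)
        (hsub ⟨hu.1, hu.2.le⟩).1.le fun j => abs_le_exp_mul_of_le_barrier
          (by have := hξ j; positivity) hΛ (fun s hs => hle s hs j) ⟨by linarith [hu.1], hu.2.le⟩
          (hg i j u hu₀)
  linarith [hy_le l, hle l ⟨by linarith, hlt.le⟩ i]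

theorem abs_lt_barrier {ξ : ι → ℝ} {σ Λ K t₀ : ℝ}
    (ha : ∀ i t, 0 ≤ t → α i ≤ a i t) (hF : ∀ i j t u, 0 ≤ t → |F i j t u| ≤ L i j * |u|)
    (hg : ∀ i j t, 0 ≤ t → 0 ≤ t - g i j t ∧ t - g i j t ≤ σ) (hL : ∀ i j, 0 ≤ L i j)
    (hξ : ∀ i, 1 ≤ ξ i) (hK : 0 < K) (hΛ : 0 ≤ Λ)
    (hrate : ∀ i, Λ * ξ i + Real.exp (Λ * σ) * ∑ j, L i j * ξ j < α i * ξ i)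
    (ht₀ : 0 ≤ t₀) (hx : IsDelaySolution a F g t₀ x)
    (hK₀ : ∀ i, |x i t₀| < K) (hinit : ∀ i, ∀ s ∈ Icc (t₀ - σ) t₀, |x i s| ≤ K) :
    ∀ t, t₀ ≤ t → ∀ i, |x i t| < ξ i * K * Real.exp (-Λ * (t - t₀)) := by
  have hinit' : ∀ s ∈ Icc (t₀ - σ) t₀, ∀ i, |x i s| ≤ ξ i * K * Real.exp (-Λ * (s - t₀)) :=
    fun s hs i => calc
      |x i s| ≤ 1 * K * 1 := by simpa using hinit i s hs
      _ ≤ ξ i * K * Real.exp (-Λ * (s - t₀)) := by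
        have := hξ i
        gcongr
        exact Real.one_le_exp (by nlinarith [hs.2])
  refine forall_lt_of_forall_le_imp_lt (f := fun i t => |x i t|) (fun i => (hx.continuous i).abs)
    (fun i => by fun_prop) (fun i => ?_) fun t ht hle i => ?_
  · simpa using (hK₀ i).trans_le (le_mul_of_one_le_left hK.le (hξ i))
  · refine abs_lt_barrier_of_le_barrier ha hF hg hL (fun i => one_pos.trans_le (hξ i)) hK hΛ
      hrate ht₀ hx ht (fun s hs => ?_) i
    rcases le_total s t₀ with hst | hst
    exacts [hinit' s ⟨hs.1, hst⟩, hle s ⟨hst, hs.2⟩]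

theorem abs_le_barrier {ξ : ι → ℝ} {σ Λ K t₀ : ℝ}
    (ha : ∀ i t, 0 ≤ t → α i ≤ a i t) (hF : ∀ i j t u, 0 ≤ t → |F i j t u| ≤ L i j * |u|)
    (hg : ∀ i j t, 0 ≤ t → 0 ≤ t - g i j t ∧ t - g i j t ≤ σ) (hL : ∀ i j, 0 ≤ L i j)
    (hξ : ∀ i, 1 ≤ ξ i) (hK : 0 ≤ K) (hΛ : 0 ≤ Λ)
    (hrate : ∀ i, Λ * ξ i + Real.exp (Λ * σ) * ∑ j, L i j * ξ j < α i * ξ i)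
    (ht₀ : 0 ≤ t₀) (hx : IsDelaySolution a F g t₀ x)
    (hK₀ : ∀ i, |x i t₀| ≤ K) (hinit : ∀ i, ∀ s ∈ Icc (t₀ - σ) t₀, |x i s| ≤ K)
    (t : ℝ) (ht : t₀ ≤ t) (i : ι) : |x i t| ≤ ξ i * K * Real.exp (-Λ * (t - t₀)) := by
  refine le_of_forall_pos_lt_add fun ε hε => ?_
  have hξ₀ : 0 < ξ i := one_pos.trans_le (hξ i)
  have hδ : 0 < ε / (ξ i * Real.exp (-Λ * (t - t₀))) := by positivity
  calc |x i t| < ξ i * (K + ε / (ξ i * Real.exp (-Λ * (t - t₀)))) * Real.exp (-Λ * (t - t₀)) :=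
        abs_lt_barrier ha hF hg hL hξ (by positivity) hΛ hrate ht₀ hx
          (fun j => (hK₀ j).trans_lt (by linarith))
          (fun j s hs => (hinit j s hs).trans (by linarith)) t ht i
    _ = ξ i * K * Real.exp (-Λ * (t - t₀)) + ε := by field_simp

end DelaySystem

theorem exists_one_le_sum_mul_lt_of_inv_pos {ι : Type*} [Fintype ι] [DecidableEq ι]
    {B : Matrix ι ι ℝ} {L : ι → ι → ℝ} {α : ι → ℝ}
    (hB : ∀ i j, B i j = if i = j then 1 - L i i / α i else -(L i j) / α i)
    (hα : ∀ i, 0 < α i) (hL : ∀ i j, 0 ≤ L i j) (hB_unit : IsUnit B.det)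
    (hB_inv : ∀ i j, 0 < B⁻¹ i j) :
    ∃ ξ : ι → ℝ, (∀ i, 1 ≤ ξ i) ∧ ∀ i, ∑ j, L i j * ξ j < α i * ξ i := by
  have hBξ : B *ᵥ (B⁻¹ *ᵥ 1) = 1 := by rw [mulVec_mulVec, mul_nonsing_inv B hB_unit, one_mulVec]
  have hLξ := fun i => sum_mul_eq_of_mulVec_eq_one hB hBξ i (hα i).ne'
  have hξ_pos : ∀ i, 0 < (B⁻¹ *ᵥ 1) i := fun i =>
    Finset.sum_pos (fun j _ => by simpa using hB_inv i j) ⟨i, Finset.mem_univ i⟩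
  refine ⟨B⁻¹ *ᵥ 1, fun i => ?_, fun i => by nlinarith [hLξ i, hα i]⟩
  have : 0 ≤ α i * ((B⁻¹ *ᵥ 1) i - 1) :=
    hLξ i ▸ Finset.sum_nonneg fun j _ => mul_nonneg (hL i j) (hξ_pos j).le
  nlinarith [hα i]

theorem stmt2_general
    (m : ℕ) (hm : 0 < m)
    (a : Fin m → ℝ → ℝ) (α A : Fin m → ℝ)
    (F : Fin m → Fin m → ℝ → ℝ → ℝ) (L : Fin m → Fin m → ℝ)
    (g : Fin m → Fin m → ℝ → ℝ) (σ : ℝ)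
    -- (a1)
    (hα : ∀ i, 0 < α i)
    (ha_bd : ∀ i t, 0 ≤ t → α i ≤ a i t ∧ a i t ≤ A i)
    -- (a2)
    (hF_bd : ∀ i j t u, 0 ≤ t → |F i j t u| ≤ L i j * |u|)
    -- (a3)
    (hg : ∀ i j t, 0 ≤ t → 0 ≤ t - g i j t ∧ t - g i j t ≤ σ)
    -- the matrix B of (5)
    (B : Matrix (Fin m) (Fin m) ℝ)
    (hB_def : ∀ i j, B i j =
      if i = j then 1 - L i i / α i else -(L i j) / α i)
    -- B is a nonsingular M-matrix
    (hB_unit : IsUnit B.det)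
    (hB_invpos : ∀ i j, 0 < B⁻¹ i j) :
    -- global exponential stability
    ∃ M Λ : ℝ, 0 < M ∧ 0 < Λ ∧
      ∀ t₀ : ℝ, 0 ≤ t₀ → ∀ x : Fin m → ℝ → ℝ,
        (∀ i, Continuous (x i)) →
        (∀ i t, t₀ ≤ t → IntervalIntegrable
            (fun s => -(a i s) * x i s + ∑ j, F i j s (x j (g i j s)))
            volume t₀ t) →
        (∀ i t, t₀ ≤ t →
          x i t = x i t₀ + ∫ s in t₀..t,
            (-(a i s) * x i s + ∑ j, F i j s (x j (g i j s)))) →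
        ∀ t, t₀ ≤ t →
          ‖(fun i => x i t : Fin m → ℝ)‖ ≤
            M * Real.exp (-Λ * (t - t₀)) *
              (‖(fun i => x i t₀ : Fin m → ℝ)‖ +
                sSup ((fun s => ‖(fun i => x i s : Fin m → ℝ)‖) ''
                  Set.Icc (t₀ - σ) t₀)) := by
  have hL : ∀ i j, 0 ≤ L i j := fun i j =>
    (abs_nonneg _).trans (by simpa using hF_bd i j 0 1 le_rfl)
  obtain ⟨ξ, hξ, hξL⟩ := exists_one_le_sum_mul_lt_of_inv_pos hB_def hα hL hB_unit hB_invpos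
  obtain ⟨Λ, hΛ, hrate⟩ := exists_pos_forall_mul_add_exp_mul_lt σ hξL
  have hM : 0 < ∑ i, ξ i := Finset.sum_pos (fun i _ => one_pos.trans_le (hξ i))
    (Finset.univ_nonempty_iff.2 (Fin.pos_iff_nonempty.1 hm))
  refine ⟨∑ i, ξ i, Λ, hM, hΛ, fun t₀ ht₀ x hx hxi hxe t ht => ?_⟩
  set S := sSup ((fun s => ‖(fun i => x i s : Fin m → ℝ)‖) '' Icc (t₀ - σ) t₀)
  have hS : 0 ≤ S := Real.sSup_nonneg (by rintro _ ⟨s, -, rfl⟩; exact norm_nonneg _)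
  have hS_bdd : BddAbove ((fun s => ‖(fun i => x i s : Fin m → ℝ)‖) '' Icc (t₀ - σ) t₀) :=
    (isCompact_Icc.image (continuous_pi hx).norm).bddAbove
  have hcomp : ∀ j s, |x j s| ≤ ‖(fun i => x i s : Fin m → ℝ)‖ := fun j s =>
    norm_le_pi_norm (fun i => x i s) j
  refine (pi_norm_le_iff_of_nonneg (by positivity)).2 fun i => ?_
  calc ‖x i t‖ ≤ ξ i * (‖(fun i => x i t₀ : Fin m → ℝ)‖ + S) * Real.exp (-Λ * (t - t₀)) :=
        abs_le_barrier (fun i t ht => (ha_bd i t ht).1) hF_bd hg hL hξ (by positivity) hΛ.le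
          hrate ht₀ ⟨hx, hxi, hxe⟩ (fun j => (hcomp j t₀).trans (by linarith))
          (fun j s hs => (hcomp j s).trans ((le_csSup hS_bdd (mem_image_of_mem _ hs)).trans
            (by linarith [norm_nonneg (fun i => x i t₀ : Fin m → ℝ)]))) t ht i
    _ ≤ (∑ i, ξ i) * Real.exp (-Λ * (t - t₀)) * (‖(fun i => x i t₀ : Fin m → ℝ)‖ + S) := by
        rw [mul_right_comm]
        gcongr
        exact Finset.single_le_sum (fun j _ => one_pos.le.trans (hξ j)) (Finset.mem_univ i)

/-- Corollary 2.3: if the matrix `B` with `b_ii = 1 − L_ii/α_i`, `b_ij = −L_ij/α_i` (i ≠ j)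
is a nonsingular M-matrix, then the system
`ẋ_i(t) = −a_i(t) x_i(t) + Σ_j F_{ij}(t, x_j(g_{ij}(t)))` is globally exponentially stable. -/
theorem stmt2
    (m : ℕ) (hm : 0 < m)
    (a : Fin m → ℝ → ℝ) (α A : Fin m → ℝ)
    (F : Fin m → Fin m → ℝ → ℝ → ℝ) (L : Fin m → Fin m → ℝ)
    (g : Fin m → Fin m → ℝ → ℝ) (σ : ℝ)
    -- (a1)
    (ha_meas : ∀ i, Measurable (a i))
    (hα : ∀ i, 0 < α i)
    (ha_bd : ∀ i t, 0 ≤ t → α i ≤ a i t ∧ a i t ≤ A i)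
    -- (a2)
    (hF_cont : ∀ i j t, Continuous (F i j t))
    (hF_meas : ∀ i j u, Measurable fun t => F i j t u)
    (hF_bd : ∀ i j t u, 0 ≤ t → |F i j t u| ≤ L i j * |u|)
    -- (a3)
    (hg_meas : ∀ i j, Measurable (g i j))
    (hg : ∀ i j t, 0 ≤ t → 0 ≤ t - g i j t ∧ t - g i j t ≤ σ)
    -- the matrix B of (5)
    (B : Matrix (Fin m) (Fin m) ℝ)
    (hB_def : ∀ i j, B i j =
      if i = j then 1 - L i i / α i else -(L i j) / α i)
    -- B is a nonsingular M-matrix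
    (hB_offdiag : ∀ i j, i ≠ j → B i j ≤ 0)
    (hB_unit : IsUnit B.det)
    (hB_invpos : ∀ i j, 0 < B⁻¹ i j) :
    -- global exponential stability
    ∃ M Λ : ℝ, 0 < M ∧ 0 < Λ ∧
      ∀ t₀ : ℝ, 0 ≤ t₀ → ∀ x : Fin m → ℝ → ℝ,
        (∀ i, Continuous (x i)) →
        (∀ i t, t₀ ≤ t → IntervalIntegrable
            (fun s => -(a i s) * x i s + ∑ j, F i j s (x j (g i j s)))
            volume t₀ t) →
        (∀ i t, t₀ ≤ t →
          x i t = x i t₀ + ∫ s in t₀..t,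
            (-(a i s) * x i s + ∑ j, F i j s (x j (g i j s)))) →
        ∀ t, t₀ ≤ t →
          ‖(fun i => x i t : Fin m → ℝ)‖ ≤
            M * Real.exp (-Λ * (t - t₀)) *
              (‖(fun i => x i t₀ : Fin m → ℝ)‖ +
                sSup ((fun s => ‖(fun i => x i s : Fin m → ℝ)‖) ''
                  Set.Icc (t₀ - σ) t₀)) :=
  stmt2_general m hm a α A F L g σ hα ha_bd hF_bd hg B hB_def hB_unit hB_invpos
end

section
/- Suppose that the m×m matrix D with entries d_ii = 1 − A_i²σ_ii/α_i and d_ij = −(A_i A_ij σ_ii + A_ij)/α_i for i ≠ j is a nonsingular M-matrix. Then the linear delay system ẋ_i(t) = Σ_{j=1}^m a_{ij}(t)x_j(g_{ij}(t)) is exponentially stable. -/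
open MeasureTheory Set Filter

private lemma cross_lemma (y F : ℝ → ℝ) (s t c δ Y : ℝ)
    (hy : Continuous y) (hst : s ≤ t) (hδ : 0 < δ)
    (hint : IntervalIntegrable F volume s t)
    (heq : ∀ p q, s ≤ p → p ≤ q → q ≤ t → y q = y p + ∫ u in p..q, F u)
    (hF : ∀ u, s ≤ u → u ≤ t → c ≤ y u → F u ≤ -δ)
    (hys : y s ≤ Y) :
    y t ≤ max c (Y - δ * (t - s)) := by
  by_cases hex : ∃ u, u ∈ Icc s t ∧ y u ≤ c
  · refine le_max_of_le_left ?_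
    by_contra hyt
    push_neg at hyt
    set S : Set ℝ := Icc s t ∩ {u | y u ≤ c} with hSdef
    have hSclosed : IsClosed S := isClosed_Icc.inter (isClosed_le hy continuous_const)
    have hSne : S.Nonempty := by obtain ⟨u, hu1, hu2⟩ := hex; exact ⟨u, hu1, hu2⟩
    have hSbdd : BddAbove S := BddAbove.mono inter_subset_left bddAbove_Icc
    set r := sSup S with hrdef
    have hrS : r ∈ S := hSclosed.csSup_mem hSne hSbdd
    have hr1 : s ≤ r := hrS.1.1
    have hr2 : r ≤ t := hrS.1.2
    have hyr : y r ≤ c := hrS.2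
    have hFneg : ∀ u ∈ Ioc r t, F u ≤ 0 := by
      intro u hu
      have hu1 : s ≤ u := le_trans hr1 hu.1.le
      have hu2 : u ≤ t := hu.2
      have hyu : c ≤ y u := by
        by_contra hyu
        push_neg at hyu
        have : u ∈ S := ⟨⟨hu1, hu2⟩, hyu.le⟩
        exact absurd (le_csSup hSbdd this) (not_le.mpr hu.1)
      linarith [hF u hu1 hu2 hyu]
    have hint0 : (∫ u in r..t, F u) ≤ 0 := by
      rw [intervalIntegral.integral_of_le hr2]
      refine integral_nonpos_of_ae ?_
      filter_upwards [ae_restrict_mem measurableSet_Ioc] with u hu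
      exact hFneg u hu
    have := heq r t hr1 hr2 le_rfl
    linarith
  · push_neg at hex
    have h1 : ∀ u ∈ Icc s t, F u ≤ -δ := fun u hu =>
      hF u hu.1 hu.2 (hex u hu).le
    have h2 : (∫ u in s..t, F u) ≤ ∫ _ in s..t, (-δ) :=
      intervalIntegral.integral_mono_on hst hint intervalIntegrable_const h1
    rw [intervalIntegral.integral_const, smul_eq_mul] at h2
    have h3 := heq s t le_rfl hst le_rfl
    refine le_max_of_le_right ?_
    nlinarith [h2, hys, h3]

set_option maxHeartbeats 1000000 in

/-- Corollary 2.4: if the matrix `D` with `d_ii = 1 − A_i²σ_ii/α_i` and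
`d_ij = −(A_i A_ij σ_ii + A_ij)/α_i` (i ≠ j) is a nonsingular M-matrix, then the linear
delay system `ẋ_i(t) = Σ_j a_{ij}(t) x_j(g_{ij}(t))` is exponentially stable. -/
theorem stmt3
    (m : ℕ) (hm : 0 < m)
    (a : Fin m → Fin m → ℝ → ℝ) (α A : Fin m → ℝ) (Aoff : Fin m → Fin m → ℝ)
    (g : Fin m → Fin m → ℝ → ℝ) (σ : Fin m → Fin m → ℝ)
    (ha_meas : ∀ i j, Measurable (a i j))
    (hα : ∀ i, 0 < α i)
    (ha_diag : ∀ i t, 0 ≤ t → α i ≤ -(a i i t) ∧ -(a i i t) ≤ A i)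
    (ha_off : ∀ i j, i ≠ j → ∀ t, 0 ≤ t → |a i j t| ≤ Aoff i j)
    (hg_meas : ∀ i j, Measurable (g i j))
    (hg : ∀ i j t, 0 ≤ t → 0 ≤ t - g i j t ∧ t - g i j t ≤ σ i j)
    -- the matrix D of (7)
    (D : Matrix (Fin m) (Fin m) ℝ)
    (hD_def : ∀ i j, D i j =
      if i = j then 1 - A i ^ 2 * σ i i / α i
      else -(A i * Aoff i j * σ i i + Aoff i j) / α i)
    -- D is a nonsingular M-matrix
    (hD_offdiag : ∀ i j, i ≠ j → D i j ≤ 0)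
    (hD_unit : IsUnit D.det)
    (hD_invpos : ∀ i j, 0 < D⁻¹ i j) :
    -- exponential stability
    ∃ M Λ : ℝ, 0 < M ∧ 0 < Λ ∧
      ∀ t₀ : ℝ, 0 ≤ t₀ → ∀ x : Fin m → ℝ → ℝ,
        (∀ i, Continuous (x i)) →
        (∀ i t, t₀ ≤ t → IntervalIntegrable
            (fun s => ∑ j, a i j s * x j (g i j s)) volume t₀ t) →
        (∀ i t, t₀ ≤ t →
          x i t = x i t₀ + ∫ s in t₀..t, ∑ j, a i j s * x j (g i j s)) →
        ∀ t, t₀ ≤ t →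
          ‖(fun i => x i t : Fin m → ℝ)‖ ≤
            M * Real.exp (-Λ * (t - t₀)) *
              (‖(fun i => x i t₀ : Fin m → ℝ)‖ +
                sSup ((fun s => ‖(fun i => x i s : Fin m → ℝ)‖) ''
                  Set.Icc (t₀ - ⨆ i, ⨆ j, σ i j) t₀)) := by
  haveI : Nonempty (Fin m) := Fin.pos_iff_nonempty.mp hm
  -- basic sign facts
  have hσ0 : ∀ i j, 0 ≤ σ i j := by
    intro i j
    have h := hg i j 0 le_rfl
    linarith [h.1, h.2]
  have hαA : ∀ i, α i ≤ A i := by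
    intro i
    have h := ha_diag i 0 le_rfl
    linarith [h.1, h.2]
  have hApos : ∀ i, 0 < A i := fun i => lt_of_lt_of_le (hα i) (hαA i)
  have hAoff0 : ∀ i j, i ≠ j → 0 ≤ Aoff i j := fun i j hij =>
    le_trans (abs_nonneg _) (ha_off i j hij 0 le_rfl)
  have hbddf : ∀ f : Fin m → ℝ, BddAbove (Set.range f) := fun f =>
    (Set.finite_range f).bddAbove
  -- sigma bar
  set σb := ⨆ i, ⨆ j, σ i j with hσbdef
  have hσble : ∀ i j, σ i j ≤ σb := by
    intro i j
    refine le_trans (le_ciSup (hbddf (σ i)) j) ?_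
    exact le_ciSup (hbddf fun i' => ⨆ j', σ i' j') i
  have hσb0 : 0 ≤ σb := le_trans (hσ0 (Classical.arbitrary _) (Classical.arbitrary _))
    (hσble _ _)
  -- the weight vector
  set w : Fin m → ℝ := D⁻¹.mulVec (fun _ => (1:ℝ)) with hwdef
  have hDw : D.mulVec w = fun _ => (1:ℝ) := by
    rw [hwdef, Matrix.mulVec_mulVec, Matrix.mul_nonsing_inv _ hD_unit, Matrix.one_mulVec]
  have hDw_i : ∀ i, ∑ j, D i j * w j = 1 := by
    intro i
    have := congrFun hDw i
    simpa [Matrix.mulVec, dotProduct] using this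
  have hwpos : ∀ i, 0 < w i := by
    intro i
    have : w i = ∑ j, D⁻¹ i j := by
      simp [hwdef, Matrix.mulVec, dotProduct]
    rw [this]
    exact Finset.sum_pos (fun j _ => hD_invpos i j) Finset.univ_nonempty
  -- key identity
  set SOff : Fin m → ℝ := fun i => ∑ j ∈ Finset.univ.erase i, Aoff i j * w j with hSOffdef
  have hSOff0 : ∀ i, 0 ≤ SOff i := by
    intro i
    refine Finset.sum_nonneg fun j hj => ?_
    have hji : j ≠ i := Finset.ne_of_mem_erase hj
    exact mul_nonneg (hAoff0 i j (Ne.symm hji)) (hwpos j).le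
  have hid : ∀ i, α i * (w i - 1) = A i ^ 2 * σ i i * w i + A i * σ i i * SOff i + SOff i := by
    intro i
    have hαne : α i ≠ 0 := (hα i).ne'
    have hsplit : D i i * w i + ∑ j ∈ Finset.univ.erase i, D i j * w j = 1 := by
      rw [Finset.add_sum_erase Finset.univ (fun j => D i j * w j) (Finset.mem_univ i)]
      exact hDw_i i
    have h2 : ∑ j ∈ Finset.univ.erase i, (A i * Aoff i j * σ i i + Aoff i j) * w j
        = A i * σ i i * SOff i + SOff i := by
      rw [hSOffdef]
      simp only [Finset.mul_sum, ← Finset.sum_add_distrib]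
      exact Finset.sum_congr rfl (fun j hj => by ring)
    have hoffsum : ∑ j ∈ Finset.univ.erase i, D i j * w j
        = -(A i * σ i i * SOff i + SOff i) / α i := by
      have h1 : ∀ j ∈ Finset.univ.erase i, D i j * w j
          = -((A i * Aoff i j * σ i i + Aoff i j) * w j) / α i := by
        intro j hj
        have hji : i ≠ j := (Finset.ne_of_mem_erase hj).symm
        rw [hD_def i j, if_neg hji]
        ring
      rw [Finset.sum_congr rfl h1, ← Finset.sum_div, ← h2]
      congr 1
      rw [← Finset.sum_neg_distrib]
    have hdd : D i i = 1 - A i ^ 2 * σ i i / α i := by rw [hD_def i i, if_pos rfl]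
    rw [hdd, hoffsum] at hsplit
    field_simp at hsplit
    linarith [hsplit]
  have hw1 : ∀ i, 1 ≤ w i := by
    intro i
    have h := hid i
    have h1 : 0 ≤ A i ^ 2 * σ i i * w i :=
      mul_nonneg (mul_nonneg (by positivity) (hσ0 i i)) (hwpos i).le
    have h2 : 0 ≤ A i * σ i i * SOff i :=
      mul_nonneg (mul_nonneg (hApos i).le (hσ0 i i)) (hSOff0 i)
    nlinarith [hα i, hSOff0 i]
  -- constants
  set wmax := ⨆ i, w i with hwmaxdef
  have hwmaxle : ∀ i, w i ≤ wmax := fun i => le_ciSup (hbddf w) i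
  have hwmax1 : 1 ≤ wmax := le_trans (hw1 _) (hwmaxle (Classical.arbitrary _))
  have hwmaxpos : 0 < wmax := lt_of_lt_of_le one_pos hwmax1
  set q : ℝ := 1 - 1 / (2 * wmax) with hqdef
  have hq2 : 1 / (2 * wmax) ≤ 1 / 2 := by
    rw [div_le_div_iff₀ (by positivity) (by norm_num)]
    linarith
  have hqpos : 0 < q := by rw [hqdef]; linarith
  have hqlt1 : q < 1 := by
    rw [hqdef]
    have : 0 < 1 / (2 * wmax) := by positivity
    linarith
  set T₀ := ⨆ i, (α i)⁻¹ with hT₀def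
  have hT₀le : ∀ i, (α i)⁻¹ ≤ T₀ := by
    intro i; rw [hT₀def]; exact le_ciSup (hbddf fun i => (α i)⁻¹) i
  have hT₀pos : 0 < T₀ := lt_of_lt_of_le (inv_pos.mpr (hα (Classical.arbitrary _))) (hT₀le _)
  set Abar : Fin m → Fin m → ℝ := fun i j => if i = j then A i else Aoff i j with hAbardef
  have hAbar_diag : ∀ i, Abar i i = A i := by intro i; simp [hAbardef]
  have hAbar_off : ∀ i j, i ≠ j → Abar i j = Aoff i j := by
    intro i j hij; simp [hAbardef, hij]
  have hAbar0 : ∀ i j, 0 ≤ Abar i j := by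
    intro i j
    by_cases hij : i = j
    · subst hij; rw [hAbar_diag]; exact (hApos i).le
    · rw [hAbar_off i j hij]; exact hAoff0 i j hij
  have hAbarbd : ∀ i j t, 0 ≤ t → |a i j t| ≤ Abar i j := by
    intro i j t ht
    by_cases hij : i = j
    · subst hij
      have h := ha_diag i t ht
      rw [hAbar_diag, abs_le]
      constructor <;> linarith [hα i, h.1, h.2]
    · rw [hAbar_off i j hij]
      exact ha_off i j hij t ht
  set B : ℝ := ⨆ i, ∑ j, Abar i j with hBdef
  have hBle : ∀ i, (∑ j, Abar i j) ≤ B := by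
    intro i; rw [hBdef]; exact le_ciSup (hbddf fun i => ∑ j, Abar i j) i
  have hBpos : 0 < B := by
    set i0 := Classical.arbitrary (Fin m)
    refine lt_of_lt_of_le ?_ (hBle i0)
    refine lt_of_lt_of_le (hApos i0) ?_
    rw [← hAbar_diag i0]
    exact Finset.single_le_sum (fun j _ => hAbar0 i0 j) (Finset.mem_univ i0)
  set L : ℝ := (2 * B)⁻¹ with hLdef
  have hLpos : 0 < L := by positivity
  have hBL : B * L = 1 / 2 := by rw [hLdef]; field_simp
  set n : ℕ := ⌈(σb + T₀) / L⌉₊ with hndef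
  have hnL : σb + T₀ ≤ n * L := by
    rw [hndef]
    rw [← div_le_iff₀ hLpos]
    exact Nat.le_ceil _
  set P₁ : ℝ := T₀ + 2 * σb with hP₁def
  have hP₁pos : 0 < P₁ := by rw [hP₁def]; linarith
  set Λ : ℝ := -Real.log q / P₁ with hΛdef
  have hΛpos : 0 < Λ := by
    rw [hΛdef]
    apply div_pos _ hP₁pos
    linarith [Real.log_neg hqpos hqlt1]
  set M : ℝ := wmax * 2 ^ n / q ^ 2 with hMdef
  have hMpos : 0 < M := by positivity
  refine ⟨M, Λ, hMpos, hΛpos, ?_⟩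
  intro t₀ ht₀ x hx hint heqn
  -- integral equation between arbitrary points ≥ t₀
  have hF1 : ∀ i p pq, t₀ ≤ p → p ≤ pq →
      x i pq = x i p + ∫ v in p..pq, ∑ j, a i j v * x j (g i j v) := by
    intro i p pq hp hppq
    have h1 := heqn i pq (le_trans hp hppq)
    have h2 := heqn i p hp
    have h3 := intervalIntegral.integral_interval_sub_left
      (hint i pq (le_trans hp hppq)) (hint i p hp)
    linarith [h1, h2, h3]
  have hsum : ∀ i v, 0 ≤ v → ∀ c : Fin m → ℝ, (∀ j, |x j (g i j v)| ≤ c j) →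
      |∑ j, a i j v * x j (g i j v)| ≤ ∑ j, Abar i j * c j := by
    intro i v hv c hc
    refine le_trans (Finset.abs_sum_le_sum_abs _ _) ?_
    refine Finset.sum_le_sum fun j _ => ?_
    rw [abs_mul]
    exact mul_le_mul (hAbarbd i j v hv) (hc j) (abs_nonneg _) (hAbar0 i j)
  -- the key one-step decay lemma
  have keyL : ∀ s' t' K, t₀ + σb ≤ s' → s' + T₀ ≤ t' → 0 ≤ K →
      (∀ j u, s' - 2*σb ≤ u → u ≤ t' → |x j u| ≤ w j * K) →
      ∀ i, |x i t'| ≤ q * (w i * K) := by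
    intro s' t' K hs' ht' hK hyp i
    have hs'0 : (0:ℝ) ≤ s' - σb := by linarith
    have hst' : s' ≤ t' := by linarith
    rcases eq_or_lt_of_le hK with hK0 | hKpos
    · have h := hyp i t' (by linarith) le_rfl
      rw [← hK0] at h ⊢
      simpa using h
    · set f : ℝ → ℝ := fun v => ∑ j, a i j v * x j (g i j v) with hfdef
      set CK : ℝ := (∑ j, Abar i j * w j) * K with hCKdef
      have hCK0 : 0 ≤ CK := by
        rw [hCKdef]
        exact mul_nonneg (Finset.sum_nonneg fun j _ =>
          mul_nonneg (hAbar0 i j) (hwpos j).le) hK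
      have hCKeq : (∑ j, Abar i j * (w j * K)) = CK := by
        rw [hCKdef, Finset.sum_mul]
        exact Finset.sum_congr rfl fun j _ => by ring
      have hfbd : ∀ v, s' - σb ≤ v → v ≤ t' → |f v| ≤ CK := by
        intro v hv1 hv2
        have hv0 : (0:ℝ) ≤ v := le_trans hs'0 hv1
        rw [hfdef, ← hCKeq]
        refine hsum i v hv0 _ fun j => ?_
        have hgv := hg i j v hv0
        exact hyp j (g i j v) (by linarith [hσble i j]) (by linarith)
      have hHbd : ∀ u, s' ≤ u → u ≤ t' → |f u - a i i u * x i u| ≤ α i * (w i - 1) * K := by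
        intro u hu1 hu2
        have hu0 : (0:ℝ) ≤ u := by linarith
        have hgu := hg i i u hu0
        have hgt₀ : t₀ ≤ g i i u := by linarith [hσble i i]
        have hdiff : |x i u - x i (g i i u)| ≤ σ i i * CK := by
          have heq2 := hF1 i (g i i u) u hgt₀ (by linarith)
          have hdd : x i u - x i (g i i u) = ∫ v in (g i i u)..u, f v := by
            rw [hfdef]; linarith [heq2]
          rw [hdd]
          have hb := intervalIntegral.norm_integral_le_of_norm_le_const
            (C := CK) (f := f) (a := g i i u) (b := u) ?_
          · rw [Real.norm_eq_abs, abs_of_nonneg hgu.1] at hb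
            have h7 : CK * (u - g i i u) ≤ CK * σ i i :=
              mul_le_mul_of_nonneg_left hgu.2 hCK0
            linarith [hb, h7]
          · intro v hv
            rw [Set.uIoc_of_le (by linarith [hgu.1] : g i i u ≤ u)] at hv
            rw [Real.norm_eq_abs]
            refine hfbd v ?_ (by linarith [hv.2])
            have := hgu.2
            have := hσble i i
            linarith [hv.1]
        have hsplit2 : f u - a i i u * x i u
            = a i i u * (x i (g i i u) - x i u)
              + ∑ j ∈ Finset.univ.erase i, a i j u * x j (g i j u) := by
          have hfu : f u = ∑ j, a i j u * x j (g i j u) := rfl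
          rw [hfu]
          have he : (∑ j, a i j u * x j (g i j u))
              = a i i u * x i (g i i u)
                + ∑ j ∈ Finset.univ.erase i, a i j u * x j (g i j u) := by
            rw [Finset.add_sum_erase Finset.univ
              (fun j => a i j u * x j (g i j u)) (Finset.mem_univ i)]
          rw [he]; ring
        have haii : |a i i u| ≤ A i := by
          have h := hAbarbd i i u hu0; rwa [hAbar_diag] at h
        have hsum2 : |∑ j ∈ Finset.univ.erase i, a i j u * x j (g i j u)| ≤ SOff i * K := by
          refine le_trans (Finset.abs_sum_le_sum_abs _ _) ?_
          have he2 : SOff i * K = ∑ j ∈ Finset.univ.erase i, Aoff i j * w j * K := by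
            rw [hSOffdef]; rw [Finset.sum_mul]
          rw [he2]
          refine Finset.sum_le_sum fun j hj => ?_
          have hji : j ≠ i := Finset.ne_of_mem_erase hj
          have hgj := hg i j u hu0
          have hxj : |x j (g i j u)| ≤ w j * K :=
            hyp j (g i j u) (by linarith [hσble i j]) (by linarith)
          rw [abs_mul]
          calc |a i j u| * |x j (g i j u)| ≤ Aoff i j * (w j * K) :=
              mul_le_mul (ha_off i j (Ne.symm hji) u hu0) hxj (abs_nonneg _)
                (hAoff0 i j (Ne.symm hji))
            _ = Aoff i j * w j * K := by ring
        have h1 : |a i i u * (x i (g i i u) - x i u)| ≤ A i * (σ i i * CK) := by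
          rw [abs_mul]
          refine mul_le_mul haii ?_ (abs_nonneg _) (hApos i).le
          rw [abs_sub_comm]
          exact hdiff
        have hCKexp : CK = (A i * w i + SOff i) * K := by
          rw [hCKdef]
          congr 1
          rw [← Finset.add_sum_erase Finset.univ (fun j => Abar i j * w j)
            (Finset.mem_univ i), hAbar_diag]
          rw [hSOffdef]
          congr 1
          exact Finset.sum_congr rfl fun j hj =>
            by rw [hAbar_off i j (Ne.symm (Finset.ne_of_mem_erase hj))]
        have hfin : A i * (σ i i * CK) + SOff i * K = α i * (w i - 1) * K := by
          rw [hCKexp]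
          linear_combination (-K) * hid i
        calc |f u - a i i u * x i u|
            ≤ |a i i u * (x i (g i i u) - x i u)|
              + |∑ j ∈ Finset.univ.erase i, a i j u * x j (g i j u)| := by
              rw [hsplit2]; exact abs_add_le _ _
          _ ≤ A i * (σ i i * CK) + SOff i * K := add_le_add h1 hsum2
          _ = α i * (w i - 1) * K := hfin
      set c : ℝ := (w i - 1/2) * K with hcdef
      set δ : ℝ := α i * K / 2 with hδdef
      have hcpos : 0 < c := by
        rw [hcdef]
        exact mul_pos (by linarith [hw1 i]) hKpos
      have hδpos : 0 < δ := by
        rw [hδdef]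
        exact div_pos (mul_pos (hα i) hKpos) two_pos
      have hintf : IntervalIntegrable f volume s' t' := by
        refine (hint i t' (by linarith)).mono_set ?_
        rw [Set.uIcc_of_le hst', Set.uIcc_of_le (by linarith : t₀ ≤ t')]
        exact Set.Icc_subset_Icc (by linarith) le_rfl
      have hm1aux : -α i * c + α i * (w i - 1) * K = -δ := by
        rw [hcdef, hδdef]; ring
      have hcross1 : x i t' ≤ max c (w i * K - δ * (t' - s')) := by
        refine cross_lemma (x i) f s' t' c δ (w i * K) (hx i) hst' hδpos hintf ?_ ?_ ?_
        · intro p pq hp hppq hpq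
          rw [hfdef]
          exact hF1 i p pq (by linarith) hppq
        · intro u hu1 hu2 hcu
          have hu0 : (0:ℝ) ≤ u := by linarith
          have hH := abs_le.mp (hHbd u hu1 hu2)
          have had := ha_diag i u hu0
          have hxu : 0 ≤ x i u := le_trans hcpos.le hcu
          have hq1 : 0 ≤ (-a i i u - α i) * x i u :=
            mul_nonneg (by linarith [had.1]) hxu
          have hq2 : α i * c ≤ α i * x i u := mul_le_mul_of_nonneg_left hcu (hα i).le
          linarith [hH.2, hq1, hq2, hm1aux]
        · exact le_trans (le_abs_self _) (hyp i s' (by linarith) hst')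
      have hcross2 : -(x i t') ≤ max c (w i * K - δ * (t' - s')) := by
        refine cross_lemma (fun u => -(x i u)) (fun u => -(f u)) s' t' c δ (w i * K)
          (hx i).neg hst' hδpos hintf.neg ?_ ?_ ?_
        · intro p pq hp hppq hpq
          show -(x i pq) = -(x i p) + ∫ u in p..pq, -(f u)
          have h := hF1 i p pq (by linarith) hppq
          rw [intervalIntegral.integral_neg, hfdef]
          linarith [h]
        · intro u hu1 hu2 hcu
          show -(f u) ≤ -δ
          replace hcu : c ≤ -(x i u) := hcu
          have hu0 : (0:ℝ) ≤ u := by linarith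
          have hH := abs_le.mp (hHbd u hu1 hu2)
          have had := ha_diag i u hu0
          have hxu : 0 ≤ -(x i u) := le_trans hcpos.le hcu
          have hq1 : 0 ≤ (-a i i u - α i) * (-(x i u)) :=
            mul_nonneg (by linarith [had.1]) hxu
          have hq2 : α i * c ≤ α i * (-(x i u)) := mul_le_mul_of_nonneg_left hcu (hα i).le
          linarith [hH.1, hq1, hq2, hm1aux]
        · exact le_trans (neg_le_abs _) (hyp i s' (by linarith) hst')
      have hmaxle : max c (w i * K - δ * (t' - s')) ≤ c := by
        refine max_le le_rfl ?_
        have ht'' : (α i)⁻¹ ≤ t' - s' := le_trans (hT₀le i) (by linarith)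
        have h9 : δ * (α i)⁻¹ ≤ δ * (t' - s') := mul_le_mul_of_nonneg_left ht'' hδpos.le
        have h10 : δ * (α i)⁻¹ = K / 2 := by
          have hαne : α i ≠ 0 := (hα i).ne'
          rw [hδdef]
          field_simp
        rw [hcdef]
        linarith [h9, h10]
      have habs : |x i t'| ≤ c :=
        abs_le.mpr ⟨by linarith [le_trans hcross2 hmaxle],
          le_trans hcross1 hmaxle⟩
      have hfinal : c ≤ q * (w i * K) := by
        have hh : w i / (2 * wmax) ≤ 1/2 := by
          rw [div_le_iff₀ (by positivity)]
          linarith [hwmaxle i]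
        have hexp : q * w i = w i - w i / (2 * wmax) := by
          rw [hqdef]; field_simp
        have hc2 : w i - 1/2 ≤ q * w i := by rw [hexp]; linarith
        calc c = (w i - 1/2) * K := hcdef
          _ ≤ (q * w i) * K := mul_le_mul_of_nonneg_right hc2 hK
          _ = q * (w i * K) := by ring
      exact le_trans habs hfinal
  -- prehistory and initial data bounds
  set N₀ : ℝ := ‖(fun i => x i t₀ : Fin m → ℝ)‖ with hN₀def
  have hN₀0 : 0 ≤ N₀ := norm_nonneg _
  have hcontnorm : Continuous fun v : ℝ => ‖(fun i => x i v : Fin m → ℝ)‖ :=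
    (continuous_pi hx).norm
  set P : ℝ := sSup ((fun s => ‖(fun i => x i s : Fin m → ℝ)‖) '' Set.Icc (t₀ - σb) t₀)
    with hPdef
  have hPbdd : BddAbove ((fun s => ‖(fun i => x i s : Fin m → ℝ)‖) '' Set.Icc (t₀ - σb) t₀) :=
    IsCompact.bddAbove_image isCompact_Icc hcontnorm.continuousOn
  have hPmem : ∀ u, t₀ - σb ≤ u → u ≤ t₀ → ‖(fun i => x i u : Fin m → ℝ)‖ ≤ P := by
    intro u h1 h2
    rw [hPdef]
    exact le_csSup hPbdd ⟨u, ⟨h1, h2⟩, rfl⟩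
  have hP0 : 0 ≤ P := le_trans (norm_nonneg _) (hPmem t₀ (by linarith) le_rfl)
  set K₀ : ℝ := 2 ^ n * (N₀ + P) with hK₀def
  have hK₀0 : 0 ≤ K₀ := by
    rw [hK₀def]
    exact mul_nonneg (by positivity) (by linarith)
  -- growth bound on the initial interval by interval doubling
  have hDbl : ∀ k : ℕ, ∀ j u, t₀ - σb ≤ u → u ≤ t₀ + k * L →
      |x j u| ≤ 2 ^ k * (N₀ + P) := by
    intro k
    induction k with
    | zero =>
      intro j u hu1 hu2
      simp only [Nat.cast_zero, zero_mul, add_zero] at hu2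
      have h1 : |x j u| ≤ ‖(fun i => x i u : Fin m → ℝ)‖ := by
        have h := norm_le_pi_norm (fun i => x i u) j
        rwa [Real.norm_eq_abs] at h
      refine le_trans h1 (le_trans (hPmem u hu1 hu2) ?_)
      simp only [pow_zero, one_mul]
      linarith
    | succ k ih =>
      intro j u hu1 hu2
      set p : ℝ := t₀ + k * L with hpdef
      have hkL0 : (0:ℝ) ≤ k * L := mul_nonneg (Nat.cast_nonneg k) hLpos.le
      have hpt₀ : t₀ ≤ p := by rw [hpdef]; linarith
      have hu2' : u ≤ p + L := by
        rw [hpdef]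
        push_cast at hu2
        linarith [hu2]
      by_cases hup : u ≤ p
      · refine le_trans (ih j u hu1 hup) ?_
        have h2k : (0:ℝ) ≤ (2:ℝ) ^ k := by positivity
        have he : (2:ℝ) ^ (k+1) = 2 * 2 ^ k := by rw [pow_succ]; ring
        rw [he]
        linarith [mul_nonneg h2k (add_nonneg hN₀0 hP0)]
      · push_neg at hup
        set cmax : ℝ := sSup ((fun v => ‖(fun i => x i v : Fin m → ℝ)‖)
          '' Set.Icc (t₀ - σb) (p + L)) with hcmaxdef
        have hbddc : BddAbove ((fun v => ‖(fun i => x i v : Fin m → ℝ)‖)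
            '' Set.Icc (t₀ - σb) (p + L)) :=
          IsCompact.bddAbove_image isCompact_Icc hcontnorm.continuousOn
        have hmemc : ∀ v, t₀ - σb ≤ v → v ≤ p + L → ∀ j', |x j' v| ≤ cmax := by
          intro v h1 h2 j'
          have h3 := norm_le_pi_norm (fun i => x i v) j'
          rw [Real.norm_eq_abs] at h3
          refine le_trans h3 ?_
          rw [hcmaxdef]
          exact le_csSup hbddc ⟨v, ⟨h1, h2⟩, rfl⟩
        have hc0 : 0 ≤ cmax :=
          le_trans (abs_nonneg _) (hmemc t₀ (by linarith) (by linarith) j)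
        have hkey : ∀ v, p ≤ v → v ≤ p + L → ∀ j',
            |x j' v| ≤ 2 ^ k * (N₀ + P) + cmax / 2 := by
          intro v hv1 hv2 j'
          have heq2 := hF1 j' p v hpt₀ hv1
          have hib : |∫ z in p..v, ∑ j'', a j' j'' z * x j'' (g j' j'' z)|
              ≤ B * cmax * |v - p| := by
            rw [← Real.norm_eq_abs]
            refine intervalIntegral.norm_integral_le_of_norm_le_const ?_
            intro z hz
            rw [Set.uIoc_of_le hv1] at hz
            rw [Real.norm_eq_abs]
            have hz0 : (0:ℝ) ≤ z := by linarith [hz.1]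
            refine le_trans (hsum j' z hz0 (fun _ => cmax) ?_) ?_
            · intro j''
              have hgz := hg j' j'' z hz0
              exact hmemc (g j' j'' z) (by linarith [hσble j' j'', hz.1])
                (by linarith [hz.2]) j''
            · rw [← Finset.sum_mul]
              exact mul_le_mul_of_nonneg_right (hBle j') hc0
          have hib2 : |∫ z in p..v, ∑ j'', a j' j'' z * x j'' (g j' j'' z)| ≤ cmax / 2 := by
            rw [abs_of_nonneg (by linarith : (0:ℝ) ≤ v - p)] at hib
            have h4 : B * cmax * (v - p) ≤ B * cmax * L :=
              mul_le_mul_of_nonneg_left (by linarith) (mul_nonneg hBpos.le hc0)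
            have h5 : B * cmax * L = cmax / 2 := by
              calc B * cmax * L = (B * L) * cmax := by ring
                _ = cmax / 2 := by rw [hBL]; ring
            linarith [hib, h4]
          have hxp := ih j' p (by linarith) le_rfl
          rw [heq2]
          refine le_trans (abs_add_le _ _) (add_le_add hxp hib2)
        have hcmaxle : cmax ≤ 2 ^ k * (N₀ + P) + cmax / 2 := by
          have hrhs0 : 0 ≤ 2 ^ k * (N₀ + P) + cmax / 2 := by
            have : (0:ℝ) ≤ 2 ^ k * (N₀ + P) :=
              mul_nonneg (by positivity) (by linarith)
            linarith
          rw [hcmaxdef]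
          refine Real.sSup_le ?_ hrhs0
          rintro y ⟨v, hv, rfl⟩
          rw [pi_norm_le_iff_of_nonneg hrhs0]
          intro j'
          rw [Real.norm_eq_abs]
          by_cases hvp : v ≤ p
          · exact le_trans (ih j' v hv.1 hvp) (by linarith [hc0])
          · push_neg at hvp
            exact hkey v hvp.le hv.2 j'
        have hcm2 : cmax ≤ 2 ^ (k+1) * (N₀ + P) := by
          have h6 : (2:ℝ) ^ (k+1) = 2 * 2 ^ k := by rw [pow_succ]; ring
          rw [h6]
          linarith [hcmaxle]
        exact le_trans (hmemc u hu1 hu2' j) hcm2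
  set t₁ : ℝ := t₀ + n * L with ht₁def
  have ht₁ge : t₀ + σb + T₀ ≤ t₁ := by rw [ht₁def]; linarith [hnL]
  have hInit : ∀ j u, t₀ - σb ≤ u → u ≤ t₁ → |x j u| ≤ K₀ := by
    intro j u h1 h2
    rw [hK₀def]
    refine hDbl n j u h1 ?_
    rw [ht₁def] at h2
    exact h2
  -- global boundedness
  have hGlob : ∀ j u, t₀ - σb ≤ u → |x j u| ≤ w j * K₀ := by
    have hclaim : ∀ c', K₀ < c' → ∀ j u, t₀ - σb ≤ u → |x j u| ≤ w j * c' := by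
      intro c' hc'
      by_contra hbad
      push_neg at hbad
      obtain ⟨j₀, u₀, hu₀, hviol⟩ := hbad
      have hc'pos : 0 < c' := lt_of_le_of_lt hK₀0 hc'
      have hwc : ∀ j'' v, t₀ - σb ≤ v → v ≤ t₁ → |x j'' v| ≤ w j'' * c' := by
        intro j'' v h1 h2
        refine le_trans (hInit j'' v h1 h2) ?_
        calc K₀ ≤ c' := hc'.le
          _ = 1 * c' := (one_mul _).symm
          _ ≤ w j'' * c' := mul_le_mul_of_nonneg_right (hw1 j'') hc'pos.le
      set S : Set ℝ := Ici t₁ ∩ ⋃ j', {u | w j' * c' ≤ |x j' u|} with hSdef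
      have hSclosed : IsClosed S := by
        refine isClosed_Ici.inter (isClosed_iUnion_of_finite fun j' => ?_)
        exact isClosed_le continuous_const (continuous_abs.comp (hx j'))
      have hu₀S : u₀ ∈ S := by
        constructor
        · show t₁ ≤ u₀
          by_contra hlt
          push_neg at hlt
          exact absurd (hwc j₀ u₀ hu₀ hlt.le) (not_le.mpr hviol)
        · exact Set.mem_iUnion.mpr ⟨j₀, hviol.le⟩
      have hSbdd : BddBelow S := BddBelow.mono Set.inter_subset_left bddBelow_Ici
      set r := sInf S with hrdef
      have hrS : r ∈ S := hSclosed.csInf_mem ⟨u₀, hu₀S⟩ hSbdd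
      have hrt₁ : t₁ ≤ r := hrS.1
      obtain ⟨j₁, hj₁⟩ : ∃ j', w j' * c' ≤ |x j' r| := by
        have := hrS.2
        simpa using this
      have hbelow : ∀ j' v, t₀ - σb ≤ v → v < r → |x j' v| ≤ w j' * c' := by
        intro j' v h1 h2
        by_cases h3 : v ≤ t₁
        · exact hwc j' v h1 h3
        · push_neg at h3
          by_contra h4
          push_neg at h4
          have hvS : v ∈ S := ⟨h3.le, Set.mem_iUnion.mpr ⟨j', h4.le⟩⟩
          exact absurd (csInf_le hSbdd hvS) (not_le.mpr h2)
      have hatr : ∀ j' v, t₀ - σb ≤ v → v ≤ r → |x j' v| ≤ w j' * c' := by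
        intro j' v h1 h2
        rcases lt_or_eq_of_le h2 with h2 | h2
        · exact hbelow j' v h1 h2
        · have hvr : t₁ ≤ v := by rw [h2]; exact hrt₁
          have hvgt : t₀ - σb < v := by
            have h5 : t₀ - σb < t₁ := by linarith [ht₁ge, hσb0, hT₀pos]
            linarith
          have htd : Filter.Tendsto (fun z => |x j' z|) (nhdsWithin v (Iio v))
              (nhds |x j' v|) :=
            ((continuous_abs.comp (hx j')).tendsto v).mono_left nhdsWithin_le_nhds
          refine le_of_tendsto htd ?_
          have hmaxlt : max (t₀ - σb) (v - 1) < v := by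
            rw [max_lt_iff]
            exact ⟨hvgt, by linarith⟩
          have hmm : Set.Ioo (max (t₀ - σb) (v - 1)) v ∈ nhdsWithin v (Iio v) :=
            Ioo_mem_nhdsLT_of_mem ⟨hmaxlt, le_rfl⟩
          filter_upwards [hmm] with z hz
          exact hbelow j' z (le_trans (le_max_left _ _) hz.1.le) (h2 ▸ hz.2)
      have happ := keyL (r - T₀) r c' (by linarith [hrt₁, ht₁ge])
        (by linarith) hc'pos.le
        (fun j' v h1 h2 => hatr j' v (by linarith [hrt₁, ht₁ge]) h2) j₁
      have hlt2 : q * (w j₁ * c') < w j₁ * c' := by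
        have hwc'pos : 0 < w j₁ * c' := mul_pos (hwpos j₁) hc'pos
        have := mul_pos (by linarith [hqlt1] : (0:ℝ) < 1 - q) hwc'pos
        nlinarith [this]
      exact absurd hj₁ (not_le.mpr (lt_of_le_of_lt happ hlt2))
    intro j u hu
    by_contra hcon
    push_neg at hcon
    have hwj := hwpos j
    have hKlt : K₀ < |x j u| / w j := by
      rw [lt_div_iff₀ hwj]
      linarith [hcon]
    set c' : ℝ := (K₀ + |x j u| / w j) / 2 with hc'def
    have h1 : K₀ < c' := by rw [hc'def]; linarith
    have h2 : c' < |x j u| / w j := by rw [hc'def]; linarith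
    have h3 := hclaim c' h1 j u hu
    have h4 : c' * w j < |x j u| := (lt_div_iff₀ hwj).mp h2
    linarith [h3, h4]
  -- geometric decay
  have hDecay : ∀ k : ℕ, ∀ j u, t₀ - σb + k * P₁ ≤ u → |x j u| ≤ w j * (q ^ k * K₀) := by
    intro k
    induction k with
    | zero =>
      intro j u hu
      simp only [Nat.cast_zero, zero_mul, add_zero] at hu
      simpa using hGlob j u hu
    | succ k ih =>
      intro j u hu
      have hk0 : (0:ℝ) ≤ q ^ k * K₀ := mul_nonneg (pow_nonneg hqpos.le k) hK₀0
      have hkP0 : (0:ℝ) ≤ k * P₁ := mul_nonneg (Nat.cast_nonneg k) hP₁pos.le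
      have hstep : t₀ + σb + k * P₁ + T₀ ≤ u := by
        push_cast at hu
        rw [hP₁def] at hu ⊢
        linarith [hu]
      have happ := keyL (t₀ + σb + k * P₁) u (q ^ k * K₀)
        (by linarith) (by linarith [hstep]) hk0
        (fun j' v h1 _ => ih j' v (by rw [hP₁def] at h1 ⊢; linarith [h1])) j
      refine le_trans happ (le_of_eq ?_)
      rw [pow_succ]; ring
  -- conclusion
  intro t ht
  set nf : ℕ := ⌊(t - t₀) / P₁⌋₊ with hnfdef
  set k : ℕ := nf - 1 with hkdef
  have hr0 : 0 ≤ (t - t₀) / P₁ := div_nonneg (by linarith) hP₁pos.le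
  have hkP : t₀ - σb + k * P₁ ≤ t := by
    have h1 : (k:ℝ) ≤ (nf:ℝ) := by exact_mod_cast Nat.sub_le nf 1
    have h2 : (nf:ℝ) ≤ (t - t₀)/P₁ := Nat.floor_le hr0
    have h3 : (k:ℝ) * P₁ ≤ t - t₀ := by
      calc (k:ℝ) * P₁ ≤ ((t - t₀)/P₁) * P₁ :=
          mul_le_mul_of_nonneg_right (le_trans h1 h2) hP₁pos.le
        _ = t - t₀ := by field_simp
    linarith
  have hkr : (t - t₀)/P₁ - 2 ≤ (k:ℝ) := by
    rcases Nat.eq_zero_or_pos nf with h | h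
    · have h5 : (t - t₀)/P₁ < 1 := by
        have := Nat.lt_floor_add_one ((t - t₀)/P₁)
        rw [← hnfdef, h] at this
        simpa using this
      rw [hkdef, h]
      simpa using by linarith [h5]
    · have hc : (k:ℝ) = (nf:ℝ) - 1 := by
        rw [hkdef]
        push_cast [Nat.cast_sub h]
        ring
      have h6 := Nat.lt_floor_add_one ((t - t₀)/P₁)
      rw [← hnfdef] at h6
      rw [hc]
      linarith [h6]
  have hqk : q ^ k ≤ Real.exp (-Λ * (t - t₀)) / q ^ 2 := by
    have hlq : Real.log q < 0 := Real.log_neg hqpos hqlt1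
    have h1 : (q:ℝ) ^ k = Real.exp ((k:ℝ) * Real.log q) := by
      rw [Real.exp_nat_mul, Real.exp_log hqpos]
    have h2 : (k:ℝ) * Real.log q ≤ ((t - t₀)/P₁ - 2) * Real.log q :=
      mul_le_mul_of_nonpos_right hkr hlq.le
    have h3 : Real.exp (((t - t₀)/P₁ - 2) * Real.log q)
        = Real.exp (-Λ * (t - t₀)) / q ^ 2 := by
      rw [sub_mul, Real.exp_sub]
      congr 1
      · congr 1
        rw [hΛdef]
        field_simp
      · rw [show (2:ℝ) * Real.log q = Real.log (q^2) by
          rw [Real.log_pow]; push_cast; ring]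
        rw [Real.exp_log (by positivity)]
    rw [h1, ← h3]
    exact Real.exp_le_exp.mpr h2
  have hqkK : (0:ℝ) ≤ q ^ k * K₀ := mul_nonneg (pow_nonneg hqpos.le k) hK₀0
  have hxt : ∀ i, |x i t| ≤ wmax * (q ^ k * K₀) := by
    intro i
    refine le_trans (hDecay k i t hkP) ?_
    exact mul_le_mul_of_nonneg_right (hwmaxle i) hqkK
  have hnorm : ‖(fun i => x i t : Fin m → ℝ)‖ ≤ wmax * (q ^ k * K₀) := by
    rw [pi_norm_le_iff_of_nonneg (mul_nonneg hwmaxpos.le hqkK)]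
    intro i
    rw [Real.norm_eq_abs]
    exact hxt i
  refine le_trans hnorm ?_
  rw [hK₀def, hMdef]
  have hNP : 0 ≤ N₀ + P := by linarith
  have h2n : (0:ℝ) ≤ 2 ^ n * (N₀ + P) := mul_nonneg (by positivity) hNP
  calc wmax * (q ^ k * (2 ^ n * (N₀ + P)))
      ≤ wmax * ((Real.exp (-Λ * (t - t₀)) / q ^ 2) * (2 ^ n * (N₀ + P))) := by
        refine mul_le_mul_of_nonneg_left ?_ hwmaxpos.le
        exact mul_le_mul_of_nonneg_right hqk h2n
    _ = wmax * 2 ^ n / q ^ 2 * Real.exp (-Λ * (t - t₀)) * (N₀ + P) := by ring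
end

section
/- Suppose that the m×m matrix F with entries f_ii = 1 and f_ij = −A_ij/α_i for i ≠ j is a nonsingular M-matrix. Then the linear system with non-delayed diagonal terms ẋ_i(t) = −a_i(t)x_i(t) + Σ_{j≠i} a_{ij}(t)x_j(g_{ij}(t)) is exponentially stable. -/
/-!
Let `d = F⁻¹ 1`; it is positive, and `F d = 1` reads `α_i d_i - Σ_{j ≠ i} A_ij d_j = α_i > 0`.
So for a small rate `Λ > 0` the barriers `K d_i e^{-Λ (t - t₀)}`, with `K` above the size of the
initial history, satisfy `Λ d_i + e^{Λσ} Σ_{j ≠ i} A_ij d_j < α_i d_i`. At a first time `T` at which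
some `|x_i|` touches its barrier, every delayed value `x_j(g_ij(s))` is still below its own
barrier, and the integral form of the equation makes `|x_i|` fall faster than the barrier just
before `T`; so it was above the barrier earlier, a contradiction. Letting `K` decrease to the size
of the history gives the estimate.
-/

open MeasureTheory Set Filter Topology Real Matrix

theorem Matrix.exists_pos_mulVec_eq_one {ι : Type*} [Fintype ι] [DecidableEq ι]
    (F : Matrix ι ι ℝ) (hF : IsUnit F.det) (hF_inv : ∀ i j, 0 < F⁻¹ i j) :
    ∃ d : ι → ℝ, (∀ i, 0 < d i) ∧ F *ᵥ d = 1 := by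
  refine ⟨F⁻¹ *ᵥ 1, fun i => ?_, by rw [mulVec_mulVec, mul_nonsing_inv F hF, one_mulVec]⟩
  simpa [mulVec, dotProduct] using
    Finset.sum_pos (fun j _ => hF_inv i j) ⟨i, Finset.mem_univ i⟩

theorem exists_one_le_weight {ι : Type*} [Fintype ι] [DecidableEq ι]
    (F : Matrix ι ι ℝ) (α : ι → ℝ) (A : ι → ι → ℝ)
    (hF : ∀ i j, F i j = if i = j then 1 else -(A i j) / α i)
    (hα : ∀ i, 0 < α i) (hA : ∀ i j, i ≠ j → 0 ≤ A i j)
    (hF_unit : IsUnit F.det) (hF_inv : ∀ i j, 0 < F⁻¹ i j) :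
    ∃ d : ι → ℝ, (∀ i, 1 ≤ d i) ∧
      ∀ i, ∑ j ∈ Finset.univ.erase i, A i j * d j = α i * (d i - 1) := by
  obtain ⟨d, hd, hFd⟩ := F.exists_pos_mulVec_eq_one hF_unit hF_inv
  have hrel : ∀ i, ∑ j ∈ Finset.univ.erase i, A i j * d j = α i * (d i - 1) := by
    intro i
    have hi := congrFun hFd i
    rw [Matrix.mulVec, dotProduct, ← Finset.add_sum_erase _ _ (Finset.mem_univ i), hF,
      if_pos rfl, Finset.sum_congr rfl fun j hj => by
        rw [hF, if_neg (Finset.ne_of_mem_erase hj).symm, neg_div, neg_mul, div_mul_eq_mul_div],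
      Finset.sum_neg_distrib, ← Finset.sum_div, Pi.one_apply, one_mul] at hi
    field_simp [(hα i).ne'] at hi
    linarith
  refine ⟨d, fun i => ?_, hrel⟩
  have : 0 ≤ α i * (d i - 1) := hrel i ▸ Finset.sum_nonneg fun j hj =>
    mul_nonneg (hA i j (Finset.ne_of_mem_erase hj).symm) (hd j).le
  nlinarith [hα i]

theorem exists_pos_mul_add_exp_mul_lt {ι : Type*} [Finite ι] (p q r : ι → ℝ) (σ : ℝ)
    (h : ∀ i, q i < r i) :
    ∃ κ > 0, ∀ i, κ * p i + exp (κ * σ) * q i < r i := by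
  have hnear : ∀ᶠ κ in 𝓝 (0 : ℝ), ∀ i, κ * p i + exp (κ * σ) * q i < r i := by
    refine eventually_all.2 fun i => ?_
    have hcont : Continuous fun κ : ℝ => κ * p i + exp (κ * σ) * q i := by fun_prop
    refine hcont.continuousAt.eventually_lt continuousAt_const ?_
    simpa using h i
  obtain ⟨κ, hκ, hpos⟩ := ((hnear.filter_mono nhdsWithin_le_nhds).and
    (self_mem_nhdsWithin (s := Ioi 0))).exists
  exact ⟨κ, hpos, hκ⟩

theorem HasDerivAt.le_of_sub_le_integral {β g : ℝ → ℝ} {T β' : ℝ} (hβ : HasDerivAt β β' T)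
    (hg : Continuous g) (h : ∀ᶠ s in 𝓝[<] T, β T - β s ≤ ∫ r in s..T, g r) :
    β' ≤ g T := by
  have hψ : HasDerivAt (fun s => β s + ∫ r in s..T, g r) (β' - g T) T :=
    hβ.add (intervalIntegral.integral_hasDerivAt_left (hg.intervalIntegrable T T)
      (hg.stronglyMeasurableAtFilter _ _) hg.continuousAt)
  have hslope := (hasDerivWithinAt_iff_tendsto_slope' (s := Iio T) (by simp)).1
    hψ.hasDerivWithinAt
  -- `T` minimises `β + ∫_·^T g` from the left, so the derivative there is nonpositive.
  have : β' - g T ≤ 0 := by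
    refine le_of_tendsto hslope ?_
    filter_upwards [h, self_mem_nhdsWithin] with s hs hsT
    rw [slope_def_field, intervalIntegral.integral_same, add_zero]
    exact div_nonpos_of_nonneg_of_nonpos (by linarith) (by linarith [show s < T from hsT])
  linarith

theorem abs_lt_exp_barrier {u a h : ℝ → ℝ} {t₀ T α B c κ : ℝ} (hT : t₀ < T)
    (hu : Continuous u)
    (hint : ∀ s ∈ Ico t₀ T, IntervalIntegrable (fun r => -a r * u r + h r) volume s T)
    (hsol : ∀ s ∈ Ico t₀ T, u T = u s + ∫ r in s..T, (-a r * u r + h r))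
    (ha : ∀ r ∈ Icc t₀ T, α ≤ a r)
    (hu_le : ∀ r ∈ Icc t₀ T, |u r| ≤ B * exp (-κ * (r - t₀)))
    (hh : ∀ r ∈ Icc t₀ T, |h r| ≤ c * exp (-κ * (r - t₀)))
    (hB : 0 < B) (hrate : B * κ + c < α * B) : |u T| < B * exp (-κ * (T - t₀)) := by
  by_contra! hge
  wlog hpos : 0 ≤ u T generalizing u h with H
  · have hfun : (fun r => -a r * (-u) r + (-h) r) = fun r => -(-a r * u r + h r) := by
      ext r; simp only [Pi.neg_apply]; ring
    refine H hu.neg (h := -h) (fun s hs => hfun ▸ (hint s hs).neg) (fun s hs => ?_)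
      (by simpa using hu_le) (by simpa using hh) (by simpa using hge) (by simp; linarith)
    rw [hfun, intervalIntegral.integral_neg]
    simp only [Pi.neg_apply]
    linarith [hsol s hs]
  have huT : u T = B * exp (-κ * (T - t₀)) :=
    le_antisymm ((le_abs_self _).trans (hu_le T ⟨hT.le, le_rfl⟩))
      (hge.trans_eq (abs_of_nonneg hpos))
  have hE : 0 < exp (-κ * (T - t₀)) := exp_pos _
  obtain ⟨l, hl, hl_pos⟩ : ∃ l < T, Ioc l T ⊆ {r | 0 < u r} :=
    exists_Ioc_subset_of_mem_nhds (hu.isOpen_preimage _ isOpen_Ioi |>.mem_nhds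
      (show 0 < u T from huT ▸ mul_pos hB hE)) ⟨t₀, hT⟩
  have hbarrier : HasDerivAt (fun s => B * exp (-κ * (s - t₀)))
      (B * (exp (-κ * (T - t₀)) * (-κ * 1))) T :=
    (((hasDerivAt_id T).sub_const t₀).const_mul (-κ)).exp.const_mul B
  -- Where `u > 0`, the right-hand side has the continuous majorant `-α u + c e^{-κ (r - t₀)}`.
  have hcompare : ∀ᶠ s in 𝓝[<] T, B * exp (-κ * (T - t₀)) - B * exp (-κ * (s - t₀)) ≤
      ∫ r in s..T, (-α * u r + c * exp (-κ * (r - t₀))) := by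
    filter_upwards [Ioo_mem_nhdsLT (max_lt hl hT)] with s hs
    have hs₀ : s ∈ Ico t₀ T := ⟨(le_max_right _ _).trans hs.1.le, hs.2⟩
    calc B * exp (-κ * (T - t₀)) - B * exp (-κ * (s - t₀))
        ≤ u T - u s := by
          linarith [(le_abs_self _).trans (hu_le s (Ico_subset_Icc_self hs₀))]
      _ = ∫ r in s..T, (-a r * u r + h r) := by rw [hsol s hs₀]; ring
      _ ≤ ∫ r in s..T, (-α * u r + c * exp (-κ * (r - t₀))) := by
          have hg : Continuous fun r => -α * u r + c * exp (-κ * (r - t₀)) := by fun_prop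
          refine intervalIntegral.integral_mono_on hs.2.le (hint s hs₀)
            (hg.intervalIntegrable s T) fun r hr => ?_
          have hr₀ : r ∈ Icc t₀ T := ⟨hs₀.1.trans hr.1, hr.2⟩
          have hur : 0 < u r := hl_pos ⟨(le_max_left _ _).trans_lt (hs.1.trans_le hr.1), hr.2⟩
          nlinarith [ha r hr₀, (le_abs_self _).trans (hh r hr₀)]
  have := hbarrier.le_of_sub_le_integral (by fun_prop) hcompare
  rw [huT] at this
  nlinarith [mul_pos (sub_pos.2 hrate) hE]

theorem exists_first_touch {ι : Type*} [Finite ι] {φ ψ : ι → ℝ → ℝ} {t₀ : ℝ}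
    (hφ : ∀ i, Continuous (φ i)) (hψ : ∀ i, Continuous (ψ i)) (h₀ : ∀ i, φ i t₀ < ψ i t₀)
    (hfail : ∃ i, ∃ t ≥ t₀, ψ i t ≤ φ i t) :
    ∃ T > t₀, (∃ i, ψ i T ≤ φ i T) ∧ ∀ j, ∀ s ∈ Icc t₀ T, φ j s ≤ ψ j s := by
  set Z := Ici t₀ ∩ ⋃ i, {t | ψ i t ≤ φ i t}
  have hZ : IsClosed Z :=
    isClosed_Ici.inter (isClosed_iUnion_of_finite fun i => isClosed_le (hψ i) (hφ i))
  have hZ_bdd : BddBelow Z := ⟨t₀, fun t ht => ht.1⟩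
  obtain ⟨i, t, ht, hi⟩ := hfail
  have hT : sInf Z ∈ Z := hZ.csInf_mem ⟨t, ht, mem_iUnion.2 ⟨i, hi⟩⟩ hZ_bdd
  obtain ⟨hT₀, hT_touch⟩ := hT
  obtain ⟨i, hi⟩ := mem_iUnion.1 hT_touch
  have hlt : t₀ < sInf Z := hT₀.lt_of_ne fun h => (h₀ i).not_ge (h ▸ hi)
  refine ⟨sInf Z, hlt, ⟨i, hi⟩, fun j => ?_⟩
  have hbefore : Ico t₀ (sInf Z) ⊆ {s | φ j s ≤ ψ j s} := fun s hs =>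
    show φ j s ≤ ψ j s from le_of_not_gt fun hs' =>
      hs.2.not_ge (csInf_le hZ_bdd ⟨hs.1, mem_iUnion.2 ⟨j, hs'.le⟩⟩)
  rw [← closure_Ico hlt.ne]
  exact (isClosed_le (hφ j) (hψ j)).closure_subset_iff.2 hbefore

section DelaySystem

variable {ι : Type*} [Fintype ι] [DecidableEq ι]

def delayRhs (a : ι → ℝ → ℝ) (aoff g : ι → ι → ℝ → ℝ) (x : ι → ℝ → ℝ) (i : ι) (s : ℝ) : ℝ :=
  -(a i s) * x i s + ∑ j ∈ Finset.univ.erase i, aoff i j s * x j (g i j s)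

variable {a : ι → ℝ → ℝ} {aoff g : ι → ι → ℝ → ℝ} {x : ι → ℝ → ℝ} {α d : ι → ℝ}
  {A : ι → ι → ℝ} {t₀ σ κ K : ℝ}

theorem abs_delay_sum_le (haoff : ∀ i j, i ≠ j → ∀ t, t₀ ≤ t → |aoff i j t| ≤ A i j)
    (hg : ∀ i j t, t₀ ≤ t → 0 ≤ t - g i j t ∧ t - g i j t ≤ σ) (hκ : 0 ≤ κ) {T : ℝ}
    (hx : ∀ j, ∀ s ∈ Icc (t₀ - σ) T, |x j s| ≤ K * d j * exp (-κ * (s - t₀)))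
    (i : ι) {r : ℝ} (hr : r ∈ Icc t₀ T) :
    |∑ j ∈ Finset.univ.erase i, aoff i j r * x j (g i j r)| ≤
      K * exp (κ * σ) * (∑ j ∈ Finset.univ.erase i, A i j * d j) * exp (-κ * (r - t₀)) := by
  rw [Finset.mul_sum, Finset.sum_mul]
  refine (Finset.abs_sum_le_sum_abs _ _).trans (Finset.sum_le_sum fun j hj => ?_)
  have hij := (Finset.ne_of_mem_erase hj).symm
  obtain ⟨hg₀, hgσ⟩ := hg i j r hr.1
  have hdelay : exp (-κ * (g i j r - t₀)) ≤ exp (κ * σ) * exp (-κ * (r - t₀)) := by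
    rw [← exp_add]
    exact exp_le_exp.2 (by nlinarith)
  have hxg := hx j (g i j r) ⟨by linarith [hr.1], by linarith [hr.2]⟩
  have hA : 0 ≤ A i j := (abs_nonneg _).trans (haoff i j hij r hr.1)
  have hKd : 0 ≤ K * d j :=
    (mul_nonneg_iff_of_pos_right (exp_pos _)).1 ((abs_nonneg _).trans hxg)
  calc |aoff i j r * x j (g i j r)|
      ≤ A i j * (K * d j * exp (-κ * (g i j r - t₀))) := by
        rw [abs_mul]; exact mul_le_mul (haoff i j hij r hr.1) hxg (abs_nonneg _) hA
    _ ≤ A i j * (K * d j * (exp (κ * σ) * exp (-κ * (r - t₀)))) := by gcongr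
    _ = K * exp (κ * σ) * (A i j * d j) * exp (-κ * (r - t₀)) := by ring

theorem abs_lt_exp_barrier_of_history (ha : ∀ i t, t₀ ≤ t → α i ≤ a i t)
    (haoff : ∀ i j, i ≠ j → ∀ t, t₀ ≤ t → |aoff i j t| ≤ A i j)
    (hg : ∀ i j t, t₀ ≤ t → 0 ≤ t - g i j t ∧ t - g i j t ≤ σ) (hx : ∀ i, Continuous (x i))
    (hint : ∀ i t, t₀ ≤ t → IntervalIntegrable (delayRhs a aoff g x i) volume t₀ t)
    (hsol : ∀ i t, t₀ ≤ t → x i t = x i t₀ + ∫ s in t₀..t, delayRhs a aoff g x i s)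
    (hd : ∀ i, 0 < d i) (hκ : 0 ≤ κ)
    (hrate : ∀ i, κ * d i + exp (κ * σ) * ∑ j ∈ Finset.univ.erase i, A i j * d j < α i * d i)
    (hK : 0 < K) (hhist : ∀ j, ∀ s ∈ Icc (t₀ - σ) t₀, |x j s| < K * d j) :
    ∀ i t, t₀ ≤ t → |x i t| < K * d i * exp (-κ * (t - t₀)) := by
  by_contra! hfail
  have hσ : 0 ≤ σ := by
    obtain ⟨i, -⟩ := hfail
    linarith [hg i i t₀ le_rfl]
  obtain ⟨T, hT, ⟨i, hi⟩, hle⟩ := exists_first_touch (φ := fun j t => |x j t|)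
    (ψ := fun j t => K * d j * exp (-κ * (t - t₀))) (fun j => (hx j).abs) (fun j => by fun_prop)
    (fun j => by simpa using hhist j t₀ ⟨by linarith, le_rfl⟩) hfail
  have hbound : ∀ j, ∀ s ∈ Icc (t₀ - σ) T, |x j s| ≤ K * d j * exp (-κ * (s - t₀)) := by
    intro j s hs
    rcases le_total t₀ s with hs₀ | hs₀
    · exact hle j s ⟨hs₀, hs.2⟩
    · calc |x j s| ≤ K * d j := (hhist j s ⟨hs.1, hs₀⟩).le
        _ ≤ K * d j * exp (-κ * (s - t₀)) :=
          le_mul_of_one_le_right (mul_pos hK (hd j)).le (one_le_exp (by nlinarith))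
  refine (abs_lt_exp_barrier (a := a i) (h := fun s => ∑ j ∈ Finset.univ.erase i,
    aoff i j s * x j (g i j s)) (α := α i) hT (hx i) (fun s hs => ?_) (fun s hs => ?_)
    (fun r hr => ha i r hr.1) (hle i) (fun r hr => abs_delay_sum_le haoff hg hκ hbound i hr)
    (mul_pos hK (hd i)) ?_).not_ge hi
  · exact (hint i T hT.le).mono_set
      (uIcc_subset_uIcc (mem_uIcc_of_le hs.1 hs.2.le) right_mem_uIcc)
  · show x i T = x i s + ∫ r in s..T, delayRhs a aoff g x i r
    rw [hsol i T hT.le, hsol i s hs.1,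
      ← intervalIntegral.integral_interval_sub_left (hint i T hT.le) (hint i s hs.1)]
    ring
  · nlinarith [mul_lt_mul_of_pos_left (hrate i) hK]

theorem abs_le_exp_barrier_of_history {S : ℝ} (ha : ∀ i t, t₀ ≤ t → α i ≤ a i t)
    (haoff : ∀ i j, i ≠ j → ∀ t, t₀ ≤ t → |aoff i j t| ≤ A i j)
    (hg : ∀ i j t, t₀ ≤ t → 0 ≤ t - g i j t ∧ t - g i j t ≤ σ) (hx : ∀ i, Continuous (x i))
    (hint : ∀ i t, t₀ ≤ t → IntervalIntegrable (delayRhs a aoff g x i) volume t₀ t)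
    (hsol : ∀ i t, t₀ ≤ t → x i t = x i t₀ + ∫ s in t₀..t, delayRhs a aoff g x i s)
    (hd : ∀ i, 1 ≤ d i) (hκ : 0 ≤ κ)
    (hrate : ∀ i, κ * d i + exp (κ * σ) * ∑ j ∈ Finset.univ.erase i, A i j * d j < α i * d i)
    (hS : 0 ≤ S) (hhist : ∀ j, ∀ s ∈ Icc (t₀ - σ) t₀, |x j s| ≤ S) (i : ι) {t : ℝ}
    (ht : t₀ ≤ t) : |x i t| ≤ S * d i * exp (-κ * (t - t₀)) := by
  have hcont : Continuous fun K => K * d i * exp (-κ * (t - t₀)) := by fun_prop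
  refine ge_of_tendsto ((hcont.tendsto S).mono_left nhdsWithin_le_nhds)
    (eventually_nhdsWithin_of_forall (s := Ioi S) fun K hK => ?_)
  refine (abs_lt_exp_barrier_of_history ha haoff hg hx hint hsol (fun i => one_pos.trans_le (hd i))
    hκ hrate (hS.trans_lt hK) (fun j s hs => ?_) i t ht).le
  exact (hhist j s hs).trans_lt (hK.trans_le (le_mul_of_one_le_right (hS.trans hK.le) (hd j)))

end DelaySystem

theorem abs_apply_le_norm_add_sSup {ι : Type*} [Fintype ι] {x : ι → ℝ → ℝ}
    (hx : ∀ i, Continuous (x i)) {a b s : ℝ} (hs : s ∈ Icc a b) (j : ι) :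
    |x j s| ≤
      ‖(fun i => x i b : ι → ℝ)‖ + sSup ((fun s => ‖(fun i => x i s : ι → ℝ)‖) '' Icc a b) :=
  calc |x j s| ≤ ‖(fun i => x i s : ι → ℝ)‖ := norm_le_pi_norm (fun i => x i s) j
    _ ≤ sSup ((fun s => ‖(fun i => x i s : ι → ℝ)‖) '' Icc a b) :=
      le_csSup (isCompact_Icc.image (continuous_pi hx).norm).bddAbove (mem_image_of_mem _ hs)
    _ ≤ _ := le_add_of_nonneg_left (norm_nonneg _)

theorem stmt4_general
    (m : ℕ) (a : Fin m → ℝ → ℝ) (aoff : Fin m → Fin m → ℝ → ℝ)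
    (α A : Fin m → ℝ) (Aoff : Fin m → Fin m → ℝ)
    (g : Fin m → Fin m → ℝ → ℝ) (σ : ℝ)
    (hα : ∀ i, 0 < α i)
    (ha_bd : ∀ i t, 0 ≤ t → α i ≤ a i t ∧ a i t ≤ A i)
    (haoff_bd : ∀ i j, i ≠ j → ∀ t, 0 ≤ t → |aoff i j t| ≤ Aoff i j)
    (hg : ∀ i j t, 0 ≤ t → 0 ≤ t - g i j t ∧ t - g i j t ≤ σ)
    -- the matrix F of (9)
    (Fm : Matrix (Fin m) (Fin m) ℝ)
    (hF_def : ∀ i j, Fm i j = if i = j then 1 else -(Aoff i j) / α i)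
    -- F is a nonsingular M-matrix
    (hF_unit : IsUnit Fm.det)
    (hF_invpos : ∀ i j, 0 < Fm⁻¹ i j) :
    -- exponential stability
    ∃ M Λ : ℝ, 0 < M ∧ 0 < Λ ∧
      ∀ t₀ : ℝ, 0 ≤ t₀ → ∀ x : Fin m → ℝ → ℝ,
        (∀ i, Continuous (x i)) →
        (∀ i t, t₀ ≤ t → IntervalIntegrable
            (fun s => -(a i s) * x i s +
              ∑ j ∈ Finset.univ.erase i, aoff i j s * x j (g i j s)) volume t₀ t) →
        (∀ i t, t₀ ≤ t →
          x i t = x i t₀ + ∫ s in t₀..t,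
            (-(a i s) * x i s +
              ∑ j ∈ Finset.univ.erase i, aoff i j s * x j (g i j s))) →
        ∀ t, t₀ ≤ t →
          ‖(fun i => x i t : Fin m → ℝ)‖ ≤
            M * Real.exp (-Λ * (t - t₀)) *
              (‖(fun i => x i t₀ : Fin m → ℝ)‖ +
                sSup ((fun s => ‖(fun i => x i s : Fin m → ℝ)‖) ''
                  Set.Icc (t₀ - σ) t₀)) := by
  have hAoff : ∀ i j, i ≠ j → 0 ≤ Aoff i j := fun i j hij =>
    (abs_nonneg _).trans (haoff_bd i j hij 0 le_rfl)
  obtain ⟨d, hd, hrel⟩ := exists_one_le_weight Fm α Aoff hF_def hα hAoff hF_unit hF_invpos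
  obtain ⟨Λ, hΛ, hrate⟩ := exists_pos_mul_add_exp_mul_lt d
    (fun i => ∑ j ∈ Finset.univ.erase i, Aoff i j * d j) (fun i => α i * d i) σ
    fun i => by rw [hrel]; linarith [hα i]
  refine ⟨‖d‖ + 1, Λ, by positivity, hΛ, fun t₀ ht₀ x hx hint hsol t ht => ?_⟩
  set S := ‖(fun i => x i t₀ : Fin m → ℝ)‖ +
    sSup ((fun s => ‖(fun i => x i s : Fin m → ℝ)‖) '' Icc (t₀ - σ) t₀)
  have hS : 0 ≤ S := add_nonneg (norm_nonneg _) (sSup_nonneg fun _ ⟨_, _, h⟩ => h ▸ norm_nonneg _)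
  refine (pi_norm_le_iff_of_nonneg (mul_nonneg (by positivity) hS)).2 fun i => ?_
  have hxi := abs_le_exp_barrier_of_history (fun i t h => (ha_bd i t (ht₀.trans h)).1)
    (fun i j hij t h => haoff_bd i j hij t (ht₀.trans h)) (fun i j t h => hg i j t (ht₀.trans h))
    hx hint hsol hd hΛ.le hrate hS (fun j s hs => abs_apply_le_norm_add_sSup hx hs j) i ht
  have hdi : d i ≤ ‖d‖ + 1 := by linarith [(le_abs_self _).trans (norm_le_pi_norm d i)]
  calc ‖x i t‖ = |x i t| := norm_eq_abs _
    _ ≤ S * d i * exp (-Λ * (t - t₀)) := hxi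
    _ ≤ (‖d‖ + 1) * exp (-Λ * (t - t₀)) * S := by
      rw [mul_comm S, mul_right_comm]; gcongr

/-- Corollary 2.5: if the matrix `F` with `f_ii = 1` and `f_ij = −A_ij/α_i` (i ≠ j) is a
nonsingular M-matrix, then the linear system with non-delayed diagonal terms
`ẋ_i(t) = −a_i(t) x_i(t) + Σ_{j≠i} a_{ij}(t) x_j(g_{ij}(t))` is exponentially stable. -/
theorem stmt4
    (m : ℕ) (hm : 0 < m)
    (a : Fin m → ℝ → ℝ) (aoff : Fin m → Fin m → ℝ → ℝ)
    (α A : Fin m → ℝ) (Aoff : Fin m → Fin m → ℝ)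
    (g : Fin m → Fin m → ℝ → ℝ) (σ : ℝ)
    (ha_meas : ∀ i, Measurable (a i))
    (haoff_meas : ∀ i j, Measurable (aoff i j))
    (hα : ∀ i, 0 < α i)
    (ha_bd : ∀ i t, 0 ≤ t → α i ≤ a i t ∧ a i t ≤ A i)
    (haoff_bd : ∀ i j, i ≠ j → ∀ t, 0 ≤ t → |aoff i j t| ≤ Aoff i j)
    (hg_meas : ∀ i j, Measurable (g i j))
    (hg : ∀ i j t, 0 ≤ t → 0 ≤ t - g i j t ∧ t - g i j t ≤ σ)
    -- the matrix F of (9)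
    (Fm : Matrix (Fin m) (Fin m) ℝ)
    (hF_def : ∀ i j, Fm i j = if i = j then 1 else -(Aoff i j) / α i)
    -- F is a nonsingular M-matrix
    (hF_offdiag : ∀ i j, i ≠ j → Fm i j ≤ 0)
    (hF_unit : IsUnit Fm.det)
    (hF_invpos : ∀ i j, 0 < Fm⁻¹ i j) :
    -- exponential stability
    ∃ M Λ : ℝ, 0 < M ∧ 0 < Λ ∧
      ∀ t₀ : ℝ, 0 ≤ t₀ → ∀ x : Fin m → ℝ → ℝ,
        (∀ i, Continuous (x i)) →
        (∀ i t, t₀ ≤ t → IntervalIntegrable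
            (fun s => -(a i s) * x i s +
              ∑ j ∈ Finset.univ.erase i, aoff i j s * x j (g i j s)) volume t₀ t) →
        (∀ i t, t₀ ≤ t →
          x i t = x i t₀ + ∫ s in t₀..t,
            (-(a i s) * x i s +
              ∑ j ∈ Finset.univ.erase i, aoff i j s * x j (g i j s))) →
        ∀ t, t₀ ≤ t →
          ‖(fun i => x i t : Fin m → ℝ)‖ ≤
            M * Real.exp (-Λ * (t - t₀)) *
              (‖(fun i => x i t₀ : Fin m → ℝ)‖ +
                sSup ((fun s => ‖(fun i => x i s : Fin m → ℝ)‖) ''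
                  Set.Icc (t₀ - σ) t₀)) :=
  stmt4_general m a aoff α A Aoff g σ hα ha_bd haoff_bd hg Fm hF_def hF_unit hF_invpos
end

section
/- Suppose m = 2, A_1(A_1 + L_11)τ_1 + L_11 < α_1, and (α_1 − A_1(A_1 + L_11)τ_1 − L_11)(α_2 − A_2(A_2 + L_22)τ_2 − L_22) > L_12 L_21 (1 + A_1τ_1)(1 + A_2τ_2). Then the nonlinear delay system ẋ_i(t) = −a_i(t)x_i(h_i(t)) + Σ_{j=1}^2 F_{ij}(t, x_j(g_{ij}(t))) is globally exponentially stable. -/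
/-!
Weight the components by `γ₁, γ₂ > 0` and follow `N t = max (|x₁ t| / γ₁) (|x₂ t| / γ₂)`. The
stability conditions say that a `2 × 2` matrix is an M-matrix, so the weights can be chosen with
`Lᵢ + Aᵢ τᵢ (Aᵢ γᵢ + Lᵢ) < γᵢ αᵢ` for both `i`, where `Lᵢ = Lᵢ₁ γ₁ + Lᵢ₂ γ₂`.

Razumikhin argument: suppose `N t * exp (Λ t)` reaches a new maximum at time `T`, and let `i`
realise `N T`. Integrating `xᵢ' + aᵢ(s) xᵢ(T)` over `[T - Δ, T]`, and bounding
`xᵢ(T) - xᵢ(hᵢ s)` by the equation once more, gives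
`γᵢ (1 + αᵢ Δ) ≤ γᵢ e^{ΛΔ} + Δ (Aᵢ (Δ + τᵢ) (Aᵢ γᵢ + Lᵢ) + Lᵢ) e^{Λ(Δ + 2r)}`, which fails once
`Δ` and then `Λ` are small enough. This needs the equation on all of `[T - Δ - 2r, T]`, so it only
applies after `t₀ + Δ + r`; up to then a Gronwall-type bound suffices: `N` at most doubles over
each time step of length `1 / (2c)`, where `c` bounds the right-hand sides in terms of `N`.
-/

open MeasureTheory Set Filter Topology

theorem forall_le_of_isMaxOn_imp_false {g : ℝ → ℝ} (hg : Continuous g) {p q b W : ℝ}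
    (hinit : ∀ v ∈ Icc p q, g v ≤ W)
    (hstep : ∀ T ∈ Ioc q b, W < g T → IsMaxOn g (Icc p T) T → False) :
    ∀ v ∈ Icc p b, g v ≤ W := by
  intro v hv
  by_contra! hWv
  obtain ⟨T, hT, hmax⟩ := isCompact_Icc.exists_isMaxOn ⟨v, hv.1, le_rfl⟩ hg.continuousOn
  have hWT : W < g T := hWv.trans_le (hmax ⟨hv.1, le_rfl⟩)
  have hqT : q < T := lt_of_not_ge fun h => (hinit T ⟨hT.1, h⟩).not_gt hWT
  exact hstep T ⟨hqT, hT.2.trans hv.2⟩ hWT (hmax.on_subset (Icc_subset_Icc_right hT.2))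

theorem le_two_pow_mul_of_increment_le {g : ℝ → ℝ} (hg : Continuous g) {p q c K : ℝ}
    (hpq : p ≤ q) (hc : 0 < c) (hK : 0 ≤ K) (hinit : ∀ v ∈ Icc p q, g v ≤ K)
    (hincr : ∀ t₁ T B, q ≤ t₁ → t₁ ≤ T → (∀ v ∈ Icc p T, g v ≤ B) →
      g T ≤ g t₁ + c * B * (T - t₁)) (n : ℕ) :
    ∀ v ∈ Icc p (q + n / (2 * c)), g v ≤ 2 ^ n * K := by
  induction n with
  | zero => simpa using hinit
  | succ n ih =>
    set q' := q + n / (2 * c)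
    have hqq' : q ≤ q' := le_add_of_nonneg_right (by positivity)
    have hnext : q + ((n + 1 : ℕ) : ℝ) / (2 * c) = q' + 1 / (2 * c) := by push_cast; ring
    refine forall_le_of_isMaxOn_imp_false hg (q := q')
      (fun v hv => (ih v hv).trans (by gcongr <;> norm_num)) fun T hT hWT hmax => ?_
    have hgT : 0 < g T := lt_of_le_of_lt (by positivity) hWT
    have hhalf : c * g T * (T - q') ≤ g T / 2 :=
      calc c * g T * (T - q') ≤ c * g T * (1 / (2 * c)) := by gcongr; linarith [hT.2]
        _ = g T / 2 := by field_simp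
    -- the maximum `g T` itself serves as the bound `B` in the increment estimate
    have hstep := hincr q' T (g T) hqq' hT.1.le hmax
    have hprev := ih q' ⟨hpq.trans hqq', le_rfl⟩
    rw [pow_succ] at hWT
    linarith

theorem le_mul_exp_of_razumikhin {N : ℝ → ℝ} (hN : Continuous N) {t₀ r ρ c Λ K : ℝ}
    (hr : 0 ≤ r) (hc : 0 < c) (hΛ : 0 ≤ Λ) (hK : 0 ≤ K)
    (hhist : ∀ v ∈ Icc (t₀ - r) t₀, N v ≤ K)
    (hincr : ∀ t₁ T B, t₀ ≤ t₁ → t₁ ≤ T → (∀ v ∈ Icc (t₀ - r) T, N v ≤ B) →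
      N T ≤ N t₁ + c * B * (T - t₁))
    (hraz : ∀ T, t₀ + ρ < T → 0 < N T →
      IsMaxOn (fun v => N v * Real.exp (Λ * v)) (Icc (t₀ - r) T) T → False)
    {t : ℝ} (ht : t₀ ≤ t) :
    N t ≤ 2 ^ ⌈2 * c * ρ⌉₊ * Real.exp (Λ * ρ) * K * Real.exp (-Λ * (t - t₀)) := by
  set n := ⌈2 * c * ρ⌉₊
  have hgrowth := le_two_pow_mul_of_increment_le hN (by linarith) hc hK hhist hincr n
  have hρ : ρ ≤ n / (2 * c) := by
    rw [le_div_iff₀ (by positivity), mul_comm]; exact Nat.le_ceil _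
  set W := 2 ^ n * K * Real.exp (Λ * (t₀ + ρ))
  have hW : 0 ≤ W := by positivity
  have hinit : ∀ v ∈ Icc (t₀ - r) (t₀ + ρ), N v * Real.exp (Λ * v) ≤ W := fun v hv =>
    mul_le_mul (hgrowth v ⟨hv.1, hv.2.trans (by linarith)⟩)
      (Real.exp_monotone (by gcongr; exact hv.2)) (Real.exp_pos _).le (by positivity)
  have hWt : N t * Real.exp (Λ * t) ≤ W :=
    forall_le_of_isMaxOn_imp_false (hN.mul (by fun_prop)) hinit
      (fun T hT hWT hmax =>
        hraz T hT.1 (pos_of_mul_pos_left (hW.trans_lt hWT) (Real.exp_pos _).le) hmax)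
      t ⟨by linarith, le_rfl⟩
  calc N t = N t * Real.exp (Λ * t) * Real.exp (-(Λ * t)) := by
        rw [mul_assoc, ← Real.exp_add]; simp
    _ ≤ W * Real.exp (-(Λ * t)) := by gcongr
    _ = _ := by
      simp only [W]
      rw [show -Λ * (t - t₀) = Λ * (t₀ + ρ) + -(Λ * t) - Λ * ρ by ring, Real.exp_sub,
        Real.exp_add]
      field_simp

section IntegralEquation

variable {f y : ℝ → ℝ} {t₀ t₁ t₂ : ℝ}

theorem sub_eq_integral_of_eq_add_integral_s5
    (hf : ∀ t, t₀ ≤ t → IntervalIntegrable f volume t₀ t)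
    (hy : ∀ t, t₀ ≤ t → y t = y t₀ + ∫ s in t₀..t, f s) (h₁ : t₀ ≤ t₁) (h₁₂ : t₁ ≤ t₂) :
    y t₂ - y t₁ = ∫ s in t₁..t₂, f s := by
  rw [hy t₂ (h₁.trans h₁₂), hy t₁ h₁, ← intervalIntegral.integral_interval_sub_left
    (hf t₂ (h₁.trans h₁₂)) (hf t₁ h₁)]
  ring

theorem abs_sub_le_of_eq_add_integral
    (hf : ∀ t, t₀ ≤ t → IntervalIntegrable f volume t₀ t)
    (hy : ∀ t, t₀ ≤ t → y t = y t₀ + ∫ s in t₀..t, f s) (h₁ : t₀ ≤ t₁) (h₁₂ : t₁ ≤ t₂)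
    {B : ℝ} (hB : ∀ s ∈ Ioc t₁ t₂, |f s| ≤ B) :
    |y t₂ - y t₁| ≤ B * (t₂ - t₁) := by
  rw [sub_eq_integral_of_eq_add_integral_s5 hf hy h₁ h₁₂, ← abs_of_nonneg (sub_nonneg.2 h₁₂)]
  refine intervalIntegral.norm_integral_le_of_norm_le_const (f := f) fun s hs => ?_
  rw [Real.norm_eq_abs]
  exact hB s (by rwa [uIoc_of_le h₁₂] at hs)

theorem mul_one_add_integral_eq_add_integral
    (hf : ∀ t, t₀ ≤ t → IntervalIntegrable f volume t₀ t)
    (hy : ∀ t, t₀ ≤ t → y t = y t₀ + ∫ s in t₀..t, f s) (h₁ : t₀ ≤ t₁) (h₁₂ : t₁ ≤ t₂)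
    {g : ℝ → ℝ} (hg : IntervalIntegrable g volume t₁ t₂) :
    y t₂ * (1 + ∫ s in t₁..t₂, g s) = y t₁ + ∫ s in t₁..t₂, (f s + g s * y t₂) := by
  have hf₁₂ : IntervalIntegrable f volume t₁ t₂ := (hf t₂ (h₁.trans h₁₂)).mono_set <| by
    rw [uIcc_of_le h₁₂, uIcc_of_le (h₁.trans h₁₂)]; exact Icc_subset_Icc_left h₁
  rw [intervalIntegral.integral_add hf₁₂ (hg.mul_const _), intervalIntegral.integral_mul_const,
    ← sub_eq_integral_of_eq_add_integral_s5 hf hy h₁ h₁₂]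
  ring

end IntegralEquation

theorem intervalIntegrable_of_norm_le {E : Type*} [NormedAddCommGroup E] {f : ℝ → E}
    (hf : AEStronglyMeasurable f) {t₁ t₂ C : ℝ} (hC : ∀ s ∈ uIoc t₁ t₂, ‖f s‖ ≤ C) :
    IntervalIntegrable f volume t₁ t₂ :=
  (intervalIntegrable_const (c := C)).mono_fun' hf.restrict <|
    (ae_restrict_mem measurableSet_uIoc).mono hC

theorem abs_neg_mul_add_le {a α A u g : ℝ} (hα : 0 ≤ α) (ha : α ≤ a ∧ a ≤ A) :
    |-a * u + g| ≤ A * |u| + |g| :=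
  calc |-a * u + g| ≤ |a| * |u| + |g| := by
        simpa only [abs_mul, abs_neg] using abs_add_le (-a * u) g
    _ ≤ A * |u| + |g| := by gcongr; exact abs_le.2 ⟨by linarith, ha.2⟩

section DelayWindow

variable {a h G y : ℝ → ℝ} {t₀ T Δ τ α A Y Γ : ℝ}

theorem abs_delay_rhs_add_mul_le
    (hf : ∀ t, t₀ ≤ t → IntervalIntegrable (fun s => -(a s) * y (h s) + G s) volume t₀ t)
    (hy : ∀ t, t₀ ≤ t → y t = y t₀ + ∫ s in t₀..t, (-(a s) * y (h s) + G s))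
    (hτ : 0 ≤ τ) (hT : t₀ ≤ T - Δ - τ) (hα : 0 ≤ α)
    (ha : ∀ s ∈ Icc (T - Δ - τ) T, α ≤ a s ∧ a s ≤ A)
    (hh : ∀ s ∈ Icc (T - Δ - τ) T, 0 ≤ s - h s ∧ s - h s ≤ τ)
    (hY : ∀ v ∈ Icc (T - Δ - 2 * τ) T, |y v| ≤ Y)
    (hG : ∀ s ∈ Icc (T - Δ - τ) T, |G s| ≤ Γ) {s : ℝ} (hs : s ∈ Ioc (T - Δ) T) :
    |-(a s) * y (h s) + G s + a s * y T| ≤ A * (Δ + τ) * (A * Y + Γ) + Γ := by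
  have hT' : T ∈ Icc (T - Δ - τ) T := ⟨by linarith [hs.1, hs.2], le_rfl⟩
  have hs' : s ∈ Icc (T - Δ - τ) T := ⟨by linarith [hs.1], hs.2⟩
  have hA : 0 ≤ A := hα.trans ((ha T hT').1.trans (ha T hT').2)
  have hf_le : ∀ u ∈ Icc (T - Δ - τ) T, |-(a u) * y (h u) + G u| ≤ A * Y + Γ := fun u hu =>
    (abs_neg_mul_add_le hα (ha u hu)).trans <| add_le_add
      (mul_le_mul_of_nonneg_left (hY _ ⟨by linarith [hu.1, (hh u hu).2], by
        linarith [hu.2, (hh u hu).1]⟩) hA) (hG u hu)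
  have hAYΓ : 0 ≤ A * Y + Γ := (abs_nonneg _).trans (hf_le T hT')
  have hhs := hh s hs'
  have hincr : |y T - y (h s)| ≤ (A * Y + Γ) * (T - h s) :=
    abs_sub_le_of_eq_add_integral hf hy (by linarith [hs.1]) (by linarith [hs.2])
      fun u hu => hf_le u ⟨by linarith [hu.1, hs.1], hu.2⟩
  calc |-(a s) * y (h s) + G s + a s * y T| = |-(a s) * (y (h s) - y T) + G s| := by ring_nf
    _ ≤ A * |y T - y (h s)| + |G s| := by
        rw [← abs_sub_comm]; exact abs_neg_mul_add_le hα (ha s hs')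
    _ ≤ A * ((A * Y + Γ) * (Δ + τ)) + Γ := by
        gcongr
        · exact hincr.trans (mul_le_mul_of_nonneg_left (by linarith [hs.1]) hAYΓ)
        · exact hG s hs'
    _ = A * (Δ + τ) * (A * Y + Γ) + Γ := by ring

-- Integrate `y' + a(s) y(T)` over `[T - Δ, T]`.
theorem abs_mul_one_add_le_of_delay_eq (ha_meas : Measurable a)
    (hf : ∀ t, t₀ ≤ t → IntervalIntegrable (fun s => -(a s) * y (h s) + G s) volume t₀ t)
    (hy : ∀ t, t₀ ≤ t → y t = y t₀ + ∫ s in t₀..t, (-(a s) * y (h s) + G s))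
    (hΔ : 0 ≤ Δ) (hτ : 0 ≤ τ) (hT : t₀ ≤ T - Δ - τ) (hα : 0 ≤ α)
    (ha : ∀ s ∈ Icc (T - Δ - τ) T, α ≤ a s ∧ a s ≤ A)
    (hh : ∀ s ∈ Icc (T - Δ - τ) T, 0 ≤ s - h s ∧ s - h s ≤ τ)
    (hY : ∀ v ∈ Icc (T - Δ - 2 * τ) T, |y v| ≤ Y)
    (hG : ∀ s ∈ Icc (T - Δ - τ) T, |G s| ≤ Γ) :
    |y T| * (1 + α * Δ) ≤ |y (T - Δ)| + Δ * (A * (Δ + τ) * (A * Y + Γ) + Γ) := by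
  set f := fun s => -(a s) * y (h s) + G s
  have hTΔ : T - Δ ≤ T := by linarith
  have ha_int : IntervalIntegrable a volume (T - Δ) T :=
    intervalIntegrable_of_norm_le ha_meas.aestronglyMeasurable fun s hs => by
      rw [uIoc_of_le hTΔ] at hs
      have := ha s ⟨by linarith [hs.1], hs.2⟩
      exact abs_le.2 ⟨by linarith, this.2⟩
  have hI : α * Δ ≤ ∫ s in (T - Δ)..T, a s := by
    simpa [mul_comm] using intervalIntegral.integral_mono_on hTΔ intervalIntegrable_const
      ha_int fun s hs => (ha s ⟨by linarith [hs.1], hs.2⟩).1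
  have hrest : |∫ s in (T - Δ)..T, (f s + a s * y T)| ≤
      (A * (Δ + τ) * (A * Y + Γ) + Γ) * Δ := by
    have := intervalIntegral.norm_integral_le_of_norm_le_const
      (f := fun s => f s + a s * y T) fun s hs => by
        rw [uIoc_of_le hTΔ] at hs
        exact abs_delay_rhs_add_mul_le hf hy hτ hT hα ha hh hY hG hs
    rwa [sub_sub_cancel, abs_of_nonneg hΔ, Real.norm_eq_abs] at this
  calc |y T| * (1 + α * Δ) ≤ |y T| * |1 + ∫ s in (T - Δ)..T, a s| := by
        gcongr; exact (by linarith : 1 + α * Δ ≤ _).trans (le_abs_self _)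
    _ = |y (T - Δ) + ∫ s in (T - Δ)..T, (f s + a s * y T)| := by
        rw [← abs_mul, mul_one_add_integral_eq_add_integral hf hy (by linarith) hTΔ ha_int]
    _ ≤ |y (T - Δ)| + |∫ s in (T - Δ)..T, (f s + a s * y T)| := abs_add_le _ _
    _ ≤ |y (T - Δ)| + Δ * (A * (Δ + τ) * (A * Y + Γ) + Γ) := by linarith

end DelayWindow

-- Right side minus left side of the inequality that a component with weight `γ`, coefficient
-- `α ≤ a ≤ A`, delay `τ` and forcing constant `L` satisfies at a new maximum of
-- `N t * exp (Λ t)`, for a step `Δ`; `r` bounds all delays.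
noncomputable def razumikhinGap (α A τ r γ L Δ Λ : ℝ) : ℝ :=
  γ * Real.exp (Λ * Δ) + Δ * (A * (Δ + τ) * (A * γ + L) + L) * Real.exp (Λ * (Δ + 2 * r)) -
    γ * (1 + α * Δ)

theorem eventually_razumikhinGap_neg {α A τ r γ L : ℝ} (h : L + A * τ * (A * γ + L) < γ * α) :
    ∀ᶠ Δ in 𝓝[>] 0, ∀ᶠ Λ in 𝓝[>] 0, razumikhinGap α A τ r γ L Δ Λ < 0 := by
  have hslope : ∀ᶠ Δ in 𝓝 (0 : ℝ), A * (Δ + τ) * (A * γ + L) + L - γ * α < 0 :=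
    (Continuous.tendsto (by fun_prop) 0).eventually_lt_const (by rw [zero_add]; linarith)
  filter_upwards [nhdsWithin_le_nhds hslope, self_mem_nhdsWithin] with Δ hΔ hΔ₀
  have hgap₀ : razumikhinGap α A τ r γ L Δ 0 < 0 := by
    have : razumikhinGap α A τ r γ L Δ 0 = Δ * (A * (Δ + τ) * (A * γ + L) + L - γ * α) := by
      simp only [razumikhinGap, zero_mul, Real.exp_zero]; ring
    rw [this]; exact mul_neg_of_pos_of_neg hΔ₀ hΔ
  exact nhdsWithin_le_nhds <|
    (Continuous.tendsto (by unfold razumikhinGap; fun_prop) 0).eventually_lt_const hgap₀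

theorem exists_pos_mul_lt_mul {c₁ c₂ b₁ b₂ : ℝ} (hc₁ : 0 < c₁) (hb₁ : 0 ≤ b₁)
    (h : b₁ * b₂ < c₁ * c₂) :
    ∃ γ₁ γ₂ : ℝ, 0 < γ₁ ∧ 0 < γ₂ ∧ b₁ * γ₂ < c₁ * γ₁ ∧ b₂ * γ₁ < c₂ * γ₂ := by
  have hlt : b₂ * (b₁ / c₁) < c₂ := by rw [mul_div_assoc', div_lt_iff₀ hc₁]; linarith
  have hev : ∀ᶠ γ in 𝓝[>] (b₁ / c₁), b₂ * γ < c₂ :=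
    nhdsWithin_le_nhds <| (Continuous.tendsto (by fun_prop) _).eventually_lt_const hlt
  obtain ⟨γ, hγc, hγb⟩ := (hev.and self_mem_nhdsWithin).exists
  refine ⟨γ, 1, (div_nonneg hb₁ hc₁.le).trans_lt hγb, one_pos, ?_, by simpa using hγc⟩
  rw [mul_one, ← div_lt_iff₀' hc₁]; exact hγb

theorem exists_weights_of_stability_conditions {α₁ α₂ A₁ A₂ L₁₁ L₁₂ L₂₁ L₂₂ τ₁ τ₂ : ℝ}
    (hb : 0 ≤ L₁₂ * (1 + A₁ * τ₁))
    (hcond₁ : A₁ * (A₁ + L₁₁) * τ₁ + L₁₁ < α₁)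
    (hcond₂ : (α₁ - A₁ * (A₁ + L₁₁) * τ₁ - L₁₁) * (α₂ - A₂ * (A₂ + L₂₂) * τ₂ - L₂₂) >
      L₁₂ * L₂₁ * (1 + A₁ * τ₁) * (1 + A₂ * τ₂)) :
    ∃ γ₁ γ₂ : ℝ, 0 < γ₁ ∧ 0 < γ₂ ∧
      L₁₁ * γ₁ + L₁₂ * γ₂ + A₁ * τ₁ * (A₁ * γ₁ + (L₁₁ * γ₁ + L₁₂ * γ₂)) < γ₁ * α₁ ∧
      L₂₁ * γ₁ + L₂₂ * γ₂ + A₂ * τ₂ * (A₂ * γ₂ + (L₂₁ * γ₁ + L₂₂ * γ₂)) < γ₂ * α₂ := by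
  obtain ⟨γ₁, γ₂, hγ₁, hγ₂, h₁, h₂⟩ :=
    exists_pos_mul_lt_mul (c₁ := α₁ - A₁ * (A₁ + L₁₁) * τ₁ - L₁₁)
      (c₂ := α₂ - A₂ * (A₂ + L₂₂) * τ₂ - L₂₂) (b₂ := L₂₁ * (1 + A₂ * τ₂)) (by linarith) hb
      (by linarith)
  exact ⟨γ₁, γ₂, hγ₁, hγ₂, by linarith, by linarith⟩

noncomputable def weightedNorm (γ₁ γ₂ : ℝ) (z : ℝ × ℝ) : ℝ := max (|z.1| / γ₁) (|z.2| / γ₂)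

section WeightedNorm

variable {γ₁ γ₂ : ℝ} (z w : ℝ × ℝ)

@[fun_prop]
theorem continuous_weightedNorm : Continuous (weightedNorm γ₁ γ₂) := by
  unfold weightedNorm; fun_prop

theorem weightedNorm_nonneg (hγ₁ : 0 ≤ γ₁) : 0 ≤ weightedNorm γ₁ γ₂ z :=
  le_max_of_le_left (by positivity)

theorem abs_fst_le_mul_weightedNorm (hγ₁ : 0 < γ₁) : |z.1| ≤ γ₁ * weightedNorm γ₁ γ₂ z := by
  rw [← div_le_iff₀' hγ₁]; exact le_max_left _ _

theorem abs_snd_le_mul_weightedNorm (hγ₂ : 0 < γ₂) : |z.2| ≤ γ₂ * weightedNorm γ₁ γ₂ z := by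
  rw [← div_le_iff₀' hγ₂]; exact le_max_right _ _

theorem mul_weightedNorm_le_abs_fst_or_snd (hγ₁ : 0 < γ₁) (hγ₂ : 0 < γ₂) :
    γ₁ * weightedNorm γ₁ γ₂ z ≤ |z.1| ∨ γ₂ * weightedNorm γ₁ γ₂ z ≤ |z.2| := by
  rcases max_choice (|z.1| / γ₁) (|z.2| / γ₂) with h | h <;> [left; right] <;>
    rw [weightedNorm, h, mul_div_cancel₀ _ (by positivity)]

theorem norm_le_mul_weightedNorm (hγ₁ : 0 < γ₁) (hγ₂ : 0 < γ₂) :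
    ‖z‖ ≤ max γ₁ γ₂ * weightedNorm γ₁ γ₂ z := by
  have hN := weightedNorm_nonneg z (γ₂ := γ₂) hγ₁.le
  rw [Prod.norm_def, Real.norm_eq_abs, Real.norm_eq_abs]
  exact max_le ((abs_fst_le_mul_weightedNorm z hγ₁).trans (by gcongr; exact le_max_left _ _))
    ((abs_snd_le_mul_weightedNorm z hγ₂).trans (by gcongr; exact le_max_right _ _))

theorem weightedNorm_le_norm_div (hγ₁ : 0 < γ₁) (hγ₂ : 0 < γ₂) :
    weightedNorm γ₁ γ₂ z ≤ ‖z‖ / min γ₁ γ₂ := by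
  have hm : 0 < min γ₁ γ₂ := lt_min hγ₁ hγ₂
  rw [Prod.norm_def, Real.norm_eq_abs, Real.norm_eq_abs]
  exact max_le (div_le_div₀ (by positivity) (le_max_left _ _) hm (min_le_left _ _))
    (div_le_div₀ (by positivity) (le_max_right _ _) hm (min_le_right _ _))

theorem weightedNorm_le_add {δ : ℝ} (hγ₁ : 0 < γ₁) (hγ₂ : 0 < γ₂)
    (h₁ : |z.1 - w.1| ≤ γ₁ * δ) (h₂ : |z.2 - w.2| ≤ γ₂ * δ) :
    weightedNorm γ₁ γ₂ z ≤ weightedNorm γ₁ γ₂ w + δ := by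
  refine max_le ?_ ?_
  · rw [div_le_iff₀ hγ₁]
    linarith [abs_sub_abs_le_abs_sub z.1 w.1, abs_fst_le_mul_weightedNorm w hγ₁ (γ₂ := γ₂)]
  · rw [div_le_iff₀ hγ₂]
    linarith [abs_sub_abs_le_abs_sub z.2 w.2, abs_snd_le_mul_weightedNorm w hγ₂ (γ₁ := γ₁)]

end WeightedNorm

theorem nonneg_of_abs_le_mul_abs {F : ℝ → ℝ} {L : ℝ} (h : ∀ u, |F u| ≤ L * |u|) : 0 ≤ L := by
  simpa using (abs_nonneg _).trans (h 1)

theorem abs_forcing_le {x₁ x₂ p q : ℝ → ℝ} {P Q : ℝ → ℝ → ℝ} {σ r L₁ L₂ γ₁ γ₂ s U : ℝ}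
    (hP : ∀ t u, 0 ≤ t → |P t u| ≤ L₁ * |u|) (hQ : ∀ t u, 0 ≤ t → |Q t u| ≤ L₂ * |u|)
    (hp : ∀ t, 0 ≤ t → 0 ≤ t - p t ∧ t - p t ≤ σ) (hq : ∀ t, 0 ≤ t → 0 ≤ t - q t ∧ t - q t ≤ σ)
    (hσr : σ ≤ r) (hγ₁ : 0 < γ₁) (hγ₂ : 0 < γ₂) (hs : 0 ≤ s)
    (hU : ∀ v ∈ Icc (s - r) s, weightedNorm γ₁ γ₂ (x₁ v, x₂ v) ≤ U) :
    |P s (x₁ (p s)) + Q s (x₂ (q s))| ≤ (L₁ * γ₁ + L₂ * γ₂) * U := by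
  have hL₁ := nonneg_of_abs_le_mul_abs (hP s · hs)
  have hL₂ := nonneg_of_abs_le_mul_abs (hQ s · hs)
  have hps := hp s hs
  have hqs := hq s hs
  calc |P s (x₁ (p s)) + Q s (x₂ (q s))|
      ≤ L₁ * |x₁ (p s)| + L₂ * |x₂ (q s)| :=
        (abs_add_le _ _).trans (add_le_add (hP s _ hs) (hQ s _ hs))
    _ ≤ L₁ * (γ₁ * U) + L₂ * (γ₂ * U) := by
        gcongr
        · exact (abs_fst_le_mul_weightedNorm (x₁ (p s), x₂ (p s)) hγ₁).trans
            (by gcongr; exact hU _ ⟨by linarith, by linarith⟩)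
        · exact (abs_snd_le_mul_weightedNorm (x₁ (q s), x₂ (q s)) hγ₂).trans
            (by gcongr; exact hU _ ⟨by linarith, by linarith⟩)
    _ = (L₁ * γ₁ + L₂ * γ₂) * U := by ring

section ForcedDelayEquation

variable {a h G y N : ℝ → ℝ} {t₀ r α A τ γ L : ℝ}

theorem abs_sub_le_of_forall_le
    (ha : ∀ t, 0 ≤ t → α ≤ a t ∧ a t ≤ A) (hα : 0 ≤ α)
    (hh : ∀ t, 0 ≤ t → 0 ≤ t - h t ∧ t - h t ≤ τ) (hτr : τ ≤ r)
    (hγ : 0 ≤ γ) (hy : ∀ v, |y v| ≤ γ * N v)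
    (hG : ∀ s U, t₀ ≤ s → (∀ v ∈ Icc (s - r) s, N v ≤ U) → |G s| ≤ L * U)
    (hf : ∀ t, t₀ ≤ t → IntervalIntegrable (fun s => -(a s) * y (h s) + G s) volume t₀ t)
    (hE : ∀ t, t₀ ≤ t → y t = y t₀ + ∫ s in t₀..t, (-(a s) * y (h s) + G s))
    (ht₀ : 0 ≤ t₀) {t₁ T B : ℝ} (h₁ : t₀ ≤ t₁) (h₁T : t₁ ≤ T)
    (hB : ∀ v ∈ Icc (t₀ - r) T, N v ≤ B) :
    |y T - y t₁| ≤ (A * γ + L) * B * (T - t₁) := by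
  refine abs_sub_le_of_eq_add_integral hf hE h₁ h₁T fun s hs => ?_
  have hs₀ : t₀ ≤ s := by linarith [hs.1]
  have hhs := hh s (ht₀.trans hs₀)
  calc |-(a s) * y (h s) + G s| ≤ A * |y (h s)| + |G s| :=
        abs_neg_mul_add_le hα (ha s (ht₀.trans hs₀))
    _ ≤ A * (γ * B) + L * B := by
        have hA : 0 ≤ A := hα.trans ((ha s (ht₀.trans hs₀)).1.trans (ha s (ht₀.trans hs₀)).2)
        gcongr
        · exact (hy _).trans (by gcongr; exact hB _ ⟨by linarith, by linarith [hs.2]⟩)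
        · exact hG s B hs₀ fun v hv => hB v ⟨by linarith [hv.1], hv.2.trans hs.2⟩
    _ = (A * γ + L) * B := by ring

theorem razumikhinGap_nonneg (ha_meas : Measurable a)
    (ha : ∀ t, 0 ≤ t → α ≤ a t ∧ a t ≤ A) (hα : 0 ≤ α)
    (hh : ∀ t, 0 ≤ t → 0 ≤ t - h t ∧ t - h t ≤ τ) (hτr : τ ≤ r)
    (hγ : 0 ≤ γ) (hy : ∀ v, |y v| ≤ γ * N v)
    (hG : ∀ s U, t₀ ≤ s → (∀ v ∈ Icc (s - r) s, N v ≤ U) → |G s| ≤ L * U)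
    (hf : ∀ t, t₀ ≤ t → IntervalIntegrable (fun s => -(a s) * y (h s) + G s) volume t₀ t)
    (hE : ∀ t, t₀ ≤ t → y t = y t₀ + ∫ s in t₀..t, (-(a s) * y (h s) + G s))
    (ht₀ : 0 ≤ t₀) {T Δ Λ : ℝ} (hΔ : 0 ≤ Δ) (hΛ : 0 ≤ Λ) (hT : t₀ + Δ + r ≤ T)
    (hNT : 0 < N T) (hyT : γ * N T ≤ |y T|)
    (hmax : IsMaxOn (fun v => N v * Real.exp (Λ * v)) (Icc (t₀ - r) T) T) :
    0 ≤ razumikhinGap α A τ r γ L Δ Λ := by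
  have hτ : 0 ≤ τ := (hh 0 le_rfl).1.trans (hh 0 le_rfl).2
  have hwin : ∀ v ∈ Icc (t₀ - r) T, N v ≤ N T * Real.exp (Λ * (T - v)) := fun v hv => by
    have : N v * Real.exp (Λ * v) ≤ N T * Real.exp (Λ * T) := hmax hv
    rw [mul_sub, Real.exp_sub, mul_div_assoc', le_div_iff₀ (Real.exp_pos _)]
    exact this
  have hU : ∀ v ∈ Icc (T - Δ - 2 * r) T, N v ≤ N T * Real.exp (Λ * (Δ + 2 * r)) := fun v hv =>
    (hwin v ⟨by linarith [hv.1], hv.2⟩).trans (by gcongr; linarith [hv.1])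
  have hkey := abs_mul_one_add_le_of_delay_eq (Y := γ * (N T * Real.exp (Λ * (Δ + 2 * r))))
    (Γ := L * (N T * Real.exp (Λ * (Δ + 2 * r)))) ha_meas hf hE hΔ hτ
    (by linarith) hα (fun s hs => ha s (by linarith [hs.1]))
    (fun s hs => hh s (by linarith [hs.1]))
    (fun v hv => (hy v).trans (by gcongr; exact hU v ⟨by linarith [hv.1], hv.2⟩))
    (fun s hs => hG s _ (by linarith [hs.1]) fun v hv =>
      hU v ⟨by linarith [hv.1, hs.1], hv.2.trans hs.2⟩)
  have hstart : |y (T - Δ)| ≤ γ * (N T * Real.exp (Λ * Δ)) :=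
    (hy _).trans (by gcongr; simpa using hwin (T - Δ) ⟨by linarith, by linarith⟩)
  have : 0 ≤ N T * razumikhinGap α A τ r γ L Δ Λ := by
    have h1 : γ * N T * (1 + α * Δ) ≤ |y T| * (1 + α * Δ) := by gcongr
    unfold razumikhinGap
    linarith
  exact nonneg_of_mul_nonneg_right (by linarith) hNT

end ForcedDelayEquation

theorem weightedNorm_le_of_forced_system {a₁ a₂ h₁ h₂ G₁ G₂ x₁ x₂ : ℝ → ℝ}
    {α₁ α₂ A₁ A₂ τ₁ τ₂ r γ₁ γ₂ L₁ L₂ c Δ Λ t₀ K : ℝ}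
    (ha₁_meas : Measurable a₁) (ha₂_meas : Measurable a₂)
    (ha₁ : ∀ t, 0 ≤ t → α₁ ≤ a₁ t ∧ a₁ t ≤ A₁) (ha₂ : ∀ t, 0 ≤ t → α₂ ≤ a₂ t ∧ a₂ t ≤ A₂)
    (hα₁ : 0 ≤ α₁) (hα₂ : 0 ≤ α₂)
    (hh₁ : ∀ t, 0 ≤ t → 0 ≤ t - h₁ t ∧ t - h₁ t ≤ τ₁)
    (hh₂ : ∀ t, 0 ≤ t → 0 ≤ t - h₂ t ∧ t - h₂ t ≤ τ₂)
    (hτ₁r : τ₁ ≤ r) (hτ₂r : τ₂ ≤ r) (hγ₁ : 0 < γ₁) (hγ₂ : 0 < γ₂)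
    (hc : 0 < c) (hc₁ : A₁ * γ₁ + L₁ ≤ c * γ₁) (hc₂ : A₂ * γ₂ + L₂ ≤ c * γ₂)
    (hΔ : 0 < Δ) (hΛ : 0 < Λ)
    (hgap₁ : razumikhinGap α₁ A₁ τ₁ r γ₁ L₁ Δ Λ < 0)
    (hgap₂ : razumikhinGap α₂ A₂ τ₂ r γ₂ L₂ Δ Λ < 0)
    (hG₁ : ∀ s U, t₀ ≤ s → (∀ v ∈ Icc (s - r) s, weightedNorm γ₁ γ₂ (x₁ v, x₂ v) ≤ U) →
      |G₁ s| ≤ L₁ * U)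
    (hG₂ : ∀ s U, t₀ ≤ s → (∀ v ∈ Icc (s - r) s, weightedNorm γ₁ γ₂ (x₁ v, x₂ v) ≤ U) →
      |G₂ s| ≤ L₂ * U)
    (hx₁ : Continuous x₁) (hx₂ : Continuous x₂)
    (hf₁ : ∀ t, t₀ ≤ t → IntervalIntegrable (fun s => -(a₁ s) * x₁ (h₁ s) + G₁ s) volume t₀ t)
    (hf₂ : ∀ t, t₀ ≤ t → IntervalIntegrable (fun s => -(a₂ s) * x₂ (h₂ s) + G₂ s) volume t₀ t)
    (hE₁ : ∀ t, t₀ ≤ t → x₁ t = x₁ t₀ + ∫ s in t₀..t, (-(a₁ s) * x₁ (h₁ s) + G₁ s))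
    (hE₂ : ∀ t, t₀ ≤ t → x₂ t = x₂ t₀ + ∫ s in t₀..t, (-(a₂ s) * x₂ (h₂ s) + G₂ s))
    (ht₀ : 0 ≤ t₀) (hK : 0 ≤ K)
    (hhist : ∀ v ∈ Icc (t₀ - r) t₀, weightedNorm γ₁ γ₂ (x₁ v, x₂ v) ≤ K) {t : ℝ} (ht : t₀ ≤ t) :
    weightedNorm γ₁ γ₂ (x₁ t, x₂ t) ≤
      2 ^ ⌈2 * c * (Δ + r)⌉₊ * Real.exp (Λ * (Δ + r)) * K * Real.exp (-Λ * (t - t₀)) := by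
  set N := fun v => weightedNorm γ₁ γ₂ (x₁ v, x₂ v)
  have hN₁ : ∀ v, |x₁ v| ≤ γ₁ * N v := fun v => abs_fst_le_mul_weightedNorm (x₁ v, x₂ v) hγ₁
  have hN₂ : ∀ v, |x₂ v| ≤ γ₂ * N v := fun v => abs_snd_le_mul_weightedNorm (x₁ v, x₂ v) hγ₂
  have hr : 0 ≤ r := ((hh₁ 0 le_rfl).1.trans (hh₁ 0 le_rfl).2).trans hτ₁r
  refine le_mul_exp_of_razumikhin (N := N) (by fun_prop) hr hc hΛ.le hK hhist ?_ ?_ ht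
  · intro t₁ T B h₁ h₁T hB
    have hδ : 0 ≤ B * (T - t₁) :=
      mul_nonneg ((weightedNorm_nonneg _ hγ₁.le).trans (hB T ⟨by linarith, le_rfl⟩))
        (sub_nonneg.2 h₁T)
    refine weightedNorm_le_add _ _ hγ₁ hγ₂ ?_ ?_
    · calc |x₁ T - x₁ t₁| ≤ (A₁ * γ₁ + L₁) * B * (T - t₁) :=
            abs_sub_le_of_forall_le ha₁ hα₁ hh₁ hτ₁r hγ₁.le hN₁ hG₁ hf₁ hE₁ ht₀ h₁ h₁T hB
        _ ≤ γ₁ * (c * B * (T - t₁)) := by linarith [mul_le_mul_of_nonneg_right hc₁ hδ]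
    · calc |x₂ T - x₂ t₁| ≤ (A₂ * γ₂ + L₂) * B * (T - t₁) :=
            abs_sub_le_of_forall_le ha₂ hα₂ hh₂ hτ₂r hγ₂.le hN₂ hG₂ hf₂ hE₂ ht₀ h₁ h₁T hB
        _ ≤ γ₂ * (c * B * (T - t₁)) := by linarith [mul_le_mul_of_nonneg_right hc₂ hδ]
  · intro T hT hNT hmax
    rcases mul_weightedNorm_le_abs_fst_or_snd (x₁ T, x₂ T) hγ₁ hγ₂ with hT₁ | hT₂
    · exact hgap₁.not_ge (razumikhinGap_nonneg ha₁_meas ha₁ hα₁ hh₁ hτ₁r hγ₁.le hN₁ hG₁ hf₁ hE₁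
        ht₀ hΔ.le hΛ.le (by linarith) hNT hT₁ hmax)
    · exact hgap₂.not_ge (razumikhinGap_nonneg ha₂_meas ha₂ hα₂ hh₂ hτ₂r hγ₂.le hN₂ hG₂ hf₂ hE₂
        ht₀ hΔ.le hΛ.le (by linarith) hNT hT₂ hmax)

theorem stmt5_general
    (a₁ a₂ : ℝ → ℝ) (α₁ α₂ A₁ A₂ : ℝ)
    (F₁₁ F₁₂ F₂₁ F₂₂ : ℝ → ℝ → ℝ) (L₁₁ L₁₂ L₂₁ L₂₂ : ℝ)
    (h₁ h₂ : ℝ → ℝ) (g₁₁ g₁₂ g₂₁ g₂₂ : ℝ → ℝ)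
    (τ₁ τ₂ σ : ℝ)
    -- (a1)
    (ha₁_meas : Measurable a₁) (ha₂_meas : Measurable a₂)
    (hα₁ : 0 < α₁) (hα₂ : 0 < α₂)
    (ha₁_bd : ∀ t, 0 ≤ t → α₁ ≤ a₁ t ∧ a₁ t ≤ A₁)
    (ha₂_bd : ∀ t, 0 ≤ t → α₂ ≤ a₂ t ∧ a₂ t ≤ A₂)
    -- (a2)
    (hL₁₁ : ∀ t u, 0 ≤ t → |F₁₁ t u| ≤ L₁₁ * |u|)
    (hL₁₂ : ∀ t u, 0 ≤ t → |F₁₂ t u| ≤ L₁₂ * |u|)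
    (hL₂₁ : ∀ t u, 0 ≤ t → |F₂₁ t u| ≤ L₂₁ * |u|)
    (hL₂₂ : ∀ t u, 0 ≤ t → |F₂₂ t u| ≤ L₂₂ * |u|)
    -- (a3)
    (hh₁ : ∀ t, 0 ≤ t → 0 ≤ t - h₁ t ∧ t - h₁ t ≤ τ₁)
    (hh₂ : ∀ t, 0 ≤ t → 0 ≤ t - h₂ t ∧ t - h₂ t ≤ τ₂)
    (hg₁₁ : ∀ t, 0 ≤ t → 0 ≤ t - g₁₁ t ∧ t - g₁₁ t ≤ σ)
    (hg₁₂ : ∀ t, 0 ≤ t → 0 ≤ t - g₁₂ t ∧ t - g₁₂ t ≤ σ)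
    (hg₂₁ : ∀ t, 0 ≤ t → 0 ≤ t - g₂₁ t ∧ t - g₂₁ t ≤ σ)
    (hg₂₂ : ∀ t, 0 ≤ t → 0 ≤ t - g₂₂ t ∧ t - g₂₂ t ≤ σ)
    -- stability conditions
    (hcond₁ : A₁ * (A₁ + L₁₁) * τ₁ + L₁₁ < α₁)
    (hcond₂ : (α₁ - A₁ * (A₁ + L₁₁) * τ₁ - L₁₁) * (α₂ - A₂ * (A₂ + L₂₂) * τ₂ - L₂₂) >
      L₁₂ * L₂₁ * (1 + A₁ * τ₁) * (1 + A₂ * τ₂)) :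
    -- global exponential stability
    ∃ M Λ : ℝ, 0 < M ∧ 0 < Λ ∧
      ∀ t₀ : ℝ, 0 ≤ t₀ → ∀ x₁ x₂ : ℝ → ℝ,
        Continuous x₁ → Continuous x₂ →
        (∀ t, t₀ ≤ t → IntervalIntegrable
            (fun s => -(a₁ s) * x₁ (h₁ s) + (F₁₁ s (x₁ (g₁₁ s)) + F₁₂ s (x₂ (g₁₂ s))))
            volume t₀ t) →
        (∀ t, t₀ ≤ t → IntervalIntegrable
            (fun s => -(a₂ s) * x₂ (h₂ s) + (F₂₁ s (x₁ (g₂₁ s)) + F₂₂ s (x₂ (g₂₂ s))))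
            volume t₀ t) →
        (∀ t, t₀ ≤ t →
          x₁ t = x₁ t₀ + ∫ s in t₀..t,
            (-(a₁ s) * x₁ (h₁ s) + (F₁₁ s (x₁ (g₁₁ s)) + F₁₂ s (x₂ (g₁₂ s))))) →
        (∀ t, t₀ ≤ t →
          x₂ t = x₂ t₀ + ∫ s in t₀..t,
            (-(a₂ s) * x₂ (h₂ s) + (F₂₁ s (x₁ (g₂₁ s)) + F₂₂ s (x₂ (g₂₂ s))))) →
        ∀ t, t₀ ≤ t →
          ‖(x₁ t, x₂ t)‖ ≤
            M * Real.exp (-Λ * (t - t₀)) *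
              (‖(x₁ t₀, x₂ t₀)‖ +
                sSup ((fun s => ‖(x₁ s, x₂ s)‖) ''
                  Set.Icc (t₀ - max σ (max τ₁ τ₂)) t₀)) := by
  have hτ₁ : 0 ≤ τ₁ := (hh₁ 0 le_rfl).1.trans (hh₁ 0 le_rfl).2
  have hA₁ : 0 < A₁ := hα₁.trans_le ((ha₁_bd 0 le_rfl).1.trans (ha₁_bd 0 le_rfl).2)
  have hL₁₁₀ := nonneg_of_abs_le_mul_abs (hL₁₁ 0 · le_rfl)
  have hL₁₂₀ := nonneg_of_abs_le_mul_abs (hL₁₂ 0 · le_rfl)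
  obtain ⟨γ₁, γ₂, hγ₁, hγ₂, hw₁, hw₂⟩ :=
    exists_weights_of_stability_conditions (by positivity) hcond₁ hcond₂
  set r := max σ (max τ₁ τ₂)
  obtain ⟨Δ, ⟨hΔ₁, hΔ₂⟩, hΔ⟩ := (((eventually_razumikhinGap_neg (r := r) hw₁).and
    (eventually_razumikhinGap_neg (r := r) hw₂)).and self_mem_nhdsWithin).exists
  obtain ⟨Λ, ⟨hgap₁, hgap₂⟩, hΛ⟩ := ((hΔ₁.and hΔ₂).and self_mem_nhdsWithin).exists
  set c := max ((A₁ * γ₁ + (L₁₁ * γ₁ + L₁₂ * γ₂)) / γ₁) ((A₂ * γ₂ + (L₂₁ * γ₁ + L₂₂ * γ₂)) / γ₂)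
  refine ⟨max γ₁ γ₂ * (2 ^ ⌈2 * c * (Δ + r)⌉₊ * Real.exp (Λ * (Δ + r))) / min γ₁ γ₂, Λ,
    by positivity, hΛ, fun t₀ ht₀ x₁ x₂ hx₁ hx₂ hf₁ hf₂ hE₁ hE₂ t ht => ?_⟩
  set K := ‖(x₁ t₀, x₂ t₀)‖ + sSup ((fun s => ‖(x₁ s, x₂ s)‖) '' Icc (t₀ - r) t₀)
  have hhist : ∀ v ∈ Icc (t₀ - r) t₀, ‖(x₁ v, x₂ v)‖ ≤ K := fun v hv =>
    le_add_of_nonneg_of_le (norm_nonneg _)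
      (le_csSup (isCompact_Icc.image (by fun_prop)).bddAbove (mem_image_of_mem _ hv))
  have hK : 0 ≤ K := (norm_nonneg _).trans (hhist t₀ ⟨by simp [r, hτ₁], le_rfl⟩)
  have hN := weightedNorm_le_of_forced_system (K := K / min γ₁ γ₂) ha₁_meas ha₂_meas ha₁_bd
    ha₂_bd hα₁.le hα₂.le hh₁ hh₂
    (le_max_of_le_right (le_max_left _ _)) (le_max_of_le_right (le_max_right _ _)) hγ₁ hγ₂
    (lt_max_of_lt_left (by positivity)) ((div_le_iff₀ hγ₁).1 (le_max_left _ _))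
    ((div_le_iff₀ hγ₂).1 (le_max_right _ _)) hΔ hΛ hgap₁ hgap₂
    (fun s U hs => abs_forcing_le hL₁₁ hL₁₂ hg₁₁ hg₁₂ (le_max_left _ _) hγ₁ hγ₂ (ht₀.trans hs))
    (fun s U hs => abs_forcing_le hL₂₁ hL₂₂ hg₂₁ hg₂₂ (le_max_left _ _) hγ₁ hγ₂ (ht₀.trans hs))
    hx₁ hx₂ hf₁ hf₂ hE₁ hE₂ ht₀ (by positivity)
    (fun v hv => (weightedNorm_le_norm_div _ hγ₁ hγ₂).trans (by gcongr; exact hhist v hv)) ht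
  calc ‖(x₁ t, x₂ t)‖ ≤ max γ₁ γ₂ * weightedNorm γ₁ γ₂ (x₁ t, x₂ t) :=
        norm_le_mul_weightedNorm _ hγ₁ hγ₂
    _ ≤ max γ₁ γ₂ * (2 ^ ⌈2 * c * (Δ + r)⌉₊ * Real.exp (Λ * (Δ + r)) * (K / min γ₁ γ₂) *
          Real.exp (-Λ * (t - t₀))) := by gcongr
    _ = _ := by ring

/-- Corollary 2.6: for `m = 2`, if `A₁(A₁+L₁₁)τ₁ + L₁₁ < α₁` and
`(α₁ − A₁(A₁+L₁₁)τ₁ − L₁₁)(α₂ − A₂(A₂+L₂₂)τ₂ − L₂₂) > L₁₂L₂₁(1+A₁τ₁)(1+A₂τ₂)`,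
then the two-dimensional nonlinear delay system (1) is globally exponentially stable. -/
theorem stmt5
    (a₁ a₂ : ℝ → ℝ) (α₁ α₂ A₁ A₂ : ℝ)
    (F₁₁ F₁₂ F₂₁ F₂₂ : ℝ → ℝ → ℝ) (L₁₁ L₁₂ L₂₁ L₂₂ : ℝ)
    (h₁ h₂ : ℝ → ℝ) (g₁₁ g₁₂ g₂₁ g₂₂ : ℝ → ℝ)
    (τ₁ τ₂ σ : ℝ)
    -- (a1)
    (ha₁_meas : Measurable a₁) (ha₂_meas : Measurable a₂)
    (hα₁ : 0 < α₁) (hα₂ : 0 < α₂)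
    (ha₁_bd : ∀ t, 0 ≤ t → α₁ ≤ a₁ t ∧ a₁ t ≤ A₁)
    (ha₂_bd : ∀ t, 0 ≤ t → α₂ ≤ a₂ t ∧ a₂ t ≤ A₂)
    -- (a2)
    (hF₁₁ : ∀ t, Continuous (F₁₁ t)) (hF₁₂ : ∀ t, Continuous (F₁₂ t))
    (hF₂₁ : ∀ t, Continuous (F₂₁ t)) (hF₂₂ : ∀ t, Continuous (F₂₂ t))
    (hF₁₁m : ∀ u, Measurable fun t => F₁₁ t u) (hF₁₂m : ∀ u, Measurable fun t => F₁₂ t u)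
    (hF₂₁m : ∀ u, Measurable fun t => F₂₁ t u) (hF₂₂m : ∀ u, Measurable fun t => F₂₂ t u)
    (hL₁₁ : ∀ t u, 0 ≤ t → |F₁₁ t u| ≤ L₁₁ * |u|)
    (hL₁₂ : ∀ t u, 0 ≤ t → |F₁₂ t u| ≤ L₁₂ * |u|)
    (hL₂₁ : ∀ t u, 0 ≤ t → |F₂₁ t u| ≤ L₂₁ * |u|)
    (hL₂₂ : ∀ t u, 0 ≤ t → |F₂₂ t u| ≤ L₂₂ * |u|)
    -- (a3)
    (hh₁_meas : Measurable h₁) (hh₂_meas : Measurable h₂)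
    (hh₁ : ∀ t, 0 ≤ t → 0 ≤ t - h₁ t ∧ t - h₁ t ≤ τ₁)
    (hh₂ : ∀ t, 0 ≤ t → 0 ≤ t - h₂ t ∧ t - h₂ t ≤ τ₂)
    (hg₁₁_meas : Measurable g₁₁) (hg₁₂_meas : Measurable g₁₂)
    (hg₂₁_meas : Measurable g₂₁) (hg₂₂_meas : Measurable g₂₂)
    (hg₁₁ : ∀ t, 0 ≤ t → 0 ≤ t - g₁₁ t ∧ t - g₁₁ t ≤ σ)
    (hg₁₂ : ∀ t, 0 ≤ t → 0 ≤ t - g₁₂ t ∧ t - g₁₂ t ≤ σ)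
    (hg₂₁ : ∀ t, 0 ≤ t → 0 ≤ t - g₂₁ t ∧ t - g₂₁ t ≤ σ)
    (hg₂₂ : ∀ t, 0 ≤ t → 0 ≤ t - g₂₂ t ∧ t - g₂₂ t ≤ σ)
    -- stability conditions
    (hcond₁ : A₁ * (A₁ + L₁₁) * τ₁ + L₁₁ < α₁)
    (hcond₂ : (α₁ - A₁ * (A₁ + L₁₁) * τ₁ - L₁₁) * (α₂ - A₂ * (A₂ + L₂₂) * τ₂ - L₂₂) >
      L₁₂ * L₂₁ * (1 + A₁ * τ₁) * (1 + A₂ * τ₂)) :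
    -- global exponential stability
    ∃ M Λ : ℝ, 0 < M ∧ 0 < Λ ∧
      ∀ t₀ : ℝ, 0 ≤ t₀ → ∀ x₁ x₂ : ℝ → ℝ,
        Continuous x₁ → Continuous x₂ →
        (∀ t, t₀ ≤ t → IntervalIntegrable
            (fun s => -(a₁ s) * x₁ (h₁ s) + (F₁₁ s (x₁ (g₁₁ s)) + F₁₂ s (x₂ (g₁₂ s))))
            volume t₀ t) →
        (∀ t, t₀ ≤ t → IntervalIntegrable
            (fun s => -(a₂ s) * x₂ (h₂ s) + (F₂₁ s (x₁ (g₂₁ s)) + F₂₂ s (x₂ (g₂₂ s))))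
            volume t₀ t) →
        (∀ t, t₀ ≤ t →
          x₁ t = x₁ t₀ + ∫ s in t₀..t,
            (-(a₁ s) * x₁ (h₁ s) + (F₁₁ s (x₁ (g₁₁ s)) + F₁₂ s (x₂ (g₁₂ s))))) →
        (∀ t, t₀ ≤ t →
          x₂ t = x₂ t₀ + ∫ s in t₀..t,
            (-(a₂ s) * x₂ (h₂ s) + (F₂₁ s (x₁ (g₂₁ s)) + F₂₂ s (x₂ (g₂₂ s))))) →
        ∀ t, t₀ ≤ t →
          ‖(x₁ t, x₂ t)‖ ≤
            M * Real.exp (-Λ * (t - t₀)) *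
              (‖(x₁ t₀, x₂ t₀)‖ +
                sSup ((fun s => ‖(x₁ s, x₂ s)‖) ''
                  Set.Icc (t₀ - max σ (max τ₁ τ₂)) t₀)) :=
  stmt5_general a₁ a₂ α₁ α₂ A₁ A₂ F₁₁ F₁₂ F₂₁ F₂₂ L₁₁ L₁₂ L₂₁ L₂₂ h₁ h₂ g₁₁ g₁₂ g₂₁ g₂₂ τ₁ τ₂ σ
    ha₁_meas ha₂_meas hα₁ hα₂ ha₁_bd ha₂_bd hL₁₁ hL₁₂ hL₂₁ hL₂₂ hh₁ hh₂ hg₁₁ hg₁₂ hg₂₁ hg₂₂ hcond₁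
    hcond₂
end
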